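/- arXiv:2307.05948 — 3 statements merged into one kernel-verified Lean document; each statement's English description precedes it below -/
import Mathlib

section
/- Let 𝒵 be a nonempty finite set, let m ≥ 2, and let Z = (Z_1,…,Z_m) be a random vector on 𝒵^m whose probability mass function p is strictly positive on all of 𝒵^m. Let g : 𝒵^m → ℝ satisfy the bounded differences property with parameters λ_1,…,λ_m > 0. If α_log(Z) < 1, then for every t > 0, Pr[ |g(Z) − E[g(Z)]| ≥ t ] ≤ 2 · exp( −(1 − α_log(Z)) · t² / (2 · Σ_{i=1}^m λ_i²) ). -/
open Classical Finset Topology Filter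
noncomputable section

def updTwo {Z : Type*} {m : ℕ} (z : Fin m → Z) (i : Fin m) (a : Z) (j : Fin m) (b : Z) :
    Fin m → Z :=
  Function.update (Function.update z i a) j b

def logInfluence {Z : Type*} [Fintype Z] {m : ℕ} (p : (Fin m → Z) → ℝ) (i j : Fin m) : ℝ :=
  (1 / 4) * ⨆ w : (Fin m → Z) × Z × Z × Z × Z,
    Real.log (p (updTwo w.1 i w.2.1 j w.2.2.1) * p (updTwo w.1 i w.2.2.2.1 j w.2.2.2.2) /
      (p (updTwo w.1 i w.2.2.2.1 j w.2.2.1) * p (updTwo w.1 i w.2.1 j w.2.2.2.2)))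

def logCoefficient {Z : Type*} [Fintype Z] {m : ℕ} (p : (Fin m → Z) → ℝ) : ℝ :=
  ⨆ i : Fin m, ∑ j ∈ Finset.univ.erase i, logInfluence p i j

namespace MCD
variable {Z : Type*} [Fintype Z] [Nonempty Z] {m : ℕ}

set_option linter.unusedSectionVars false

lemma updTwo_comm (z : Fin m → Z) {i j : Fin m} (h : i ≠ j) (a b : Z) :
    updTwo z i a j b = updTwo z j b i a := by
  unfold updTwo; exact Function.update_comm h a b z

lemma bdd_log (p : (Fin m → Z) → ℝ) (i j : Fin m) :
    BddAbove (Set.range fun w : (Fin m → Z) × Z × Z × Z × Z =>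
      Real.log (p (updTwo w.1 i w.2.1 j w.2.2.1) * p (updTwo w.1 i w.2.2.2.1 j w.2.2.2.2) /
      (p (updTwo w.1 i w.2.2.2.1 j w.2.2.1) * p (updTwo w.1 i w.2.1 j w.2.2.2.2)))) :=
  Set.Finite.bddAbove (Set.finite_range _)

/-- each log term is at most `4 * logInfluence`. -/
lemma log_le_logInfluence (p : (Fin m → Z) → ℝ) (i j : Fin m)
    (w : (Fin m → Z) × Z × Z × Z × Z) :
    Real.log (p (updTwo w.1 i w.2.1 j w.2.2.1) * p (updTwo w.1 i w.2.2.2.1 j w.2.2.2.2) /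
      (p (updTwo w.1 i w.2.2.2.1 j w.2.2.1) * p (updTwo w.1 i w.2.1 j w.2.2.2.2)))
      ≤ 4 * logInfluence p i j := by
  have := le_ciSup (bdd_log p i j) w
  unfold logInfluence
  linarith

lemma logInfluence_nonneg (p : (Fin m → Z) → ℝ) (hp : ∀ z, 0 < p z) (i j : Fin m) :
    0 ≤ logInfluence p i j := by
  obtain ⟨a⟩ : Nonempty Z := inferInstance
  have hz : Nonempty (Fin m → Z) := inferInstance
  obtain ⟨z⟩ := hz
  have h := le_ciSup (bdd_log p i j) (⟨z, a, a, a, a⟩ : (Fin m → Z) × Z × Z × Z × Z)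
  have h0 : Real.log (p (updTwo z i a j a) * p (updTwo z i a j a) /
      (p (updTwo z i a j a) * p (updTwo z i a j a))) = 0 := by
    rw [div_self (ne_of_gt (mul_pos (hp _) (hp _))), Real.log_one]
  unfold logInfluence
  nlinarith [h0 ▸ h]

lemma logInfluence_symm (p : (Fin m → Z) → ℝ) {i j : Fin m} (h : i ≠ j) :
    logInfluence p i j = logInfluence p j i := by
  unfold logInfluence
  congr 1
  apply le_antisymm
  · apply ciSup_le
    intro w
    have := le_ciSup (bdd_log p j i) (⟨w.1, w.2.2.1, w.2.1, w.2.2.2.2, w.2.2.2.1⟩ :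
      (Fin m → Z) × Z × Z × Z × Z)
    refine le_trans (le_of_eq ?_) this
    simp only
    rw [updTwo_comm w.1 h, updTwo_comm w.1 h, updTwo_comm w.1 h, updTwo_comm w.1 h]
    ring_nf
  · apply ciSup_le
    intro w
    have := le_ciSup (bdd_log p i j) (⟨w.1, w.2.2.1, w.2.1, w.2.2.2.2, w.2.2.2.1⟩ :
      (Fin m → Z) × Z × Z × Z × Z)
    refine le_trans (le_of_eq ?_) this
    simp only
    rw [updTwo_comm w.1 h.symm, updTwo_comm w.1 h.symm, updTwo_comm w.1 h.symm,
      updTwo_comm w.1 h.symm]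
    ring_nf

/-- the key multiplicative cross-ratio bound for conditional distributions -/
lemma cross_ratio_bound (p : (Fin m → Z) → ℝ) (hp : ∀ z, 0 < p z) {i k : Fin m} (h : i ≠ k)
    (x : Fin m → Z) (b : Z) (a a' : Z) :
    p (Function.update x i a) * p (Function.update (Function.update x k b) i a') ≤
      Real.exp (4 * logInfluence p i k) *
        (p (Function.update (Function.update x k b) i a) * p (Function.update x i a')) := by
  have key := log_le_logInfluence p i k (⟨x, a, x k, a', b⟩ : (Fin m → Z) × Z × Z × Z × Z)
  have e1 : updTwo x i a k (x k) = Function.update x i a := by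
    unfold updTwo
    rw [Function.update_eq_self_iff]
    simp [Function.update_of_ne (Ne.symm h)]
  have e2 : updTwo x i a' k (x k) = Function.update x i a' := by
    unfold updTwo
    rw [Function.update_eq_self_iff]
    simp [Function.update_of_ne (Ne.symm h)]
  have e3 : updTwo x i a' k b = Function.update (Function.update x k b) i a' := by
    unfold updTwo; exact Function.update_comm h a' b x
  have e4 : updTwo x i a k b = Function.update (Function.update x k b) i a := by
    unfold updTwo; exact Function.update_comm h a b x
  rw [e1, e2, e3, e4] at key
  have hden : 0 < p (Function.update x i a') * p (Function.update (Function.update x k b) i a) :=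
    mul_pos (hp _) (hp _)
  have hnum : 0 < p (Function.update x i a) * p (Function.update (Function.update x k b) i a') :=
    mul_pos (hp _) (hp _)
  have key2 := Real.exp_le_exp.mpr key
  rw [Real.exp_log (by positivity)] at key2
  rw [div_le_iff₀ hden] at key2
  have key := key2
  calc p (Function.update x i a) * p (Function.update (Function.update x k b) i a')
      ≤ Real.exp (4 * logInfluence p i k) *
        (p (Function.update x i a') * p (Function.update (Function.update x k b) i a)) := key
    _ = _ := by ring

/-- logit grows at least 4 times as fast -/
lemma logit_lemma {u v : ℝ} (hv : 0 < v) (hvu : v ≤ u) (hu : u < 1) :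
    4 * (u - v) ≤ (Real.log u - Real.log (1 - u)) - (Real.log v - Real.log (1 - v)) := by
  set f : ℝ → ℝ := fun x => Real.log x - Real.log (1 - x) - 4 * x with hf
  have key : MonotoneOn f (Set.Ioo (0:ℝ) 1) := by
    apply monotoneOn_of_deriv_nonneg (convex_Ioo 0 1)
    · apply ContinuousOn.sub
      apply ContinuousOn.sub
      · exact Real.continuousOn_log.comp continuousOn_id (fun x hx => ne_of_gt hx.1)
      · exact Real.continuousOn_log.comp (continuousOn_const.sub continuousOn_id)
          (fun x hx => by simp; intro hc; linarith [hx.2, hc])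
      · exact (continuousOn_const.mul continuousOn_id)
    · intro x hx
      rw [interior_Ioo] at hx
      apply DifferentiableAt.differentiableWithinAt
      apply DifferentiableAt.sub
      apply DifferentiableAt.sub
      · exact Real.differentiableAt_log (ne_of_gt hx.1)
      · exact (Real.differentiableAt_log (by linarith [hx.2] : (1:ℝ) - x ≠ 0)).comp x
          ((differentiable_const (1:ℝ)).differentiableAt.sub differentiableAt_id)
      · exact (differentiable_const (4:ℝ)).differentiableAt.mul differentiableAt_id
    · intro x hx
      rw [interior_Ioo] at hx
      obtain ⟨h0, h1⟩ := hx
      have hd : HasDerivAt f (1/x + 1/(1-x) - 4) x := by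
        have d1 : HasDerivAt Real.log (1/x) x := by
          simpa using Real.hasDerivAt_log (ne_of_gt h0)
        have d2 : HasDerivAt (fun x : ℝ => 1 - x) (-1) x := by
          simpa using (hasDerivAt_id x).const_sub 1
        have d3 : HasDerivAt (fun x : ℝ => Real.log (1 - x)) (-(1/(1-x))) x := by
          have := (Real.hasDerivAt_log (by linarith : (1:ℝ) - x ≠ 0)).comp x d2
          refine this.congr_deriv ?_
          field_simp
        have d4 : HasDerivAt (fun x : ℝ => 4 * x) 4 x := by
          simpa using (hasDerivAt_id x).const_mul 4
        have := (d1.sub d3).sub d4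
        refine this.congr_deriv ?_
        ring
      rw [hd.deriv]
      have hx1 : 0 < 1 - x := by linarith
      have h4 : x * (1 - x) ≤ 1/4 := by nlinarith [sq_nonneg (x - 1/2)]
      have : 4 ≤ 1/x + 1/(1-x) := by
        rw [div_add_div _ _ (ne_of_gt h0) (ne_of_gt hx1)]
        rw [le_div_iff₀ (by positivity)]
        nlinarith
      linarith
  have h1 := key (Set.mem_Ioo.mpr ⟨hv, lt_of_le_of_lt hvu hu⟩)
    (Set.mem_Ioo.mpr ⟨lt_of_lt_of_le hv hvu, hu⟩) hvu
  simp only [hf] at h1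
  linarith

/-- TV-type bound from cross-ratio control. -/
lemma tv_osc_bound {A : Type*} [Fintype A] [Nonempty A] (μ ν : A → ℝ)
    (hμ : ∀ a, 0 < μ a) (hν : ∀ a, 0 < ν a) (hμ1 : ∑ a, μ a = 1) (hν1 : ∑ a, ν a = 1)
    (β : ℝ) (hβ : 0 ≤ β)
    (hcross : ∀ a a', μ a * ν a' ≤ Real.exp (4 * β) * (ν a * μ a'))
    (φ : A → ℝ) (c : ℝ) (hc : ∀ a a', |φ a - φ a'| ≤ c) :
    |∑ a, (μ a - ν a) * φ a| ≤ β * c := by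
  classical
  have hc0 : 0 ≤ c := le_trans (abs_nonneg _) (hc (Classical.arbitrary A) (Classical.arbitrary A))
  -- the positive part of the difference
  set A' : Finset A := Finset.univ.filter (fun a => ν a < μ a) with hA'
  set u : ℝ := ∑ a ∈ A', (μ a - ν a) with hu
  -- step 1 : u ≤ β
  have hu_nonneg : 0 ≤ u :=
    Finset.sum_nonneg (fun a ha => by
      simp only [hA', Finset.mem_filter] at ha; linarith [ha.2])
  have step1 : u ≤ β := by
    by_cases hAe : A' = ∅
    · simp [hu, hAe]; exact hβ
    · -- A' nonempty
      have hAne : A'.Nonempty := Finset.nonempty_of_ne_empty hAe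
      -- complement nonempty
      have hsum0 : ∑ a, (μ a - ν a) = 0 := by
        rw [Finset.sum_sub_distrib, hμ1, hν1]; ring
      have hAcne : (A'ᶜ : Finset A).Nonempty := by
        by_contra hcne
        rw [Finset.not_nonempty_iff_eq_empty, Finset.compl_eq_empty_iff] at hcne
        have : 0 < ∑ a, (μ a - ν a) := by
          apply Finset.sum_pos
          · intro a ha
            have : a ∈ A' := by rw [hcne]; exact Finset.mem_univ a
            simp only [hA', Finset.mem_filter] at this
            linarith [this.2]
          · exact Finset.univ_nonempty
        linarith [hsum0]
      set U : ℝ := ∑ a ∈ A', μ a with hU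
      set V : ℝ := ∑ a ∈ A', ν a with hV
      have hUV : u = U - V := by rw [hu, hU, hV, Finset.sum_sub_distrib]
      have hV0 : 0 < V := Finset.sum_pos (fun a _ => hν a) hAne
      have hVU : V < U := by
        have : 0 < u := by
          rw [hu]
          apply Finset.sum_pos
          · intro a ha; simp only [hA', Finset.mem_filter] at ha; linarith [ha.2]
          · exact hAne
        linarith [hUV]
      have hcompl_mu : ∑ a ∈ A'ᶜ, μ a = 1 - U := by
        have := Finset.sum_add_sum_compl A' μ
        rw [hμ1] at this; linarith [this]
      have hcompl_nu : ∑ a ∈ A'ᶜ, ν a = 1 - V := by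
        have := Finset.sum_add_sum_compl A' ν
        rw [hν1] at this; linarith [this]
      have hU1 : U < 1 := by
        have : 0 < ∑ a ∈ A'ᶜ, μ a := Finset.sum_pos (fun a _ => hμ a) hAcne
        rw [hcompl_mu] at this; linarith
      -- aggregated cross-ratio : U * (1 - V) ≤ exp(4β) * (V * (1 - U))
      have hagg : U * (1 - V) ≤ Real.exp (4 * β) * (V * (1 - U)) := by
        have expand : U * (1 - V) = ∑ a ∈ A', ∑ a' ∈ A'ᶜ, μ a * ν a' := by
          rw [← hcompl_nu, hU, Finset.sum_mul_sum]
        have expand2 : V * (1 - U) = ∑ a ∈ A', ∑ a' ∈ A'ᶜ, ν a * μ a' := by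
          rw [← hcompl_mu, hV, Finset.sum_mul_sum]
        rw [expand, expand2, Finset.mul_sum]
        apply Finset.sum_le_sum
        intro a _
        rw [Finset.mul_sum]
        apply Finset.sum_le_sum
        intro a' _
        exact hcross a a'
      -- take logs and use logit lemma
      have hVlt1 : V < 1 := lt_trans hVU hU1
      have hlog : (Real.log U - Real.log (1 - U)) - (Real.log V - Real.log (1 - V)) ≤ 4 * β := by
        have l1 : Real.log (U * (1 - V)) ≤ Real.log (Real.exp (4 * β) * (V * (1 - U))) := by
          apply Real.log_le_log (by nlinarith) hagg
        rw [Real.log_mul (by nlinarith) (by nlinarith),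
            Real.log_mul (ne_of_gt (Real.exp_pos _)) (by nlinarith),
            Real.log_mul (by nlinarith) (by nlinarith), Real.log_exp] at l1
        linarith
      have := logit_lemma hV0 (le_of_lt hVU) hU1
      rw [hUV]
      linarith
  -- step 2 : ∑ |μ - ν| = 2u
  have step2 : ∑ a, |μ a - ν a| = 2 * u := by
    have hsum0 : ∑ a, (μ a - ν a) = 0 := by
      rw [Finset.sum_sub_distrib, hμ1, hν1]; ring
    have split : ∑ a, |μ a - ν a| = ∑ a ∈ A', |μ a - ν a| + ∑ a ∈ A'ᶜ, |μ a - ν a| :=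
      (Finset.sum_add_sum_compl A' _).symm
    have e1 : ∑ a ∈ A', |μ a - ν a| = u := by
      rw [hu]
      apply Finset.sum_congr rfl
      intro a ha
      simp only [hA', Finset.mem_filter] at ha
      rw [abs_of_pos]; linarith [ha.2]
    have e2 : ∑ a ∈ A'ᶜ, |μ a - ν a| = u := by
      have hcsum : ∑ a ∈ A'ᶜ, (μ a - ν a) = -u := by
        have h5 := Finset.sum_add_sum_compl A' (fun a => μ a - ν a)
        rw [hsum0] at h5
        have : u + ∑ a ∈ A'ᶜ, (μ a - ν a) = 0 := by rw [hu]; exact h5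
        linarith
      have habs : ∑ a ∈ A'ᶜ, |μ a - ν a| = ∑ a ∈ A'ᶜ, (ν a - μ a) := by
        apply Finset.sum_congr rfl
        intro a ha
        simp only [hA', Finset.mem_compl, Finset.mem_filter, Finset.mem_univ, true_and,
          not_lt] at ha
        rw [abs_of_nonpos (by linarith)]
        ring
      have : ∑ a ∈ A'ᶜ, (ν a - μ a) = - ∑ a ∈ A'ᶜ, (μ a - ν a) := by
        rw [← Finset.sum_neg_distrib]
        apply Finset.sum_congr rfl
        intros ; ring
      rw [habs, this, hcsum]; ring
    rw [split, e1, e2]; ring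
  -- step 3 : conclude with the midpoint trick
  have hne : (Finset.univ : Finset A).Nonempty := Finset.univ_nonempty
  set Mx : ℝ := Finset.univ.sup' hne φ with hMx
  set mn : ℝ := Finset.univ.inf' hne φ with hmn
  have hosc : Mx - mn ≤ c := by
    obtain ⟨a1, -, ha1⟩ := Finset.exists_mem_eq_sup' hne φ
    obtain ⟨a2, -, ha2⟩ := Finset.exists_mem_eq_inf' hne φ
    rw [hMx, hmn, ha1, ha2]
    calc φ a1 - φ a2 ≤ |φ a1 - φ a2| := le_abs_self _
      _ ≤ c := hc a1 a2
  set k : ℝ := (Mx + mn) / 2 with hk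
  have hcent : ∀ a, |φ a - k| ≤ c / 2 := by
    intro a
    have h1 : φ a ≤ Mx := Finset.le_sup' φ (Finset.mem_univ a)
    have h2 : mn ≤ φ a := Finset.inf'_le φ (Finset.mem_univ a)
    rw [abs_le]
    constructor <;> [skip; skip] <;> simp only [hk] <;> linarith
  have hrw : ∑ a, (μ a - ν a) * φ a = ∑ a, (μ a - ν a) * (φ a - k) := by
    rw [show ∑ a, (μ a - ν a) * (φ a - k) =
        ∑ a, ((μ a - ν a) * φ a - (μ a - ν a) * k) by apply Finset.sum_congr rfl; intros; ring]
    rw [Finset.sum_sub_distrib, ← Finset.sum_mul, Finset.sum_sub_distrib, hμ1, hν1]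
    ring
  rw [hrw]
  calc |∑ a, (μ a - ν a) * (φ a - k)| ≤ ∑ a, |(μ a - ν a) * (φ a - k)| :=
        Finset.abs_sum_le_sum_abs _ _
    _ ≤ ∑ a, |μ a - ν a| * (c / 2) := by
        apply Finset.sum_le_sum
        intro a _
        rw [abs_mul]
        exact mul_le_mul_of_nonneg_left (hcent a) (abs_nonneg _)
    _ = (2 * u) * (c / 2) := by rw [← Finset.sum_mul, step2]
    _ = u * c := by ring
    _ ≤ β * c := mul_le_mul_of_nonneg_right step1 hc0


variable (p : (Fin m → Z) → ℝ)

/-- normalization of the conditional distribution at site `i` -/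
def Znn (i : Fin m) (x : Fin m → Z) : ℝ := ∑ a, p (Function.update x i a)

/-- conditional probability of value `a` at site `i` given the rest of `x` -/
def cnd (i : Fin m) (x : Fin m → Z) (a : Z) : ℝ := p (Function.update x i a) / Znn p i x

/-- Glauber transition operator -/
def Pg (f : (Fin m → Z) → ℝ) (x : Fin m → Z) : ℝ :=
  (∑ i, ∑ a, cnd p i x a * f (Function.update x i a)) / m

variable {p}

lemma Znn_pos (hp : ∀ z, 0 < p z) (i : Fin m) (x : Fin m → Z) : 0 < Znn p i x :=
  Finset.sum_pos (fun a _ => hp _) Finset.univ_nonempty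

lemma Znn_update (i : Fin m) (x : Fin m → Z) (b : Z) :
    Znn p i (Function.update x i b) = Znn p i x := by
  unfold Znn
  apply Finset.sum_congr rfl
  intro a _
  rw [Function.update_idem]

lemma cnd_pos (hp : ∀ z, 0 < p z) (i : Fin m) (x : Fin m → Z) (a : Z) : 0 < cnd p i x a :=
  div_pos (hp _) (Znn_pos hp i x)

lemma cnd_sum (hp : ∀ z, 0 < p z) (i : Fin m) (x : Fin m → Z) : ∑ a, cnd p i x a = 1 := by
  unfold cnd
  rw [← Finset.sum_div]
  exact div_self (ne_of_gt (Znn_pos hp i x))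

lemma cnd_update (i : Fin m) (x : Fin m → Z) (b a : Z) :
    cnd p i (Function.update x i b) a = cnd p i x a := by
  unfold cnd
  rw [Znn_update, Function.update_idem]

/-- the site-`i` pair swap involution -/
def swapPair (i : Fin m) : ((Fin m → Z) × Z) → ((Fin m → Z) × Z) :=
  fun q => (Function.update q.1 i q.2, q.1 i)

lemma swapPair_involutive (i : Fin m) : Function.Involutive (swapPair (Z := Z) (m := m) i) := by
  intro q
  unfold swapPair
  simp [Function.update_idem, Function.update_self, Function.update_eq_self]

/-- reversibility reindexing identity for one site -/
lemma glauber_symm (hp : ∀ z, 0 < p z) (i : Fin m)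
    (G : (Fin m → Z) → (Fin m → Z) → ℝ) :
    ∑ x, ∑ a, p x * cnd p i x a * G x (Function.update x i a) =
    ∑ x, ∑ a, p x * cnd p i x a * G (Function.update x i a) x := by
  have hL : ∑ x, ∑ a, p x * cnd p i x a * G x (Function.update x i a) =
      ∑ q : (Fin m → Z) × Z, p q.1 * cnd p i q.1 q.2 * G q.1 (Function.update q.1 i q.2) := by
    rw [Fintype.sum_prod_type]
  have hR : ∑ x, ∑ a, p x * cnd p i x a * G (Function.update x i a) x =
      ∑ q : (Fin m → Z) × Z, p q.1 * cnd p i q.1 q.2 * G (Function.update q.1 i q.2) q.1 := by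
    rw [Fintype.sum_prod_type]
  rw [hL, hR]
  set e : ((Fin m → Z) × Z) ≃ ((Fin m → Z) × Z) := (swapPair_involutive (Z := Z) (m := m) i).toPerm
  rw [← Equiv.sum_comp e (fun q : (Fin m → Z) × Z =>
    p q.1 * cnd p i q.1 q.2 * G q.1 (Function.update q.1 i q.2))]
  apply Finset.sum_congr rfl
  intro q _
  have he : e q = (Function.update q.1 i q.2, q.1 i) := rfl
  rw [he]
  simp only
  have h1 : Function.update (Function.update q.1 i q.2) i (q.1 i) = q.1 := by
    rw [Function.update_idem, Function.update_eq_self]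
  rw [h1]
  -- weights agree
  have hw : p (Function.update q.1 i q.2) * cnd p i (Function.update q.1 i q.2) (q.1 i) =
      p q.1 * cnd p i q.1 q.2 := by
    unfold cnd
    rw [Znn_update]
    rw [Function.update_idem, Function.update_eq_self]
    field_simp
  rw [hw]

/-- stationarity of `p` under the Glauber dynamics -/
lemma glauber_stationary (hp : ∀ z, 0 < p z) (hm : 0 < m) (f : (Fin m → Z) → ℝ) :
    ∑ x, p x * Pg p f x = ∑ x, p x * f x := by
  have key : ∀ i : Fin m, ∑ x, ∑ a, p x * cnd p i x a * f (Function.update x i a) =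
      ∑ x, p x * f x := by
    intro i
    rw [glauber_symm hp i (fun _ y => f y)]
    apply Finset.sum_congr rfl
    intro x _
    rw [show ∑ a, p x * cnd p i x a * f x = (∑ a, cnd p i x a) * (p x * f x) by
      rw [Finset.sum_mul]; apply Finset.sum_congr rfl; intros; ring]
    rw [cnd_sum hp]
    ring
  have h1 : ∀ x, p x * Pg p f x =
      (∑ i, ∑ a, p x * cnd p i x a * f (Function.update x i a)) / ↑m := by
    intro x; unfold Pg
    rw [← mul_div_assoc]
    congr 1
    rw [Finset.mul_sum]
    apply Finset.sum_congr rfl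
    intros
    rw [Finset.mul_sum]
    apply Finset.sum_congr rfl
    intros
    ring
  rw [Finset.sum_congr rfl (fun x _ => h1 x), ← Finset.sum_div, Finset.sum_comm,
    Finset.sum_congr rfl (fun i _ => key i), Finset.sum_const, Finset.card_univ,
    Fintype.card_fin, nsmul_eq_mul]
  have hm' : (m:ℝ) ≠ 0 := (Nat.cast_pos.mpr hm).ne'
  field_simp


variable (p) in
/-- the influence matrix (zero diagonal) -/
def Mmat (i j : Fin m) : ℝ := if i = j then 0 else logInfluence p i j

variable (p) in
/-- the one-step Lipschitz-coefficient transfer matrix (column form) -/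
def mulB (δ : Fin m → ℝ) (k : Fin m) : ℝ :=
  (((m:ℝ) - 1) * δ k + ∑ i, Mmat p i k * δ i) / m

/-- single-site Lipschitz property -/
def SLip (f : (Fin m → Z) → ℝ) (δ : Fin m → ℝ) : Prop :=
  ∀ (x : Fin m → Z) (k : Fin m) (b : Z), |f (Function.update x k b) - f x| ≤ δ k

lemma Mmat_nonneg (hp : ∀ z, 0 < p z) (i j : Fin m) : 0 ≤ Mmat p i j := by
  unfold Mmat
  split
  · exact le_refl 0
  · exact logInfluence_nonneg p hp i j

/-- telescoping: single-site Lipschitz implies the bounded-differences property -/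
lemma slip_pair {f : (Fin m → Z) → ℝ} {δ : Fin m → ℝ} (hf : SLip f δ) (hδ : ∀ i, 0 ≤ δ i)
    (x y : Fin m → Z) : |f x - f y| ≤ ∑ i, (if x i ≠ y i then δ i else 0) := by
  classical
  suffices H : ∀ (n : ℕ) (x : Fin m → Z),
      (Finset.univ.filter (fun i => x i ≠ y i)).card ≤ n →
      |f x - f y| ≤ ∑ i, (if x i ≠ y i then δ i else 0) by
    exact H (Finset.univ.filter (fun i => x i ≠ y i)).card x le_rfl
  intro n
  induction n with
  | zero =>
    intro x hx
    have hempty : (Finset.univ.filter (fun i => x i ≠ y i)) = ∅ :=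
      Finset.card_eq_zero.mp (Nat.le_zero.mp hx)
    have hxy : x = y := by
      funext i
      by_contra hne
      have : i ∈ Finset.univ.filter (fun i => x i ≠ y i) := by
        simp [hne]
      rw [hempty] at this
      exact absurd this (Finset.notMem_empty i)
    rw [hxy, sub_self, abs_zero]
    apply Finset.sum_nonneg
    intro i _
    split <;> simp [hδ i]
  | succ n ih =>
    intro x hx
    by_cases hne : (Finset.univ.filter (fun i => x i ≠ y i)) = ∅
    · have hxy : x = y := by
        funext i
        by_contra hc
        have : i ∈ Finset.univ.filter (fun i => x i ≠ y i) := by simp [hc]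
        rw [hne] at this
        exact absurd this (Finset.notMem_empty i)
      rw [hxy, sub_self, abs_zero]
      apply Finset.sum_nonneg
      intro i _
      split <;> simp [hδ i]
    · obtain ⟨k, hk⟩ := Finset.nonempty_of_ne_empty hne
      simp only [Finset.mem_filter, Finset.mem_univ, true_and] at hk
      set x' := Function.update x k (y k) with hx'
      have hcard : (Finset.univ.filter (fun i => x' i ≠ y i)).card ≤ n := by
        have hsub : (Finset.univ.filter (fun i => x' i ≠ y i)) ⊆
            (Finset.univ.filter (fun i => x i ≠ y i)).erase k := by
          intro i hi
          simp only [Finset.mem_filter, Finset.mem_univ, true_and] at hi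
          rw [Finset.mem_erase]
          constructor
          · intro hik
            apply hi
            rw [hik, hx']
            simp
          · simp only [Finset.mem_filter, Finset.mem_univ, true_and]
            intro hxiy
            apply hi
            have hik : i ≠ k := by
              intro hik; apply hi; rw [hik, hx']; simp
            rw [hx', Function.update_of_ne hik]
            exact hxiy
        calc (Finset.univ.filter (fun i => x' i ≠ y i)).card
            ≤ ((Finset.univ.filter (fun i => x i ≠ y i)).erase k).card :=
              Finset.card_le_card hsub
          _ = (Finset.univ.filter (fun i => x i ≠ y i)).card - 1 := by
              rw [Finset.card_erase_of_mem]
              simp [hk]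
          _ ≤ n := by omega
      have step := ih x' hcard
      have h1 : |f x - f x'| ≤ δ k := by
        rw [hx', abs_sub_comm]
        exact hf x k (y k)
      have e1 : ∑ i, (if x i ≠ y i then δ i else 0) =
          ∑ i ∈ Finset.univ \ {k}, (if x i ≠ y i then δ i else 0) + δ k := by
        rw [Finset.sum_eq_sum_sdiff_singleton_add (Finset.mem_univ k)]
        simp [hk]
      have e2 : ∑ i, (if x' i ≠ y i then δ i else 0) =
          ∑ i ∈ Finset.univ \ {k}, (if x' i ≠ y i then δ i else 0) := by
        rw [Finset.sum_eq_sum_sdiff_singleton_add (Finset.mem_univ k)]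
        have : x' k = y k := by rw [hx']; simp
        simp [this]
      have e3 : ∑ i ∈ Finset.univ \ {k}, (if x' i ≠ y i then δ i else 0) =
          ∑ i ∈ Finset.univ \ {k}, (if x i ≠ y i then δ i else 0) := by
        apply Finset.sum_congr rfl
        intro i hi
        rw [Finset.mem_sdiff, Finset.mem_singleton] at hi
        rw [hx', Function.update_of_ne hi.2]
      calc |f x - f y| ≤ |f x - f x'| + |f x' - f y| := abs_sub_le _ _ _
        _ ≤ δ k + ∑ i, (if x' i ≠ y i then δ i else 0) := add_le_add h1 step
        _ = δ k + ∑ i ∈ Finset.univ \ {k}, (if x i ≠ y i then δ i else 0) := by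
            rw [e2, e3]
        _ = ∑ i, (if x i ≠ y i then δ i else 0) := by rw [e1]; ring

/-- one-step contraction of single-site Lipschitz coefficients under the Glauber dynamics -/
lemma contraction (hp : ∀ z, 0 < p z) (hm : 0 < m) {f : (Fin m → Z) → ℝ} {δ : Fin m → ℝ}
    (hf : SLip f δ) (hδ : ∀ i, 0 ≤ δ i) : SLip (Pg p f) (mulB p δ) := by
  intro x k b
  set y := Function.update x k b with hy
  set T : Fin m → (Fin m → Z) → ℝ :=
    fun i z => ∑ a, cnd p i z a * f (Function.update z i a) with hT
  have hxy : x = Function.update y k (x k) := by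
    rw [hy, Function.update_idem, Function.update_eq_self]
  have hmR : (0:ℝ) < (m:ℝ) := Nat.cast_pos.mpr hm
  -- per-site bounds
  have hbound : ∀ i : Fin m, |T i y - T i x| ≤
      (if i = k then 0 else δ k + Mmat p i k * δ i) := by
    intro i
    by_cases hik : i = k
    · subst hik
      have : T i y = T i x := by
        rw [hT]
        apply Finset.sum_congr rfl
        intro a _
        rw [hy, cnd_update, Function.update_idem]
      rw [this, sub_self, abs_zero, if_pos rfl]
    · rw [if_neg hik]
      have hsplit : T i y - T i x =
          (∑ a, cnd p i x a * (f (Function.update y i a) - f (Function.update x i a))) +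
          (∑ a, (cnd p i y a - cnd p i x a) * f (Function.update y i a)) := by
        rw [hT]
        simp only
        rw [← Finset.sum_add_distrib, ← Finset.sum_sub_distrib]
        apply Finset.sum_congr rfl
        intros ; ring
      have hfirst : |∑ a, cnd p i x a * (f (Function.update y i a) - f (Function.update x i a))|
          ≤ δ k := by
        calc |∑ a, cnd p i x a * (f (Function.update y i a) - f (Function.update x i a))|
            ≤ ∑ a, |cnd p i x a * (f (Function.update y i a) - f (Function.update x i a))| :=
              Finset.abs_sum_le_sum_abs _ _
          _ ≤ ∑ a, cnd p i x a * δ k := by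
              apply Finset.sum_le_sum
              intro a _
              rw [abs_mul, abs_of_pos (cnd_pos hp i x a)]
              apply mul_le_mul_of_nonneg_left _ (le_of_lt (cnd_pos hp i x a))
              have he : Function.update y i a =
                  Function.update (Function.update x i a) k b := by
                rw [hy]; exact (Function.update_comm hik a b x).symm
              rw [he]
              exact hf (Function.update x i a) k b
          _ = δ k := by rw [← Finset.sum_mul, cnd_sum hp, one_mul]
      have hsecond : |∑ a, (cnd p i y a - cnd p i x a) * f (Function.update y i a)|
          ≤ logInfluence p i k * δ i := by
        apply tv_osc_bound (cnd p i y) (cnd p i x) (cnd_pos hp i y) (cnd_pos hp i x)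
          (cnd_sum hp i y) (cnd_sum hp i x) (logInfluence p i k)
          (logInfluence_nonneg p hp i k)
        · -- cross-ratio control
          intro a a'
          have key := cross_ratio_bound p hp hik y (x k) a a'
          rw [← hxy] at key
          have hZx := Znn_pos hp i x
          have hZy := Znn_pos hp i y
          unfold cnd
          rw [div_mul_div_comm, div_mul_div_comm]
          have h2 : Real.exp (4 * logInfluence p i k) *
              (p (Function.update x i a) * p (Function.update y i a') /
                (Znn p i x * Znn p i y)) =
              (Real.exp (4 * logInfluence p i k) *
                (p (Function.update x i a) * p (Function.update y i a'))) /
                (Znn p i y * Znn p i x) := by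
            rw [mul_comm (Znn p i y)]
            ring
          rw [h2, div_le_div_iff₀ (mul_pos hZy hZx) (mul_pos hZy hZx)]
          exact mul_le_mul_of_nonneg_right key (le_of_lt (mul_pos hZy hZx))
        · -- oscillation control
          intro a a'
          have he : Function.update y i a' =
              Function.update (Function.update y i a) i a' := by
            rw [Function.update_idem]
          rw [abs_sub_comm, he]
          exact hf (Function.update y i a) i a'
      calc |T i y - T i x| ≤
          |∑ a, cnd p i x a * (f (Function.update y i a) - f (Function.update x i a))| +
          |∑ a, (cnd p i y a - cnd p i x a) * f (Function.update y i a)| := by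
            rw [hsplit]; exact abs_add_le _ _
        _ ≤ δ k + logInfluence p i k * δ i := add_le_add hfirst hsecond
        _ = δ k + Mmat p i k * δ i := by rw [Mmat, if_neg hik]
  -- assemble
  have hPg : Pg p f y - Pg p f x = (∑ i, (T i y - T i x)) / m := by
    unfold Pg
    rw [hT, Finset.sum_sub_distrib]
    rw [div_sub_div_same]
  have hsum : |∑ i, (T i y - T i x)| ≤ ((m:ℝ) - 1) * δ k + ∑ i, Mmat p i k * δ i := by
    calc |∑ i, (T i y - T i x)| ≤ ∑ i, |T i y - T i x| := Finset.abs_sum_le_sum_abs _ _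
      _ ≤ ∑ i, (if i = k then 0 else δ k + Mmat p i k * δ i) :=
          Finset.sum_le_sum (fun i _ => hbound i)
      _ = ((m:ℝ) - 1) * δ k + ∑ i, Mmat p i k * δ i := by
          have hA : ∑ i, (if i = k then 0 else δ k + Mmat p i k * δ i)
              = ∑ i ∈ Finset.univ \ {k}, (δ k + Mmat p i k * δ i) := by
            rw [Finset.sum_eq_sum_sdiff_singleton_add (Finset.mem_univ k), if_pos rfl, add_zero]
            apply Finset.sum_congr rfl
            intro i hi
            rw [Finset.mem_sdiff, Finset.mem_singleton] at hi
            rw [if_neg hi.2]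
          have hB : ∑ i ∈ Finset.univ \ {k}, (δ k + Mmat p i k * δ i)
              = ((Finset.univ \ {k}).card : ℝ) * δ k +
                ∑ i ∈ Finset.univ \ {k}, Mmat p i k * δ i := by
            rw [Finset.sum_add_distrib, Finset.sum_const, nsmul_eq_mul]
          have hcard : (((Finset.univ \ {k} : Finset (Fin m))).card : ℝ) = (m:ℝ) - 1 := by
            rw [Finset.card_sdiff_of_subset (Finset.subset_univ _), Finset.card_univ, Fintype.card_fin,
              Finset.card_singleton, Nat.cast_sub hm, Nat.cast_one]
          have hC : ∑ i, Mmat p i k * δ i = ∑ i ∈ Finset.univ \ {k}, Mmat p i k * δ i := by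
            rw [Finset.sum_eq_sum_sdiff_singleton_add (Finset.mem_univ k),
              show Mmat p k k = 0 from if_pos rfl, zero_mul, add_zero]
          rw [hA, hB, hcard, hC]
  calc |Pg p f y - Pg p f x| = |∑ i, (T i y - T i x)| / m := by
        rw [hPg, abs_div, abs_of_pos hmR]
    _ ≤ (((m:ℝ) - 1) * δ k + ∑ i, Mmat p i k * δ i) / m := by
        exact (div_le_div_iff_of_pos_right hmR).mpr hsum
    _ = mulB p δ k := rfl

lemma Mmat_symm (i j : Fin m) : Mmat p i j = Mmat p j i := by
  unfold Mmat
  by_cases h : i = j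
  · subst h; rfl
  · rw [if_neg h, if_neg (Ne.symm h), logInfluence_symm p h]

lemma bdd_row : BddAbove (Set.range fun i : Fin m =>
    ∑ j ∈ Finset.univ.erase i, logInfluence p i j) :=
  Set.Finite.bddAbove (Set.finite_range _)

lemma row_sum_le (hm : 0 < m) (i : Fin m) : ∑ j, Mmat p i j ≤ logCoefficient p := by
  have h1 : ∑ j, Mmat p i j = ∑ j ∈ Finset.univ.erase i, logInfluence p i j := by
    rw [← Finset.sum_erase_add _ _ (Finset.mem_univ i),
      show Mmat p i i = 0 from if_pos rfl, add_zero]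
    apply Finset.sum_congr rfl
    intro j hj
    rw [Finset.mem_erase] at hj
    unfold Mmat
    rw [if_neg (Ne.symm hj.1)]
  rw [h1]
  exact le_ciSup (bdd_row (p := p)) i

lemma col_sum_le (hm : 0 < m) (k : Fin m) : ∑ i, Mmat p i k ≤ logCoefficient p := by
  rw [Finset.sum_congr rfl (fun i _ => Mmat_symm (p := p) i k)]
  exact row_sum_le hm k

lemma alpha_nonneg (hp : ∀ z, 0 < p z) (hm : 0 < m) : 0 ≤ logCoefficient p := by
  have i : Fin m := ⟨0, hm⟩
  refine le_trans ?_ (le_ciSup (bdd_row (p := p)) i)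
  apply Finset.sum_nonneg
  intro j _
  exact logInfluence_nonneg p hp i j

lemma le_of_sq_le_sq {a b : ℝ} (ha : 0 ≤ a) (hb : 0 ≤ b) (h : a ^ 2 ≤ b ^ 2) : a ≤ b := by
  nlinarith

lemma mulB_nonneg (hp : ∀ z, 0 < p z) (hm : 0 < m) {δ : Fin m → ℝ} (hδ : ∀ i, 0 ≤ δ i)
    (k : Fin m) : 0 ≤ mulB p δ k := by
  unfold mulB
  apply div_nonneg _ (Nat.cast_nonneg m)
  have h1 : (0:ℝ) ≤ ((m:ℝ) - 1) * δ k := by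
    apply mul_nonneg _ (hδ k)
    have : (1:ℝ) ≤ (m:ℝ) := by exact_mod_cast hm
    linarith
  have h2 : (0:ℝ) ≤ ∑ i, Mmat p i k * δ i :=
    Finset.sum_nonneg (fun i _ => mul_nonneg (Mmat_nonneg hp i k) (hδ i))
  linarith

lemma mulB_l1 (hp : ∀ z, 0 < p z) (hm : 0 < m) {δ : Fin m → ℝ} (hδ : ∀ i, 0 ≤ δ i) :
    ∑ k, mulB p δ k ≤ (1 - (1 - logCoefficient p) / m) * ∑ k, δ k := by
  unfold mulB
  rw [← Finset.sum_div]
  rw [Finset.sum_add_distrib]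
  have hswap : ∑ k, ∑ i, Mmat p i k * δ i = ∑ i, (∑ k, Mmat p i k) * δ i := by
    rw [Finset.sum_comm]
    apply Finset.sum_congr rfl
    intros ; rw [Finset.sum_mul]
  rw [hswap]
  have h1 : ∑ i : Fin m, (∑ k, Mmat p i k) * δ i ≤ ∑ i, logCoefficient p * δ i := by
    apply Finset.sum_le_sum
    intro i _
    exact mul_le_mul_of_nonneg_right (row_sum_le hm i) (hδ i)
  have h2 : ∑ k : Fin m, ((m:ℝ) - 1) * δ k = ((m:ℝ) - 1) * ∑ k, δ k := by
    rw [Finset.mul_sum]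
  have h3 : ∑ i : Fin m, logCoefficient p * δ i = logCoefficient p * ∑ i, δ i := by
    rw [Finset.mul_sum]
  have hmR : (0:ℝ) < (m:ℝ) := Nat.cast_pos.mpr hm
  rw [div_le_iff₀ hmR]
  have hδs : 0 ≤ ∑ k, δ k := Finset.sum_nonneg (fun k _ => hδ k)
  have expand : (1 - (1 - logCoefficient p) / ↑m) * (∑ k, δ k) * ↑m =
      ((m:ℝ) - 1) * (∑ k, δ k) + logCoefficient p * (∑ k, δ k) := by
    field_simp
    ring
  rw [expand, h2]
  linarith [h1, h3.symm.le]

/-- Schur-test style ℓ² bound -/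
lemma mulB_l2 (hp : ∀ z, 0 < p z) (hm : 0 < m) {δ : Fin m → ℝ} (hδ : ∀ i, 0 ≤ δ i) :
    ∑ k, (mulB p δ k) ^ 2 ≤ (1 - (1 - logCoefficient p) / m) ^ 2 * ∑ k, (δ k) ^ 2 := by
  set ρ : ℝ := 1 - (1 - logCoefficient p) / m with hρ
  have hmR : (0:ℝ) < (m:ℝ) := Nat.cast_pos.mpr hm
  have hα0 : 0 ≤ logCoefficient p := alpha_nonneg hp hm
  have hm1 : (1:ℝ) ≤ (m:ℝ) := by exact_mod_cast hm
  set Bent : Fin m → Fin m → ℝ :=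
    fun k i => ((if i = k then (m:ℝ) - 1 else 0) + Mmat p i k) / m with hBent
  have hBnonneg : ∀ k i, 0 ≤ Bent k i := by
    intro k i
    apply div_nonneg _ (le_of_lt hmR)
    have h2 := Mmat_nonneg (p := p) hp i k
    split <;> linarith
  have hBrow : ∀ k, ∑ i, Bent k i ≤ ρ := by
    intro k
    rw [hBent]
    simp only
    rw [← Finset.sum_div, Finset.sum_add_distrib, Finset.sum_ite_eq' Finset.univ k (fun _ => (m:ℝ) - 1)]
    rw [if_pos (Finset.mem_univ k)]
    rw [div_le_iff₀ hmR, hρ]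
    have := col_sum_le (p := p) hm k
    have expand : (1 - (1 - logCoefficient p) / ↑m) * ↑m = (m:ℝ) - 1 + logCoefficient p := by
      field_simp
      ring
    rw [expand]
    linarith [this]
  have hBcol : ∀ i, ∑ k, Bent k i ≤ ρ := by
    intro i
    rw [hBent]
    simp only
    rw [← Finset.sum_div, Finset.sum_add_distrib,
      Finset.sum_ite_eq Finset.univ i (fun _ => (m:ℝ) - 1), if_pos (Finset.mem_univ i)]
    rw [div_le_iff₀ hmR, hρ]
    have expand : (1 - (1 - logCoefficient p) / ↑m) * ↑m = (m:ℝ) - 1 + logCoefficient p := by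
      field_simp
      ring
    rw [expand]
    linarith [row_sum_le (p := p) hm i]
  have hρ0 : 0 ≤ ρ := by
    rw [hρ]
    rw [sub_nonneg, div_le_one hmR]
    linarith
  have hmulB_eq : ∀ k, mulB p δ k = ∑ i, Bent k i * δ i := by
    intro k
    unfold mulB
    rw [hBent]
    simp only
    have hterm : ∀ i, ((if i = k then (m:ℝ) - 1 else 0) + Mmat p i k) / ↑m * δ i =
        ((if i = k then ((m:ℝ) - 1) * δ i else 0) + Mmat p i k * δ i) / ↑m := by
      intro i
      split <;> ring
    rw [Finset.sum_congr rfl (fun i _ => hterm i), ← Finset.sum_div, Finset.sum_add_distrib,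
      Finset.sum_ite_eq' Finset.univ k (fun i => ((m:ℝ) - 1) * δ i), if_pos (Finset.mem_univ k)]
  have key : ∀ k, (mulB p δ k) ^ 2 ≤ ρ * ∑ i, Bent k i * δ i ^ 2 := by
    intro k
    rw [hmulB_eq k]
    have CS := Finset.sum_mul_sq_le_sq_mul_sq Finset.univ
      (fun i => Real.sqrt (Bent k i)) (fun i => Real.sqrt (Bent k i) * δ i)
    have e1 : ∀ i, Real.sqrt (Bent k i) * (Real.sqrt (Bent k i) * δ i) = Bent k i * δ i := by
      intro i
      rw [← mul_assoc, Real.mul_self_sqrt (hBnonneg k i)]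
    have e2 : ∀ i, Real.sqrt (Bent k i) ^ 2 = Bent k i := fun i => Real.sq_sqrt (hBnonneg k i)
    have e3 : ∀ i, (Real.sqrt (Bent k i) * δ i) ^ 2 = Bent k i * δ i ^ 2 := by
      intro i
      rw [mul_pow, Real.sq_sqrt (hBnonneg k i)]
    rw [Finset.sum_congr rfl (fun i _ => e1 i), Finset.sum_congr rfl (fun i _ => e2 i),
      Finset.sum_congr rfl (fun i _ => e3 i)] at CS
    have hq : 0 ≤ ∑ i, Bent k i * δ i ^ 2 :=
      Finset.sum_nonneg (fun i _ => mul_nonneg (hBnonneg k i) (sq_nonneg _))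
    calc (∑ i, Bent k i * δ i) ^ 2 ≤ (∑ i, Bent k i) * ∑ i, Bent k i * δ i ^ 2 := CS
      _ ≤ ρ * ∑ i, Bent k i * δ i ^ 2 := mul_le_mul_of_nonneg_right (hBrow k) hq
  calc ∑ k, (mulB p δ k) ^ 2 ≤ ∑ k, ρ * ∑ i, Bent k i * δ i ^ 2 :=
        Finset.sum_le_sum (fun k _ => key k)
    _ = ρ * ∑ i, (∑ k, Bent k i) * δ i ^ 2 := by
        rw [← Finset.mul_sum, Finset.sum_comm]
        congr 1
        apply Finset.sum_congr rfl
        intros ; rw [Finset.sum_mul]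
    _ ≤ ρ * ∑ i, ρ * δ i ^ 2 := by
        apply mul_le_mul_of_nonneg_left _ hρ0
        apply Finset.sum_le_sum
        intro i _
        exact mul_le_mul_of_nonneg_right (hBcol i) (sq_nonneg _)
    _ = ρ ^ 2 * ∑ k, (δ k) ^ 2 := by
        rw [← Finset.mul_sum]
        ring

section Iterates

variable (p) in
/-- iterated Lipschitz coefficient vectors -/
def dseq (lam : Fin m → ℝ) (t : ℕ) : Fin m → ℝ := (mulB p)^[t] lam

variable (p) in
/-- iterated Glauber semigroup -/
def Pt (f : (Fin m → Z) → ℝ) (t : ℕ) : (Fin m → Z) → ℝ := (Pg p)^[t] f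

variable {lam : Fin m → ℝ} {f : (Fin m → Z) → ℝ}
variable (hp : ∀ z, 0 < p z) (hm : 0 < m) (hlam : ∀ i, 0 ≤ lam i) (hf : SLip f lam)

lemma dseq_zero : dseq p lam 0 = lam := rfl

lemma dseq_succ (t : ℕ) : dseq p lam (t + 1) = mulB p (dseq p lam t) := by
  unfold dseq
  rw [Function.iterate_succ_apply']

lemma Pt_zero : Pt p f 0 = f := rfl

lemma Pt_succ (t : ℕ) : Pt p f (t + 1) = Pg p (Pt p f t) := by
  unfold Pt
  rw [Function.iterate_succ_apply']

include hp hm hlam in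
lemma dseq_nonneg : ∀ t i, 0 ≤ dseq p lam t i := by
  intro t
  induction t with
  | zero => exact hlam
  | succ t ih =>
    intro i
    rw [dseq_succ]
    exact mulB_nonneg hp hm ih i

include hp hm hlam hf in
lemma slip_iter : ∀ t, SLip (Pt p f t) (dseq p lam t) := by
  intro t
  induction t with
  | zero => exact hf
  | succ t ih =>
    rw [dseq_succ, Pt_succ]
    exact contraction hp hm ih (dseq_nonneg hp hm hlam t)

include hp hm hlam in
lemma dseq_l1 : ∀ t, ∑ k, dseq p lam t k ≤ (1 - (1 - logCoefficient p) / m) ^ t * ∑ k, lam k := by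
  intro t
  induction t with
  | zero => simp [dseq_zero]
  | succ t ih =>
    rw [dseq_succ]
    have hρ0 : 0 ≤ 1 - (1 - logCoefficient p) / m := by
      have hmR : (0:ℝ) < (m:ℝ) := Nat.cast_pos.mpr hm
      rw [sub_nonneg, div_le_one hmR]
      have := alpha_nonneg (p := p) hp hm
      have : (1:ℝ) ≤ (m:ℝ) := by exact_mod_cast hm
      linarith [alpha_nonneg (p := p) hp hm]
    calc ∑ k, mulB p (dseq p lam t) k
        ≤ (1 - (1 - logCoefficient p) / m) * ∑ k, dseq p lam t k :=
          mulB_l1 hp hm (dseq_nonneg hp hm hlam t)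
      _ ≤ (1 - (1 - logCoefficient p) / m) *
          ((1 - (1 - logCoefficient p) / m) ^ t * ∑ k, lam k) :=
          mul_le_mul_of_nonneg_left ih hρ0
      _ = (1 - (1 - logCoefficient p) / m) ^ (t + 1) * ∑ k, lam k := by ring

include hp hm hlam in
lemma dseq_l2 : ∀ t, ∑ k, (dseq p lam t k) ^ 2 ≤
    ((1 - (1 - logCoefficient p) / m) ^ t) ^ 2 * ∑ k, (lam k) ^ 2 := by
  intro t
  induction t with
  | zero => simp [dseq_zero]
  | succ t ih =>
    rw [dseq_succ]
    have hρ0 : 0 ≤ 1 - (1 - logCoefficient p) / m := by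
      have hmR : (0:ℝ) < (m:ℝ) := Nat.cast_pos.mpr hm
      rw [sub_nonneg, div_le_one hmR]
      have : (1:ℝ) ≤ (m:ℝ) := by exact_mod_cast hm
      linarith [alpha_nonneg (p := p) hp hm]
    calc ∑ k, (mulB p (dseq p lam t) k) ^ 2
        ≤ (1 - (1 - logCoefficient p) / m) ^ 2 * ∑ k, (dseq p lam t k) ^ 2 :=
          mulB_l2 hp hm (dseq_nonneg hp hm hlam t)
      _ ≤ (1 - (1 - logCoefficient p) / m) ^ 2 *
          (((1 - (1 - logCoefficient p) / m) ^ t) ^ 2 * ∑ k, (lam k) ^ 2) :=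
          mul_le_mul_of_nonneg_left ih (sq_nonneg _)
      _ = ((1 - (1 - logCoefficient p) / m) ^ (t + 1)) ^ 2 * ∑ k, (lam k) ^ 2 := by ring

include hp hm hlam in
lemma lam_dot_dseq : ∀ t, ∑ i, lam i * dseq p lam t i ≤
    (1 - (1 - logCoefficient p) / m) ^ t * ∑ k, (lam k) ^ 2 := by
  intro t
  have hρ0 : 0 ≤ 1 - (1 - logCoefficient p) / m := by
    have hmR : (0:ℝ) < (m:ℝ) := Nat.cast_pos.mpr hm
    rw [sub_nonneg, div_le_one hmR]
    have : (1:ℝ) ≤ (m:ℝ) := by exact_mod_cast hm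
    linarith [alpha_nonneg (p := p) hp hm]
  have hd := dseq_nonneg hp hm hlam t
  apply le_of_sq_le_sq
  · exact Finset.sum_nonneg (fun i _ => mul_nonneg (hlam i) (hd i))
  · exact mul_nonneg (pow_nonneg hρ0 t) (Finset.sum_nonneg (fun k _ => sq_nonneg _))
  · have CS := Finset.sum_mul_sq_le_sq_mul_sq Finset.univ lam (dseq p lam t)
    calc (∑ i, lam i * dseq p lam t i) ^ 2
        ≤ (∑ i, lam i ^ 2) * ∑ i, (dseq p lam t i) ^ 2 := CS
      _ ≤ (∑ i, lam i ^ 2) * (((1 - (1 - logCoefficient p) / m) ^ t) ^ 2 * ∑ k, (lam k) ^ 2) :=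
          mul_le_mul_of_nonneg_left (dseq_l2 hp hm hlam t)
            (Finset.sum_nonneg (fun k _ => sq_nonneg _))
      _ = ((1 - (1 - logCoefficient p) / m) ^ t * ∑ k, (lam k) ^ 2) ^ 2 := by ring

include hp hm hlam hf in
lemma pt_pair_bound (t : ℕ) (x y : Fin m → Z) :
    |Pt p f t x - Pt p f t y| ≤ (1 - (1 - logCoefficient p) / m) ^ t * ∑ k, lam k := by
  calc |Pt p f t x - Pt p f t y|
      ≤ ∑ i, (if x i ≠ y i then dseq p lam t i else 0) :=
        slip_pair (slip_iter hp hm hlam hf t) (dseq_nonneg hp hm hlam t) x y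
    _ ≤ ∑ i, dseq p lam t i := by
        apply Finset.sum_le_sum
        intro i _
        split
        · exact le_refl _
        · exact dseq_nonneg hp hm hlam t i
    _ ≤ _ := dseq_l1 hp hm hlam t

include hp hm in
lemma pt_stationary (t : ℕ) : ∑ x, p x * Pt p f t x = ∑ x, p x * f x := by
  induction t with
  | zero => rfl
  | succ t ih =>
    rw [show Pt p f (t+1) = Pg p (Pt p f t) from Pt_succ t]
    rw [glauber_stationary hp hm]
    exact ih

end Iterates

section Limits

variable {lam : Fin m → ℝ} {f : (Fin m → Z) → ℝ}
variable (hp : ∀ z, 0 < p z) (hm : 0 < m) (hlam : ∀ i, 0 ≤ lam i) (hf : SLip f lam)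
  (hα : logCoefficient p < 1) (hpsum : ∑ z, p z = 1)

include hp hm in
lemma rho_nonneg : 0 ≤ 1 - (1 - logCoefficient p) / m := by
  have hmR : (0:ℝ) < (m:ℝ) := Nat.cast_pos.mpr hm
  rw [sub_nonneg, div_le_one hmR]
  have : (1:ℝ) ≤ (m:ℝ) := by exact_mod_cast hm
  linarith [alpha_nonneg (p := p) hp hm]

include hm hα in
lemma rho_lt_one : 1 - (1 - logCoefficient p) / m < 1 := by
  have hmR : (0:ℝ) < (m:ℝ) := Nat.cast_pos.mpr hm
  have : 0 < (1 - logCoefficient p) / m := div_pos (by linarith) hmR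
  linarith

include hp hm hlam hf hpsum hα in
lemma pt_tendsto (x : Fin m → Z) :
    Filter.Tendsto (fun t => Pt p f t x) Filter.atTop (𝓝 (∑ z, p z * f z)) := by
  have key : ∀ t, |Pt p f t x - ∑ z, p z * f z| ≤
      (1 - (1 - logCoefficient p) / m) ^ t * ∑ k, lam k := by
    intro t
    have h1 : Pt p f t x - ∑ z, p z * f z = ∑ y, p y * (Pt p f t x - Pt p f t y) := by
      rw [show ∑ y, p y * (Pt p f t x - Pt p f t y) =
          (∑ y, p y) * Pt p f t x - ∑ y, p y * Pt p f t y by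
        rw [Finset.sum_mul, ← Finset.sum_sub_distrib]
        apply Finset.sum_congr rfl
        intros ; ring]
      rw [hpsum, one_mul, pt_stationary hp hm]
    rw [h1]
    calc |∑ y, p y * (Pt p f t x - Pt p f t y)| ≤ ∑ y, |p y * (Pt p f t x - Pt p f t y)| :=
          Finset.abs_sum_le_sum_abs _ _
      _ ≤ ∑ y, p y * ((1 - (1 - logCoefficient p) / m) ^ t * ∑ k, lam k) := by
          apply Finset.sum_le_sum
          intro y _
          rw [abs_mul, abs_of_pos (hp y)]
          exact mul_le_mul_of_nonneg_left (pt_pair_bound hp hm hlam hf t x y) (le_of_lt (hp y))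
      _ = (1 - (1 - logCoefficient p) / m) ^ t * ∑ k, lam k := by
          rw [← Finset.sum_mul, hpsum, one_mul]
  have htend : Filter.Tendsto (fun t : ℕ => Pt p f t x - ∑ z, p z * f z)
      Filter.atTop (𝓝 0) := by
    have key' : ∀ t, ‖Pt p f t x - ∑ z, p z * f z‖ ≤
        (1 - (1 - logCoefficient p) / m) ^ t * ∑ k, lam k := by
      intro t
      rw [Real.norm_eq_abs]
      exact key t
    refine squeeze_zero_norm key' ?_
    have htend2 := (tendsto_pow_atTop_nhds_zero_of_lt_one (rho_nonneg hp hm)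
      (by linarith [rho_lt_one (p := p) hm hα])).mul_const (∑ k, lam k)
    simpa using htend2
  have := htend.add_const (∑ z, p z * f z)
  simpa using this

include hp hm hlam hf hα in
lemma pt_summable (x y : Fin m → Z) :
    Summable (fun t => Pt p f t x - Pt p f t y) := by
  apply Summable.of_norm_bounded (g :=
    (fun t => (1 - (1 - logCoefficient p) / m) ^ t * ∑ k, lam k))
  · exact (summable_geometric_of_lt_one (rho_nonneg hp hm)
      (rho_lt_one (p := p) hm hα)).mul_right _
  · intro t
    rw [Real.norm_eq_abs]
    exact pt_pair_bound hp hm hlam hf t x y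

include hp hm hlam hα in
lemma dseq_summable (i : Fin m) : Summable (fun t => dseq p lam t i) := by
  apply Summable.of_nonneg_of_le (fun t => dseq_nonneg hp hm hlam t i)
    (fun t => ?_) ((summable_geometric_of_lt_one (rho_nonneg hp hm)
      (rho_lt_one (p := p) hm hα)).mul_right (∑ k, lam k))
  calc dseq p lam t i ≤ ∑ k, dseq p lam t k :=
        Finset.single_le_sum (fun k _ => dseq_nonneg hp hm hlam t k) (Finset.mem_univ i)
    _ ≤ _ := dseq_l1 hp hm hlam t

variable (p) in
/-- the potential-theoretic coupling function -/
def Ff (f : (Fin m → Z) → ℝ) (x y : Fin m → Z) : ℝ := ∑' t, (Pt p f t x - Pt p f t y)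

variable (p) in
/-- total accumulated influence vector -/
def hvec (lam : Fin m → ℝ) (i : Fin m) : ℝ := ∑' t, dseq p lam t i

include hp hm hlam hf hα in
lemma Ff_single_bound (x : Fin m → Z) (i : Fin m) (a : Z) :
    |Ff p f x (Function.update x i a)| ≤ hvec p lam i := by
  have hsumm : Summable (fun t => ‖Pt p f t x - Pt p f t (Function.update x i a)‖) := by
    apply Summable.of_nonneg_of_le (fun t => norm_nonneg _) (fun t => ?_)
      (dseq_summable hp hm hlam hα i)
    rw [Real.norm_eq_abs, abs_sub_comm]
    exact slip_iter hp hm hlam hf t x i a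
  calc |Ff p f x (Function.update x i a)|
      ≤ ∑' t, ‖Pt p f t x - Pt p f t (Function.update x i a)‖ := by
        rw [← Real.norm_eq_abs]
        exact norm_tsum_le_tsum_norm hsumm
    _ ≤ ∑' t, dseq p lam t i := by
        apply Summable.tsum_le_tsum _ hsumm (dseq_summable hp hm hlam hα i)
        intro t
        rw [Real.norm_eq_abs, abs_sub_comm]
        exact slip_iter hp hm hlam hf t x i a
    _ = hvec p lam i := rfl

include hp hm hlam hf hα in
lemma Ff_antisymm (x y : Fin m → Z) : Ff p f x y = - Ff p f y x := by
  unfold Ff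
  rw [← tsum_neg]
  apply tsum_congr
  intro t
  ring

include hp hm hlam hα in
lemma lam_dot_hvec :
    ∑ i, lam i * hvec p lam i ≤ (m * ∑ k, (lam k) ^ 2) / (1 - logCoefficient p) := by
  have hρ1 := rho_lt_one (p := p) hm hα
  have hρ0 := rho_nonneg (p := p) hp hm
  have hα1 : (0:ℝ) < 1 - logCoefficient p := by linarith
  have hmR : (0:ℝ) < (m:ℝ) := Nat.cast_pos.mpr hm
  have hs : ∀ i, Summable (fun t => lam i * dseq p lam t i) :=
    fun i => (dseq_summable hp hm hlam hα i).mul_left (lam i)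
  have hswap : ∑ i, lam i * hvec p lam i = ∑' t, ∑ i, lam i * dseq p lam t i := by
    rw [Summable.tsum_finsetSum (fun i _ => hs i)]
    apply Finset.sum_congr rfl
    intro i _
    unfold hvec
    rw [tsum_mul_left]
  rw [hswap]
  have hsum1 : Summable (fun t => ∑ i, lam i * dseq p lam t i) :=
    summable_sum (fun i _ => hs i)
  have hsum2 : Summable (fun t : ℕ => (1 - (1 - logCoefficient p) / m) ^ t * ∑ k, (lam k) ^ 2) :=
    (summable_geometric_of_lt_one hρ0 hρ1).mul_right _
  calc ∑' t, ∑ i, lam i * dseq p lam t i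
      ≤ ∑' t : ℕ, (1 - (1 - logCoefficient p) / m) ^ t * ∑ k, (lam k) ^ 2 :=
        Summable.tsum_le_tsum (fun t => lam_dot_dseq hp hm hlam t) hsum1 hsum2
    _ = (1 - (1 - (1 - logCoefficient p) / m))⁻¹ * ∑ k, (lam k) ^ 2 := by
        rw [tsum_mul_right, tsum_geometric_of_lt_one hρ0 hρ1]
    _ = (m * ∑ k, (lam k) ^ 2) / (1 - logCoefficient p) := by
        rw [show 1 - (1 - (1 - logCoefficient p) / m) = (1 - logCoefficient p) / m by ring]
        rw [inv_div]
        field_simp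

/-- telescoping sum -/
lemma tsum_telescope' {u : ℕ → ℝ} (h : Summable (fun t => u t - u (t + 1))) {L : ℝ}
    (hL : Filter.Tendsto u Filter.atTop (𝓝 L)) : ∑' t, (u t - u (t + 1)) = u 0 - L := by
  have hpart : (fun n => ∑ t ∈ Finset.range n, (u t - u (t + 1))) = fun n => u 0 - u n := by
    funext n
    exact Finset.sum_range_sub' u n
  have h1 := h.hasSum.tendsto_sum_nat
  rw [hpart] at h1
  have h2 : Filter.Tendsto (fun n => u 0 - u n) Filter.atTop (𝓝 (u 0 - L)) :=
    tendsto_const_nhds.sub hL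
  exact tendsto_nhds_unique h1 h2

end Limits

section Correlation

variable {lam : Fin m → ℝ} {f : (Fin m → Z) → ℝ}
variable (hp : ∀ z, 0 < p z) (hm : 0 < m) (hlam : ∀ i, 0 ≤ lam i) (hf : SLip f lam)
  (hα : logCoefficient p < 1) (hpsum : ∑ z, p z = 1)

lemma exp_diff_le (u v : ℝ) :
    |Real.exp u - Real.exp v| ≤ |u - v| * (Real.exp u + Real.exp v) := by
  have key : ∀ w z : ℝ, z ≤ w →
      Real.exp w - Real.exp z ≤ (w - z) * (Real.exp w + Real.exp z) := by
    intro w z hzw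
    have h1 : 1 - (w - z) ≤ Real.exp (-(w - z)) := by
      have := Real.add_one_le_exp (-(w - z))
      linarith
    have h2 : Real.exp w * (1 - (w - z)) ≤ Real.exp w * Real.exp (-(w - z)) :=
      mul_le_mul_of_nonneg_left h1 (le_of_lt (Real.exp_pos w))
    rw [← Real.exp_add] at h2
    rw [show w + -(w - z) = z by ring] at h2
    nlinarith [Real.exp_pos w, Real.exp_pos z]
  rcases le_total v u with h | h
  · rw [abs_of_nonneg (by linarith [Real.exp_le_exp.mpr h] : (0:ℝ) ≤ Real.exp u - Real.exp v),
      abs_of_nonneg (by linarith : (0:ℝ) ≤ u - v)]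
    exact key u v h
  · rw [abs_of_nonpos (by linarith [Real.exp_le_exp.mpr h] : Real.exp u - Real.exp v ≤ 0),
      abs_of_nonpos (by linarith : u - v ≤ 0)]
    have := key v u h
    nlinarith
  
include hp hm hlam hf hα hpsum in
/-- the key identity: the conditional expectation of `Ff` recovers the centered function -/
lemma gid (x : Fin m → Z) :
    ∑ i, ∑ a, cnd p i x a * Ff p f x (Function.update x i a) =
      m * (f x - ∑ z, p z * f z) := by
  have hmne : (m:ℝ) ≠ 0 := (Nat.cast_pos.mpr hm).ne'
  set u : ℕ → ℝ := fun t => Pt p f t x with hu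
  -- rewrite each term as a tsum
  have step1 : ∀ (i : Fin m) (a : Z), cnd p i x a * Ff p f x (Function.update x i a) =
      ∑' t, cnd p i x a * (Pt p f t x - Pt p f t (Function.update x i a)) := by
    intro i a
    unfold Ff
    rw [tsum_mul_left]
  have hsummand : ∀ (i : Fin m) (a : Z), Summable
      (fun t => cnd p i x a * (Pt p f t x - Pt p f t (Function.update x i a))) :=
    fun i a => (pt_summable hp hm hlam hf hα x _).mul_left _
  have step2 : ∑ i, ∑ a, cnd p i x a * Ff p f x (Function.update x i a) =
      ∑' t, ∑ i, ∑ a, cnd p i x a * (Pt p f t x - Pt p f t (Function.update x i a)) := by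
    rw [Finset.sum_congr rfl (fun i _ => Finset.sum_congr rfl (fun a _ => step1 i a))]
    rw [Finset.sum_congr rfl (fun i _ => (Summable.tsum_finsetSum (fun a _ => hsummand i a)).symm)]
    rw [← Summable.tsum_finsetSum (fun i (_ : i ∈ Finset.univ) => summable_sum (fun a _ => hsummand i a))]
  have inner : ∀ t, ∑ i, ∑ a, cnd p i x a * (Pt p f t x - Pt p f t (Function.update x i a)) =
      m * (u t - u (t + 1)) := by
    intro t
    have e1 : ∑ i, ∑ a, cnd p i x a * (Pt p f t x - Pt p f t (Function.update x i a)) =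
        (∑ i, (∑ a, cnd p i x a) * Pt p f t x) -
        ∑ i, ∑ a, cnd p i x a * Pt p f t (Function.update x i a) := by
      rw [← Finset.sum_sub_distrib]
      apply Finset.sum_congr rfl
      intro i _
      rw [Finset.sum_mul, ← Finset.sum_sub_distrib]
      apply Finset.sum_congr rfl
      intros ; ring
    rw [e1]
    rw [Finset.sum_congr rfl (fun i (_ : i ∈ Finset.univ) => by rw [cnd_sum hp i x, one_mul])]
    rw [Finset.sum_const, Finset.card_univ, Fintype.card_fin, nsmul_eq_mul]
    have e2 : ∑ i, ∑ a, cnd p i x a * Pt p f t (Function.update x i a) = m * u (t + 1) := by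
      rw [hu]
      simp only
      rw [Pt_succ]
      unfold Pg
      rw [mul_div_cancel₀ _ hmne]
    rw [e2, hu]
    ring
  rw [step2, tsum_congr inner, tsum_mul_left]
  have hsummable : Summable (fun t => u t - u (t + 1)) := by
    have h1 : Summable (fun t => ∑ i, ∑ a : Z,
        cnd p i x a * (Pt p f t x - Pt p f t (Function.update x i a))) :=
      summable_sum (fun i _ => summable_sum (fun a _ => hsummand i a))
    have h2 := h1.mul_left ((m:ℝ)⁻¹)
    have : (fun t => ((m:ℝ)⁻¹ * ∑ i, ∑ a : Z,
        cnd p i x a * (Pt p f t x - Pt p f t (Function.update x i a)))) =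
        fun t => u t - u (t + 1) := by
      funext t
      rw [inner t, ← mul_assoc, inv_mul_cancel₀ hmne, one_mul]
    rwa [this] at h2
  rw [tsum_telescope' hsummable (pt_tendsto hp hm hlam hf hα hpsum x)]
  rfl

include hp hm hlam hf hα hpsum in
/-- Chatterjee-style correlation inequality -/
lemma correlation {θ : ℝ} (hθ : 0 ≤ θ) :
    ∑ x, p x * ((f x - ∑ z, p z * f z) * Real.exp (θ * f x)) ≤
      θ * ((∑ k, (lam k) ^ 2) / (1 - logCoefficient p)) *
        ∑ x, p x * Real.exp (θ * f x) := by
  have hmne : (m:ℝ) ≠ 0 := (Nat.cast_pos.mpr hm).ne'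
  have hmR : (0:ℝ) < (m:ℝ) := Nat.cast_pos.mpr hm
  set Ef : ℝ := ∑ z, p z * f z with hEf
  set E : ℝ := ∑ x, p x * Real.exp (θ * f x) with hE
  have hE0 : 0 ≤ E := Finset.sum_nonneg
    (fun x _ => mul_nonneg (le_of_lt (hp x)) (le_of_lt (Real.exp_pos _)))
  have hvec0 : ∀ i, 0 ≤ hvec p lam i :=
    fun i => tsum_nonneg (fun t => dseq_nonneg hp hm hlam t i)
  set Si : Fin m → ℝ := fun i => ∑ x, ∑ a, p x * cnd p i x a *
    (Ff p f x (Function.update x i a) * Real.exp (θ * f x)) with hSi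
  -- Step A : rewrite the sum as an average of the Si
  have stepA : ∑ x, p x * ((f x - Ef) * Real.exp (θ * f x)) = (∑ i, Si i) / m := by
    have hTx : ∀ x, p x * ((f x - Ef) * Real.exp (θ * f x)) =
        (∑ i, ∑ a, p x * cnd p i x a *
          (Ff p f x (Function.update x i a) * Real.exp (θ * f x))) / m := by
      intro x
      have hg := gid hp hm hlam hf hα hpsum x
      have expand : ∑ i, ∑ a, p x * cnd p i x a *
          (Ff p f x (Function.update x i a) * Real.exp (θ * f x)) =
          (p x * Real.exp (θ * f x)) *
            ∑ i, ∑ a, cnd p i x a * Ff p f x (Function.update x i a) := by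
        rw [Finset.mul_sum]
        apply Finset.sum_congr rfl
        intro i _
        rw [Finset.mul_sum]
        apply Finset.sum_congr rfl
        intros ; ring
      rw [expand, hg, ← hEf]
      field_simp
    rw [Finset.sum_congr rfl (fun x _ => hTx x), ← Finset.sum_div]
    congr 1
    rw [Finset.sum_comm]
  -- Step B : bound each Si
  have stepB : ∀ i, Si i ≤ θ * lam i * hvec p lam i * E := by
    intro i
    have hsym := glauber_symm (p := p) hp i
      (fun x y => Ff p f x y * Real.exp (θ * f x))
    have hSi2 : Si i = -∑ x, ∑ a, p x * cnd p i x a *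
        (Ff p f x (Function.update x i a) * Real.exp (θ * f (Function.update x i a))) := by
      rw [hSi]
      simp only
      rw [hsym, ← Finset.sum_neg_distrib]
      apply Finset.sum_congr rfl
      intro x _
      rw [← Finset.sum_neg_distrib]
      apply Finset.sum_congr rfl
      intro a _
      rw [Ff_antisymm hp hm hlam hf hα (Function.update x i a) x]
      ring
    have hsplit : ∑ x, ∑ a, p x * cnd p i x a * (Ff p f x (Function.update x i a) *
        (Real.exp (θ * f x) - Real.exp (θ * f (Function.update x i a)))) = Si i + Si i := by
      nth_rewrite 2 [hSi2]
      rw [hSi]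
      simp only
      rw [← sub_eq_add_neg, ← Finset.sum_sub_distrib]
      apply Finset.sum_congr rfl
      intro x _
      rw [← Finset.sum_sub_distrib]
      apply Finset.sum_congr rfl
      intro a _
      ring
    -- pointwise bound
    have hpoint : ∀ (x : Fin m → Z) (a : Z),
        p x * cnd p i x a * (Ff p f x (Function.update x i a) *
          (Real.exp (θ * f x) - Real.exp (θ * f (Function.update x i a)))) ≤
        p x * cnd p i x a * (hvec p lam i * (θ * lam i *
          (Real.exp (θ * f x) + Real.exp (θ * f (Function.update x i a))))) := by
      intro x a
      apply mul_le_mul_of_nonneg_left _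
        (mul_nonneg (le_of_lt (hp x)) (le_of_lt (cnd_pos hp i x a)))
      calc Ff p f x (Function.update x i a) *
            (Real.exp (θ * f x) - Real.exp (θ * f (Function.update x i a)))
          ≤ |Ff p f x (Function.update x i a) *
            (Real.exp (θ * f x) - Real.exp (θ * f (Function.update x i a)))| := le_abs_self _
        _ = |Ff p f x (Function.update x i a)| *
            |Real.exp (θ * f x) - Real.exp (θ * f (Function.update x i a))| := abs_mul _ _
        _ ≤ hvec p lam i * (θ * lam i *
            (Real.exp (θ * f x) + Real.exp (θ * f (Function.update x i a)))) := by
            apply mul_le_mul (Ff_single_bound hp hm hlam hf hα x i a) _ (abs_nonneg _) (hvec0 i)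
            calc |Real.exp (θ * f x) - Real.exp (θ * f (Function.update x i a))|
                ≤ |θ * f x - θ * f (Function.update x i a)| *
                  (Real.exp (θ * f x) + Real.exp (θ * f (Function.update x i a))) :=
                  exp_diff_le _ _
              _ ≤ θ * lam i *
                  (Real.exp (θ * f x) + Real.exp (θ * f (Function.update x i a))) := by
                  apply mul_le_mul_of_nonneg_right _ (by positivity)
                  rw [show θ * f x - θ * f (Function.update x i a) =
                    θ * (f x - f (Function.update x i a)) by ring, abs_mul,
                    abs_of_nonneg hθ]
                  apply mul_le_mul_of_nonneg_left _ hθ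
                  rw [abs_sub_comm]
                  exact hf x i a
    -- sum of the exponential weights
    have hws : ∑ x, ∑ a, p x * cnd p i x a * Real.exp (θ * f x) = E := by
      rw [hE]
      apply Finset.sum_congr rfl
      intro x _
      rw [show ∑ a, p x * cnd p i x a * Real.exp (θ * f x) =
        (∑ a, cnd p i x a) * (p x * Real.exp (θ * f x)) by
          rw [Finset.sum_mul]; apply Finset.sum_congr rfl; intros; ring]
      rw [cnd_sum hp, one_mul]
    have hws2 : ∑ x, ∑ a, p x * cnd p i x a *
        Real.exp (θ * f (Function.update x i a)) = E := by
      have := glauber_symm (p := p) hp i (fun _ y => Real.exp (θ * f y))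
      rw [this]
      exact hws
    have hsum_bound : Si i + Si i ≤ θ * lam i * hvec p lam i * (E + E) := by
      rw [← hsplit]
      calc ∑ x, ∑ a, p x * cnd p i x a * (Ff p f x (Function.update x i a) *
            (Real.exp (θ * f x) - Real.exp (θ * f (Function.update x i a))))
          ≤ ∑ x, ∑ a, p x * cnd p i x a * (hvec p lam i * (θ * lam i *
            (Real.exp (θ * f x) + Real.exp (θ * f (Function.update x i a))))) :=
            Finset.sum_le_sum (fun x _ => Finset.sum_le_sum (fun a _ => hpoint x a))
        _ = θ * lam i * hvec p lam i * (∑ x, ∑ a, p x * cnd p i x a * Real.exp (θ * f x)) +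
            θ * lam i * hvec p lam i *
              (∑ x, ∑ a, p x * cnd p i x a * Real.exp (θ * f (Function.update x i a))) := by
            rw [Finset.mul_sum, Finset.mul_sum, ← Finset.sum_add_distrib]
            apply Finset.sum_congr rfl
            intro x _
            rw [Finset.mul_sum, Finset.mul_sum, ← Finset.sum_add_distrib]
            apply Finset.sum_congr rfl
            intro a _
            ring
        _ = θ * lam i * hvec p lam i * (E + E) := by rw [hws, hws2]; ring
    linarith
  -- Step C : conclude
  rw [stepA]
  have hC : ∑ i, Si i ≤ θ * (∑ i, lam i * hvec p lam i) * E := by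
    calc ∑ i, Si i ≤ ∑ i, θ * lam i * hvec p lam i * E :=
          Finset.sum_le_sum (fun i _ => stepB i)
      _ = θ * (∑ i, lam i * hvec p lam i) * E := by
          rw [Finset.sum_congr rfl (fun i (_ : i ∈ Finset.univ) =>
            show θ * lam i * hvec p lam i * E = θ * (lam i * hvec p lam i) * E from by ring)]
          rw [← Finset.sum_mul, ← Finset.mul_sum]
  have hdot := lam_dot_hvec hp hm hlam hα
  have hα1 : (0:ℝ) < 1 - logCoefficient p := by linarith
  calc (∑ i, Si i) / m ≤ (θ * (∑ i, lam i * hvec p lam i) * E) / m :=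
        (div_le_div_iff_of_pos_right hmR).mpr hC
    _ ≤ (θ * ((m * ∑ k, (lam k) ^ 2) / (1 - logCoefficient p)) * E) / m := by
        apply (div_le_div_iff_of_pos_right hmR).mpr
        apply mul_le_mul_of_nonneg_right _ hE0
        exact mul_le_mul_of_nonneg_left hdot hθ
    _ = θ * ((∑ k, (lam k) ^ 2) / (1 - logCoefficient p)) * E := by
        field_simp

end Correlation

section Herbst

variable {lam : Fin m → ℝ} {f : (Fin m → Z) → ℝ}
variable (hp : ∀ z, 0 < p z) (hm : 0 < m) (hlam : ∀ i, 0 ≤ lam i) (hf : SLip f lam)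
  (hα : logCoefficient p < 1) (hpsum : ∑ z, p z = 1)

include hp hm hlam hf hα hpsum in
/-- sub-Gaussian moment generating function bound via the Herbst argument -/
lemma mgf_bound {θ : ℝ} (hθ : 0 ≤ θ) :
    ∑ x, p x * Real.exp (θ * (f x - ∑ z, p z * f z)) ≤
      Real.exp ((∑ k, (lam k) ^ 2) / (1 - logCoefficient p) * θ ^ 2 / 2) := by
  have hα1 : (0:ℝ) < 1 - logCoefficient p := by linarith
  set C : ℝ := (∑ k, (lam k) ^ 2) / (1 - logCoefficient p) with hC
  have hC0 : 0 ≤ C := div_nonneg (Finset.sum_nonneg fun k _ => sq_nonneg _) (le_of_lt hα1)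
  set Ef : ℝ := ∑ z, p z * f z with hEf
  set mf : ℝ → ℝ := fun s => ∑ x, p x * Real.exp (s * (f x - Ef)) with hmf
  have hmf_pos : ∀ s, 0 < mf s := fun s =>
    Finset.sum_pos (fun x _ => mul_pos (hp x) (Real.exp_pos _)) Finset.univ_nonempty
  have hmf_deriv : ∀ s, HasDerivAt mf (∑ x, p x * ((f x - Ef) * Real.exp (s * (f x - Ef)))) s := by
    intro s
    have : ∀ x : Fin m → Z,
        HasDerivAt (fun s => p x * Real.exp (s * (f x - Ef)))
          (p x * ((f x - Ef) * Real.exp (s * (f x - Ef)))) s := by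
      intro x
      have h1 : HasDerivAt (fun s : ℝ => s * (f x - Ef)) (f x - Ef) s := by
        simpa using (hasDerivAt_id s).mul_const (f x - Ef)
      have h2 := h1.exp
      have h3 := h2.const_mul (p x)
      refine h3.congr_deriv ?_
      ring
    exact HasDerivAt.fun_sum (fun x _ => this x)
  -- derivative bound from the correlation inequality
  have hderiv_le : ∀ s, 0 ≤ s →
      ∑ x, p x * ((f x - Ef) * Real.exp (s * (f x - Ef))) ≤ s * C * mf s := by
    intro s hs
    have hcorr := correlation hp hm hlam hf hα hpsum (θ := s) hs
    have hexp : ∀ x, Real.exp (s * (f x - Ef)) = Real.exp (s * f x) * Real.exp (-(s * Ef)) := by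
      intro x
      rw [← Real.exp_add]
      congr 1
      ring
    have e1 : ∑ x, p x * ((f x - Ef) * Real.exp (s * (f x - Ef))) =
        (∑ x, p x * ((f x - Ef) * Real.exp (s * f x))) * Real.exp (-(s * Ef)) := by
      rw [Finset.sum_mul]
      apply Finset.sum_congr rfl
      intro x _
      rw [hexp x]
      ring
    have e2 : mf s = (∑ x, p x * Real.exp (s * f x)) * Real.exp (-(s * Ef)) := by
      rw [hmf]
      simp only
      rw [Finset.sum_mul]
      apply Finset.sum_congr rfl
      intro x _
      rw [hexp x]
      ring
    rw [e1, e2]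
    have hkey : ∑ x, p x * ((f x - Ef) * Real.exp (s * f x)) ≤
        s * C * ∑ x, p x * Real.exp (s * f x) := by
      have hthis := hcorr
      rw [← hEf, ← hC] at hthis
      have h' : s * (C * ∑ x, p x * Real.exp (s * f x)) =
          s * C * ∑ x, p x * Real.exp (s * f x) := by ring
      linarith [hthis]
    have hfin := mul_le_mul_of_nonneg_right hkey (le_of_lt (Real.exp_pos (-(s * Ef))))
    have h2 : (s * C * ∑ x, p x * Real.exp (s * f x)) * Real.exp (-(s * Ef)) =
        s * C * ((∑ x, p x * Real.exp (s * f x)) * Real.exp (-(s * Ef))) := by ring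
    linarith [hfin, h2.le]
  -- the Herbst function
  set φ := (fun s : ℝ => Real.log (mf s) - C * s ^ 2 / 2) with hφ
  have hφ_deriv : ∀ s, HasDerivAt φ
      ((∑ x, p x * ((f x - Ef) * Real.exp (s * (f x - Ef)))) / mf s - C * s) s := by
    intro s
    have h1 := (hmf_deriv s).log (ne_of_gt (hmf_pos s))
    have h2 : HasDerivAt (fun s : ℝ => C * s ^ 2 / 2) (C * s) s := by
      have := ((hasDerivAt_pow 2 s).const_mul C).div_const 2
      refine this.congr_deriv ?_
      ring
    exact h1.sub h2
  have hφ_anti : AntitoneOn φ (Set.Ici 0) := by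
    apply antitoneOn_of_deriv_nonpos (convex_Ici 0)
    · exact fun s _ => ((hφ_deriv s).continuousAt).continuousWithinAt
    · exact fun s _ => (hφ_deriv s).differentiableAt.differentiableWithinAt
    · intro s hs
      rw [interior_Ici] at hs
      rw [(hφ_deriv s).deriv]
      have hs0 : 0 ≤ s := le_of_lt hs
      have := hderiv_le s hs0
      rw [sub_nonpos, div_le_iff₀ (hmf_pos s)]
      calc ∑ x, p x * ((f x - Ef) * Real.exp (s * (f x - Ef))) ≤ s * C * mf s := this
        _ = C * s * mf s := by ring
  have hφ0 : φ 0 = 0 := by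
    rw [hφ]
    simp only
    have : mf 0 = 1 := by
      rw [hmf]
      simp only
      rw [Finset.sum_congr rfl (fun x (_ : x ∈ Finset.univ) => by
        rw [zero_mul, Real.exp_zero, mul_one])]
      exact hpsum
    rw [this, Real.log_one]
    ring
  have hfinal : φ θ ≤ 0 := by
    rw [← hφ0]
    exact hφ_anti (Set.mem_Ici.mpr le_rfl) (Set.mem_Ici.mpr hθ) hθ
  rw [hφ] at hfinal
  simp only at hfinal
  have : Real.log (mf θ) ≤ C * θ ^ 2 / 2 := by linarith
  calc mf θ = Real.exp (Real.log (mf θ)) := (Real.exp_log (hmf_pos θ)).symm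
    _ ≤ Real.exp (C * θ ^ 2 / 2) := Real.exp_le_exp.mpr this

end Herbst

section Final

variable {lam : Fin m → ℝ} {f : (Fin m → Z) → ℝ}
variable (hp : ∀ z, 0 < p z) (hm : 0 < m) (hlam : ∀ i, 0 ≤ lam i) (hf : SLip f lam)
  (hα : logCoefficient p < 1) (hpsum : ∑ z, p z = 1)

include hp hm hlam hf hα hpsum in
lemma chernoff_one_sided {t : ℝ} (ht : 0 < t) (hS : 0 < ∑ k, (lam k) ^ 2) :
    (∑ x, if t ≤ f x - ∑ z, p z * f z then p x else 0) ≤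
      Real.exp (-((1 - logCoefficient p) * t ^ 2) / (2 * ∑ k, (lam k) ^ 2)) := by
  have hα1 : (0:ℝ) < 1 - logCoefficient p := by linarith
  set S : ℝ := ∑ k, (lam k) ^ 2 with hSdef
  set C : ℝ := S / (1 - logCoefficient p) with hC
  have hC0 : 0 < C := div_pos hS hα1
  set θ : ℝ := t / C with hθdef
  have hθ0 : 0 ≤ θ := le_of_lt (div_pos ht hC0)
  set Ef : ℝ := ∑ z, p z * f z with hEf
  have step1 : (∑ x, if t ≤ f x - Ef then p x else 0) ≤
      ∑ x, p x * Real.exp (θ * (f x - Ef - t)) := by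
    apply Finset.sum_le_sum
    intro x _
    split
    · rename_i hx
      have h1 : 0 ≤ θ * (f x - Ef - t) := mul_nonneg hθ0 (by linarith)
      have h2 : 1 ≤ Real.exp (θ * (f x - Ef - t)) := Real.one_le_exp h1
      nlinarith [hp x]
    · exact mul_nonneg (le_of_lt (hp x)) (le_of_lt (Real.exp_pos _))
  have step2 : ∑ x, p x * Real.exp (θ * (f x - Ef - t)) =
      Real.exp (-(θ * t)) * ∑ x, p x * Real.exp (θ * (f x - Ef)) := by
    rw [Finset.mul_sum]
    apply Finset.sum_congr rfl
    intro x _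
    rw [show θ * (f x - Ef - t) = -(θ * t) + θ * (f x - Ef) by ring, Real.exp_add]
    ring
  have step3 := mgf_bound hp hm hlam hf hα hpsum hθ0
  rw [← hEf, ← hSdef, ← hC] at step3
  calc (∑ x, if t ≤ f x - Ef then p x else 0)
      ≤ Real.exp (-(θ * t)) * ∑ x, p x * Real.exp (θ * (f x - Ef)) := by
        rw [← step2]; exact step1
    _ ≤ Real.exp (-(θ * t)) * Real.exp (C * θ ^ 2 / 2) :=
        mul_le_mul_of_nonneg_left step3 (le_of_lt (Real.exp_pos _))
    _ = Real.exp (-(θ * t) + C * θ ^ 2 / 2) := (Real.exp_add _ _).symm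
    _ = Real.exp (-((1 - logCoefficient p) * t ^ 2) / (2 * S)) := by
        congr 1
        rw [hθdef, hC]
        field_simp
        ring

end Final

end MCD

/-- **McDiarmid-like inequality under the log-coefficient.**
If `g` has the bounded differences property with parameters `λ₁, …, λ_m > 0` and the
log-coefficient of the random vector `Z` (with strictly positive pmf `p`) is `< 1`, then for
every `t > 0`,
`Pr[|g(Z) − E[g(Z)]| ≥ t] ≤ 2 exp(−(1 − α_log(Z)) t² / (2 ∑ᵢ λᵢ²))`. -/
theorem mcdiarmid_like_log_coefficient
    {Z : Type*} [Fintype Z] [Nonempty Z] {m : ℕ} (hm : 2 ≤ m)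
    (p : (Fin m → Z) → ℝ) (hp : ∀ z, 0 < p z) (hpsum : ∑ z, p z = 1)
    (lam : Fin m → ℝ) (hlam : ∀ i, 0 < lam i)
    (g : (Fin m → Z) → ℝ)
    (hg : ∀ z z' : Fin m → Z, |g z - g z'| ≤ ∑ i, if z i ≠ z' i then lam i else 0)
    (hα : logCoefficient p < 1) :
    ∀ t : ℝ, 0 < t →
      (∑ z, if t ≤ |g z - ∑ z', p z' * g z'| then p z else 0) ≤
        2 * Real.exp (-((1 - logCoefficient p) * t ^ 2) / (2 * ∑ i, lam i ^ 2)) := by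
  intro t ht
  have hm0 : 0 < m := lt_of_lt_of_le (by norm_num) hm
  have hlam' : ∀ i, 0 ≤ lam i := fun i => le_of_lt (hlam i)
  have hfinne : Nonempty (Fin m) := ⟨⟨0, hm0⟩⟩
  have hS : 0 < ∑ k, (lam k) ^ 2 :=
    Finset.sum_pos (fun k _ => pow_pos (hlam k) 2) Finset.univ_nonempty
  -- single-site Lipschitz for g
  have hSg : MCD.SLip g lam := by
    intro x k b
    calc |g (Function.update x k b) - g x|
        ≤ ∑ i, if (Function.update x k b) i ≠ x i then lam i else 0 := hg _ x
      _ ≤ ∑ i, if i = k then lam k else 0 := by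
          apply Finset.sum_le_sum
          intro i _
          by_cases hik : i = k
          · rw [if_pos hik]
            split
            · subst hik; exact le_refl _
            · exact hlam' k
          · rw [if_neg hik, Function.update_of_ne hik]
            simp
      _ = lam k := by
          rw [Finset.sum_ite_eq' Finset.univ k (fun _ => lam k), if_pos (Finset.mem_univ k)]
  have hSng : MCD.SLip (fun x => -g x) lam := by
    intro x k b
    simp only
    rw [show -g (Function.update x k b) - -g x = -(g (Function.update x k b) - g x) by ring,
      abs_neg]
    exact hSg x k b
  set Eg : ℝ := ∑ z', p z' * g z' with hEg
  -- split the two-sided indicator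
  have hsplit : (∑ z, if t ≤ |g z - Eg| then p z else 0) ≤
      (∑ z, if t ≤ g z - Eg then p z else 0) +
      (∑ z, if t ≤ -(g z - Eg) then p z else 0) := by
    rw [← Finset.sum_add_distrib]
    apply Finset.sum_le_sum
    intro z _
    by_cases h : t ≤ |g z - Eg|
    · rw [if_pos h]
      rcases abs_cases (g z - Eg) with ⟨habs, _⟩ | ⟨habs, _⟩
      · rw [if_pos (by linarith [habs ▸ h] : t ≤ g z - Eg)]
        have : (0:ℝ) ≤ if t ≤ -(g z - Eg) then p z else 0 := by
          split
          · exact le_of_lt (hp z)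
          · exact le_refl 0
        linarith
      · rw [show (if t ≤ -(g z - Eg) then p z else 0) = p z from
          if_pos (by rw [habs] at h; linarith)]
        have : (0:ℝ) ≤ if t ≤ g z - Eg then p z else 0 := by
          split
          · exact le_of_lt (hp z)
          · exact le_refl 0
        linarith
    · rw [if_neg h]
      have h1 : (0:ℝ) ≤ if t ≤ g z - Eg then p z else 0 := by
        split
        · exact le_of_lt (hp z)
        · exact le_refl 0
      have h2 : (0:ℝ) ≤ if t ≤ -(g z - Eg) then p z else 0 := by
        split
        · exact le_of_lt (hp z)
        · exact le_refl 0
      linarith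
  -- upper tail
  have hA := MCD.chernoff_one_sided (p := p) hp hm0 hlam' hSg hα hpsum ht hS
  -- lower tail : apply to -g
  have hB := MCD.chernoff_one_sided (p := p) (f := fun x => -g x) hp hm0 hlam' hSng hα hpsum ht hS
  have hBconv : (∑ z, if t ≤ -(g z - Eg) then p z else 0) ≤
      Real.exp (-((1 - logCoefficient p) * t ^ 2) / (2 * ∑ k, (lam k) ^ 2)) := by
    have hnegsum : ∑ z, p z * -g z = -Eg := by
      rw [hEg, ← Finset.sum_neg_distrib]
      apply Finset.sum_congr rfl
      intros ; ring
    have : ∀ z : Fin m → Z, (fun x => -g x) z - ∑ z', p z' * (fun x => -g x) z' =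
        -(g z - Eg) := by
      intro z
      simp only
      rw [hnegsum]
      ring
    calc (∑ z, if t ≤ -(g z - Eg) then p z else 0)
        = ∑ z, if t ≤ (fun x => -g x) z - ∑ z', p z' * (fun x => -g x) z' then p z else 0 := by
          apply Finset.sum_congr rfl
          intro z _
          rw [this z]
      _ ≤ _ := hB
  calc (∑ z, if t ≤ |g z - Eg| then p z else 0)
      ≤ (∑ z, if t ≤ g z - Eg then p z else 0) +
        (∑ z, if t ≤ -(g z - Eg) then p z else 0) := hsplit
    _ ≤ Real.exp (-((1 - logCoefficient p) * t ^ 2) / (2 * ∑ i, lam i ^ 2)) +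
        Real.exp (-((1 - logCoefficient p) * t ^ 2) / (2 * ∑ i, lam i ^ 2)) :=
        add_le_add hA hBconv
    _ = 2 * Real.exp (-((1 - logCoefficient p) * t ^ 2) / (2 * ∑ i, lam i ^ 2)) := by ring
end
end

section
/- There exists a universal constant C' > 0 such that the following holds. Let 𝒵 be a nonempty finite set, m ≥ 2, and let Z be a random vector on 𝒵^m whose probability mass function is strictly positive on 𝒵^m and whose log-coefficient satisfies α_log(Z) < 1. Let 𝒢 be a nonempty countable class of functions 𝒵 → ℝ and L > 0 be such that |g(z)| ≤ L for every g ∈ 𝒢 and z ∈ 𝒵, and define M(S) = sup_{g∈𝒢} ( (1/m) Σ_{i=1}^m g(s_i) − E_{S'∼Z}[ (1/m) Σ_{i=1}^m g(s'_i) ] ). Then for every t > 0, Pr_{S∼Z}[ M(S) − E_{S∼Z}[M(S)] ≥ t ] ≤ exp( −(1 − α_log(Z)) · m · t² / (C' · L²) ). -/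
open Classical
noncomputable section

set_option linter.unusedSectionVars false
set_option linter.unusedVariables false

namespace DobAux



lemma sinh_le_mul_cosh {x : ℝ} (hx : 0 ≤ x) : Real.sinh x ≤ x * Real.cosh x := by
  have h : MonotoneOn (fun y : ℝ => y * Real.cosh y - Real.sinh y) (Set.Ici 0) := by
    apply monotoneOn_of_deriv_nonneg (convex_Ici 0)
    · fun_prop
    · apply Differentiable.differentiableOn; fun_prop
    · intro y hy
      rw [interior_Ici] at hy
      have h1 : HasDerivAt (fun y : ℝ => y * Real.cosh y - Real.sinh y)
          (1 * Real.cosh y + y * Real.sinh y - Real.cosh y) y :=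
        ((hasDerivAt_id y).mul (Real.hasDerivAt_cosh y)).sub (Real.hasDerivAt_sinh y)
      rw [h1.deriv]
      have hs : 0 ≤ Real.sinh y := by
        have := Real.sinh_le_sinh.2 hy.le
        simpa using this
      nlinarith [mul_nonneg (le_of_lt (Set.mem_Ioi.1 hy)) hs]
  have := h (Set.self_mem_Ici) (Set.mem_Ici.2 hx) hx
  simp at this
  linarith

lemma exp_sub_exp_le {a b : ℝ} (h : b ≤ a) :
    Real.exp a - Real.exp b ≤ (a - b) * (Real.exp a + Real.exp b) / 2 := by
  have ea : Real.exp a = Real.exp ((a + b) / 2) * Real.exp ((a - b) / 2) := by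
    rw [← Real.exp_add]; ring_nf
  have eb : Real.exp b = Real.exp ((a + b) / 2) * Real.exp (-((a - b) / 2)) := by
    rw [← Real.exp_add]; ring_nf
  have e1 : Real.exp a - Real.exp b
      = 2 * Real.exp ((a + b) / 2) * Real.sinh ((a - b) / 2) := by
    rw [Real.sinh_eq, ea, eb]; ring
  have e2 : Real.exp a + Real.exp b
      = 2 * Real.exp ((a + b) / 2) * Real.cosh ((a - b) / 2) := by
    rw [Real.cosh_eq, ea, eb]; ring
  have hs := sinh_le_mul_cosh (x := (a - b) / 2) (by linarith)
  rw [e1, e2]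
  have hE : (0:ℝ) < Real.exp ((a + b) / 2) := Real.exp_pos _
  calc 2 * Real.exp ((a + b) / 2) * Real.sinh ((a - b) / 2)
      ≤ 2 * Real.exp ((a + b) / 2) * ((a - b)/2 * Real.cosh ((a - b)/2)) := by
        apply mul_le_mul_of_nonneg_left hs; positivity
    _ = (a - b) * (2 * Real.exp ((a + b) / 2) * Real.cosh ((a - b) / 2)) / 2 := by ring

/-- `|e^a - e^b| ≤ |a - b| (e^a + e^b)/2`. -/
lemma abs_exp_sub_exp_le (a b : ℝ) :
    |Real.exp a - Real.exp b| ≤ |a - b| * (Real.exp a + Real.exp b) / 2 := by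
  rcases le_total b a with h | h
  · rw [abs_of_nonneg (sub_nonneg.2 (Real.exp_le_exp.2 h)), abs_of_nonneg (sub_nonneg.2 h)]
    exact exp_sub_exp_le h
  · rw [abs_sub_comm, abs_sub_comm a b,
      abs_of_nonneg (sub_nonneg.2 (Real.exp_le_exp.2 h)), abs_of_nonneg (sub_nonneg.2 h)]
    calc Real.exp b - Real.exp a ≤ (b - a) * (Real.exp b + Real.exp a) / 2 := exp_sub_exp_le h
      _ = (b - a) * (Real.exp a + Real.exp b) / 2 := by ring

/-- Padé-type bound: `2(u-1)/(u+1) ≤ log u` for `u ≥ 1`. -/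
lemma pade_log {u : ℝ} (hu : 1 ≤ u) : 2 * (u - 1) / (u + 1) ≤ Real.log u := by
  have h : MonotoneOn (fun y : ℝ => Real.log y - 2 * (y - 1) / (y + 1)) (Set.Ici 1) := by
    apply monotoneOn_of_deriv_nonneg (convex_Ici 1)
    · apply ContinuousOn.sub
      · exact Real.continuousOn_log.mono (by intro y hy; simp at hy ⊢; linarith)
      · apply ContinuousOn.div
        · fun_prop
        · fun_prop
        · intro y hy; simp at hy; intro hc; linarith
    · intro y hy
      rw [interior_Ici] at hy
      simp only [Set.mem_Ioi] at hy
      have hd : HasDerivAt (fun y : ℝ => Real.log y - 2 * (y - 1) / (y + 1))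
          (1 / y - (2 * (y + 1) - 2 * (y - 1) * 1) / (y + 1) ^ 2) y := by
        have h1 : HasDerivAt Real.log (1 / y) y := by
          simpa [one_div] using Real.hasDerivAt_log (by linarith)
        have h2 : HasDerivAt (fun y : ℝ => 2 * (y - 1)) 2 y := by
          simpa using ((hasDerivAt_id y).sub_const 1).const_mul 2
        have h3 : HasDerivAt (fun y : ℝ => y + 1) 1 y := (hasDerivAt_id y).add_const 1
        exact (h1.sub ((h2.div h3 (by linarith)).congr_deriv (by ring)))
      exact (hd.differentiableAt).differentiableWithinAt
    · intro y hy
      rw [interior_Ici] at hy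
      simp only [Set.mem_Ioi] at hy
      have hd : HasDerivAt (fun y : ℝ => Real.log y - 2 * (y - 1) / (y + 1))
          (1 / y - (2 * (y + 1) - 2 * (y - 1) * 1) / (y + 1) ^ 2) y := by
        have h1 : HasDerivAt Real.log (1 / y) y := by
          simpa [one_div] using Real.hasDerivAt_log (by linarith)
        have h2 : HasDerivAt (fun y : ℝ => 2 * (y - 1)) 2 y := by
          simpa using ((hasDerivAt_id y).sub_const 1).const_mul 2
        have h3 : HasDerivAt (fun y : ℝ => y + 1) 1 y := (hasDerivAt_id y).add_const 1
        exact (h1.sub ((h2.div h3 (by linarith)).congr_deriv (by ring)))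
      rw [hd.deriv]
      rw [sub_nonneg, div_le_div_iff₀ (by positivity) (by linarith)]
      nlinarith [sq_nonneg (y - 1)]
  have := h (Set.self_mem_Ici) (Set.mem_Ici.2 hu) hu
  simp at this
  linarith


lemma key_alg {i0 s : ℝ} (h0 : 0 < i0) (hi : i0 ≤ 1) (hs : 1 ≤ s) (hlt : i0 < s) :
    (s - 1) * (1 - i0) / (s - i0) ≤ Real.log (s / i0) / 4 := by
  set x := Real.sqrt s with hx
  set y := Real.sqrt i0 with hy
  have hy0 : 0 < y := Real.sqrt_pos.2 h0
  have hx1 : 1 ≤ x := by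
    rw [hx, show (1:ℝ) = Real.sqrt 1 by simp]
    exact Real.sqrt_le_sqrt hs
  have hy1 : y ≤ 1 := by
    rw [hy, show (1:ℝ) = Real.sqrt 1 by simp]
    exact Real.sqrt_le_sqrt hi
  have hyx : y < x := by
    rw [hx, hy]
    exact Real.sqrt_lt_sqrt h0.le hlt
  have hsx : s = x ^ 2 := by rw [hx, Real.sq_sqrt (by linarith)]
  have hiy : i0 = y ^ 2 := by rw [hy, Real.sq_sqrt h0.le]
  have step1 : (s - 1) * (1 - i0) / (s - i0) ≤ (x - y) / (x + y) := by
    rw [hsx, hiy]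
    rw [div_le_div_iff₀ (by nlinarith) (by linarith)]
    nlinarith [sq_nonneg (x * y - 1), sq_nonneg (x - y), mul_pos hy0 (lt_of_lt_of_le hy0 (le_of_lt hyx))]
  have step2 : (x - y) / (x + y) ≤ Real.log (x / y) / 2 := by
    have hu : 1 ≤ x / y := (one_le_div hy0).2 (by linarith)
    have := pade_log hu
    have he : 2 * (x / y - 1) / (x / y + 1) = 2 * (x - y) / (x + y) := by
      rw [div_eq_div_iff (by positivity) (by linarith)]
      field_simp
    rw [he, mul_div_assoc] at this
    linarith
  have step3 : Real.log (x / y) = Real.log (s / i0) / 2 := by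
    rw [hx, hy, ← Real.sqrt_div (by linarith), Real.log_sqrt (by positivity)]
  linarith

variable {Z : Type} [Fintype Z] [Nonempty Z]

/-- TV-type bound via log-ratio. -/
lemma tv_bound (μ ν : Z → ℝ) (hμ : ∀ z, 0 < μ z) (hν : ∀ z, 0 < ν z)
    (hμ1 : ∑ z, μ z = 1) (hν1 : ∑ z, ν z = 1)
    (D : ℝ) (hD : 0 ≤ D)
    (hrat : ∀ z z', Real.log (μ z * ν z' / (μ z' * ν z)) ≤ 4 * D)
    (h : Z → ℝ) (d : ℝ) (hd : ∀ z z', h z - h z' ≤ d) :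
    ∑ z, (μ z - ν z) * h z ≤ D * d := by
  have hd0 : 0 ≤ d := by have := hd (Classical.arbitrary Z) (Classical.arbitrary Z); linarith
  set r : Z → ℝ := fun z => μ z / ν z with hr
  obtain ⟨zM, _, hzM⟩ := Finset.exists_max_image Finset.univ r ⟨Classical.arbitrary Z, Finset.mem_univ _⟩
  obtain ⟨zm, _, hzm⟩ := Finset.exists_min_image Finset.univ r ⟨Classical.arbitrary Z, Finset.mem_univ _⟩
  set s := r zM with hs
  set i0 := r zm with hi0
  have hrpos : ∀ z, 0 < r z := fun z => div_pos (hμ z) (hν z)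
  have hνr : ∀ z, ν z * r z = μ z := fun z => by
    rw [hr]
    exact mul_div_cancel₀ (μ z) (hν z).ne' ▸ (by rw [mul_div_assoc', mul_comm, mul_div_assoc, div_self (hν z).ne', mul_one])
  have hsum_r : ∑ z, ν z * r z = 1 := by
    rw [Finset.sum_congr rfl (fun z _ => hνr z)]; exact hμ1
  have hi0le : i0 ≤ 1 := by
    by_contra hc
    push_neg at hc
    have : ∀ z ∈ Finset.univ, ν z < ν z * r z := by
      intro z _
      have h1 : i0 ≤ r z := hzm z (Finset.mem_univ z)
      nlinarith [hν z]
    have := Finset.sum_lt_sum_of_nonempty ⟨Classical.arbitrary Z, Finset.mem_univ _⟩ this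
    rw [hν1, hsum_r] at this
    exact lt_irrefl _ this
  have hsge : 1 ≤ s := by
    by_contra hc
    push_neg at hc
    have : ∀ z ∈ Finset.univ, ν z * r z < ν z := by
      intro z _
      have h1 : r z ≤ s := hzM z (Finset.mem_univ z)
      nlinarith [hν z]
    have := Finset.sum_lt_sum_of_nonempty ⟨Classical.arbitrary Z, Finset.mem_univ _⟩ this
    rw [hν1, hsum_r] at this
    exact lt_irrefl _ this
  obtain ⟨z₀, _, hz₀⟩ := Finset.exists_min_image Finset.univ h ⟨Classical.arbitrary Z, Finset.mem_univ _⟩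
  have hzero : ∑ z, (μ z - ν z) = 0 := by rw [Finset.sum_sub_distrib, hμ1, hν1]; ring
  have hshift : ∑ z, (μ z - ν z) * h z = ∑ z, (μ z - ν z) * (h z - h z₀) := by
    simp only [mul_sub]
    rw [Finset.sum_sub_distrib, ← Finset.sum_mul, hzero, zero_mul, sub_zero]
  rw [hshift]
  by_cases hcase : s ≤ i0
  · -- degenerate case: μ = ν
    have hconst : ∀ z, r z = s := fun z =>
      le_antisymm (hzM z (Finset.mem_univ z)) (le_trans hcase (hzm z (Finset.mem_univ z)))
    have hs1 : s = 1 := by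
      have : ∑ z, ν z * r z = s := by
        rw [Finset.sum_congr rfl (fun z _ => by rw [hconst z])]
        rw [← Finset.sum_mul, hν1, one_mul]
      rw [hsum_r] at this
      linarith
    have hμν : ∀ z, μ z = ν z := by
      intro z
      have := hνr z
      rw [hconst z, hs1, mul_one] at this
      linarith
    have : ∑ z, (μ z - ν z) * (h z - h z₀) = 0 := by
      apply Finset.sum_eq_zero
      intro z _
      rw [hμν z]; ring
    rw [this]
    positivity
  · push_neg at hcase
    have hds : 0 < s - i0 := by linarith
    have hstep : ∑ z, (μ z - ν z) * (h z - h z₀)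
        ≤ ∑ z, ν z * ((s - 1) * (r z - i0) / (s - i0)) * d := by
      apply Finset.sum_le_sum
      intro z _
      have hμνr : μ z - ν z = ν z * (r z - 1) := by
        have := hνr z; nlinarith
      have hh0 : 0 ≤ h z - h z₀ := by have := hz₀ z (Finset.mem_univ z); linarith
      have hhd : h z - h z₀ ≤ d := hd z z₀
      have hri : i0 ≤ r z := hzm z (Finset.mem_univ z)
      have hrs : r z ≤ s := hzM z (Finset.mem_univ z)
      rcases le_total 1 (r z) with h1 | h1
      · have hchord : r z - 1 ≤ (s - 1) * (r z - i0) / (s - i0) := by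
          rw [le_div_iff₀ hds]
          nlinarith
        rw [hμνr]
        calc ν z * (r z - 1) * (h z - h z₀) ≤ ν z * (r z - 1) * d := by
              apply mul_le_mul_of_nonneg_left hhd
              have := (hν z).le
              nlinarith
          _ ≤ ν z * ((s - 1) * (r z - i0) / (s - i0)) * d := by
              apply mul_le_mul_of_nonneg_right _ hd0
              apply mul_le_mul_of_nonneg_left hchord (hν z).le
      · have hle : (μ z - ν z) * (h z - h z₀) ≤ 0 := by
          rw [hμνr]
          apply mul_nonpos_of_nonpos_of_nonneg _ hh0
          nlinarith [hν z]
        have hge : 0 ≤ ν z * ((s - 1) * (r z - i0) / (s - i0)) * d := by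
          apply mul_nonneg (mul_nonneg (hν z).le _) hd0
          apply div_nonneg _ hds.le
          nlinarith
        linarith
    have hsum2 : ∑ z, ν z * ((s - 1) * (r z - i0) / (s - i0)) * d
        = (s - 1) * (1 - i0) / (s - i0) * d := by
      have : ∀ z, ν z * ((s - 1) * (r z - i0) / (s - i0)) * d
          = ((s - 1) / (s - i0) * d) * (ν z * r z - i0 * ν z) := fun z => by ring
      rw [Finset.sum_congr rfl (fun z _ => this z), ← Finset.mul_sum]
      rw [Finset.sum_sub_distrib, hsum_r, ← Finset.mul_sum, hν1]
      field_simp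
    have hlog : Real.log (s / i0) ≤ 4 * D := by
      have heq : s / i0 = μ zM * ν zm / (μ zm * ν zM) := by
        rw [hs, hi0, hr]
        field_simp
      rw [heq]
      exact hrat zM zm
    have hka := key_alg (hrpos zm) hi0le hsge hcase
    calc ∑ z, (μ z - ν z) * (h z - h z₀) ≤ (s - 1) * (1 - i0) / (s - i0) * d := by
          rw [← hsum2]; exact hstep
      _ ≤ (Real.log (s / i0) / 4) * d := mul_le_mul_of_nonneg_right hka hd0
      _ ≤ D * d := by
          apply mul_le_mul_of_nonneg_right _ hd0
          linarith




variable {Z : Type} [Fintype Z] [Nonempty Z] {m : ℕ}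

/-- normalizing constant of the conditional law of coordinate `i`. -/
def q (p : (Fin m → Z) → ℝ) (i : Fin m) (x : Fin m → Z) : ℝ :=
  ∑ z, p (Function.update x i z)

/-- conditional law of coordinate `i` given the rest. -/
def mu (p : (Fin m → Z) → ℝ) (i : Fin m) (x : Fin m → Z) (z : Z) : ℝ :=
  p (Function.update x i z) / q p i x

/-- Glauber / Gibbs sampler transition operator. -/
def glauber (p : (Fin m → Z) → ℝ) (f : (Fin m → Z) → ℝ) (x : Fin m → Z) : ℝ :=
  (m : ℝ)⁻¹ * ∑ i, ∑ z, mu p i x z * f (Function.update x i z)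

/-- oscillation of `f` in coordinate `i`. -/
def Dcoef (i : Fin m) (f : (Fin m → Z) → ℝ) : ℝ :=
  ⨆ w : (Fin m → Z) × Z × Z, (f (Function.update w.1 i w.2.1) - f (Function.update w.1 i w.2.2))


def Scoef (f : (Fin m → Z) → ℝ) : ℝ := ∑ i, Dcoef i f

variable (p : (Fin m → Z) → ℝ)

lemma q_pos (hp : ∀ x, 0 < p x) (i : Fin m) (x : Fin m → Z) : 0 < q p i x :=
  Finset.sum_pos (fun z _ => hp _) Finset.univ_nonempty

lemma mu_pos (hp : ∀ x, 0 < p x) (i : Fin m) (x : Fin m → Z) (z : Z) : 0 < mu p i x z :=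
  div_pos (hp _) (q_pos p hp i x)

lemma sum_mu (hp : ∀ x, 0 < p x) (i : Fin m) (x : Fin m → Z) : ∑ z, mu p i x z = 1 := by
  unfold mu
  rw [← Finset.sum_div]
  exact div_self (q_pos p hp i x).ne'

omit [Nonempty Z] in
lemma q_update (i : Fin m) (x : Fin m → Z) (z : Z) :
    q p i (Function.update x i z) = q p i x := by
  unfold q
  exact Finset.sum_congr rfl fun w _ => by rw [Function.update_idem]

/-- involution reindexing of the double sum. -/
lemma sum_invol (i : Fin m) (φ : (Fin m → Z) → Z → ℝ) :
    (∑ x, ∑ z, φ (Function.update x i z) (x i)) = ∑ x, ∑ z, φ x z := by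
  have hinv : Function.Involutive
      (fun w : (Fin m → Z) × Z => (Function.update w.1 i w.2, w.1 i)) := by
    intro w
    simp only [Function.update_self, Function.update_idem]
    rw [Function.update_eq_self]
  calc (∑ x, ∑ z, φ (Function.update x i z) (x i))
      = ∑ w : (Fin m → Z) × Z, φ (Function.update w.1 i w.2) (w.1 i) := by
        rw [Fintype.sum_prod_type]
    _ = ∑ w : (Fin m → Z) × Z, φ w.1 w.2 := by
        exact Fintype.sum_equiv hinv.toPerm _ _ (fun w => rfl)
    _ = ∑ x, ∑ z, φ x z := by rw [Fintype.sum_prod_type]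

lemma sum_pmu_swap (hp : ∀ x, 0 < p x) (i : Fin m) (ψ : (Fin m → Z) → Z → ℝ) :
    (∑ x, ∑ z, p x * mu p i x z * ψ x z)
      = ∑ x, ∑ z, p x * mu p i x z * ψ (Function.update x i z) (x i) := by
  have key := sum_invol (Z := Z) i (fun y w => p y * mu p i y w * ψ y w)
  rw [← key]
  apply Finset.sum_congr rfl
  intro x _
  apply Finset.sum_congr rfl
  intro z _
  have h1 : Function.update (Function.update x i z) i (x i) = x := by
    rw [Function.update_idem, Function.update_eq_self]
  have h2 : p (Function.update x i z) * mu p i (Function.update x i z) (x i)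
      = p x * mu p i x z := by
    unfold mu
    rw [h1, q_update]
    field_simp
  rw [h2]

/-- stationarity of the Glauber dynamics. -/
lemma glauber_stationary (hp : ∀ x, 0 < p x) (hm : 1 ≤ m) (f : (Fin m → Z) → ℝ) :
    (∑ x, p x * glauber p f x) = ∑ x, p x * f x := by
  unfold glauber
  have h1 : ∀ x, p x * ((m : ℝ)⁻¹ * ∑ i, ∑ z, mu p i x z * f (Function.update x i z))
      = (m:ℝ)⁻¹ * ∑ i, ∑ z, p x * mu p i x z * f (Function.update x i z) := by
    intro x
    rw [mul_left_comm, Finset.mul_sum]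
    congr 1
    apply Finset.sum_congr rfl
    intro i _
    rw [Finset.mul_sum]
    exact Finset.sum_congr rfl fun z _ => by ring
  rw [Finset.sum_congr rfl fun x _ => h1 x, ← Finset.mul_sum]
  rw [Finset.sum_comm]
  have h2 : ∀ i : Fin m, (∑ x, ∑ z, p x * mu p i x z * f (Function.update x i z))
      = ∑ x, p x * f x := by
    intro i
    have := sum_pmu_swap p hp i (fun y w => f y)
    rw [this.symm]
    apply Finset.sum_congr rfl
    intro x _
    rw [← Finset.sum_mul, ← Finset.mul_sum, sum_mu p hp, mul_one]
  rw [Finset.sum_congr rfl fun i _ => h2 i, Finset.sum_const, Finset.card_univ, Fintype.card_fin]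
  rw [nsmul_eq_mul, ← mul_assoc, inv_mul_cancel₀ (by positivity : (m:ℝ) ≠ 0), one_mul]


lemma le_Dcoef (i : Fin m) (f : (Fin m → Z) → ℝ) (x : Fin m → Z) (a b : Z) :
    f (Function.update x i a) - f (Function.update x i b) ≤ Dcoef i f :=
  le_ciSup (f := fun w : (Fin m → Z) × Z × Z =>
      f (Function.update w.1 i w.2.1) - f (Function.update w.1 i w.2.2))
    (Set.Finite.bddAbove (Set.finite_range _)) (⟨x, a, b⟩ : (Fin m → Z) × Z × Z)

lemma Dcoef_nonneg (i : Fin m) (f : (Fin m → Z) → ℝ) : 0 ≤ Dcoef i f := by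
  have := le_Dcoef i f (Classical.arbitrary _) (Classical.arbitrary Z) (Classical.arbitrary Z)
  simpa using this

lemma Dcoef_le (i : Fin m) (f : (Fin m → Z) → ℝ) {c : ℝ}
    (hc : ∀ x a b, f (Function.update x i a) - f (Function.update x i b) ≤ c) :
    Dcoef i f ≤ c :=
  ciSup_le fun w => hc w.1 w.2.1 w.2.2

lemma abs_diff_le_Dcoef (i : Fin m) (f : (Fin m → Z) → ℝ) (x : Fin m → Z) (z : Z) :
    |f x - f (Function.update x i z)| ≤ Dcoef i f := by
  rw [abs_le]
  constructor
  · have := le_Dcoef i f x z (x i)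
    rw [Function.update_eq_self] at this
    linarith
  · have := le_Dcoef i f x (x i) z
    rw [Function.update_eq_self] at this
    linarith

variable (p : (Fin m → Z) → ℝ)

lemma le_logInfluence (hp : ∀ x, 0 < p x) (i j : Fin m) (x : Fin m → Z) (zi zj zi' zj' : Z) :
    Real.log (p (updTwo x i zi j zj) * p (updTwo x i zi' j zj') /
      (p (updTwo x i zi' j zj) * p (updTwo x i zi j zj'))) ≤ 4 * logInfluence p i j := by
  have h := le_ciSup (f := fun w : (Fin m → Z) × Z × Z × Z × Z =>
    Real.log (p (updTwo w.1 i w.2.1 j w.2.2.1) * p (updTwo w.1 i w.2.2.2.1 j w.2.2.2.2) /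
      (p (updTwo w.1 i w.2.2.2.1 j w.2.2.1) * p (updTwo w.1 i w.2.1 j w.2.2.2.2))))
    (Set.Finite.bddAbove (Set.finite_range _)) (⟨x, zi, zj, zi', zj'⟩)
  unfold logInfluence
  linarith

lemma logInfluence_nonneg (hp : ∀ x, 0 < p x) (i j : Fin m) : 0 ≤ logInfluence p i j := by
  have h := le_logInfluence p hp i j (Classical.arbitrary _) (Classical.arbitrary Z)
    (Classical.arbitrary Z) (Classical.arbitrary Z) (Classical.arbitrary Z)
  rw [div_self (mul_pos (hp _) (hp _)).ne', Real.log_one] at h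
  linarith


/-- One-step oscillation bound for the Glauber dynamics. -/
lemma Dcoef_glauber (hp : ∀ x, 0 < p x) (hm : 1 ≤ m) (f : (Fin m → Z) → ℝ) (j : Fin m) :
    Dcoef j (glauber p f)
      ≤ (m:ℝ)⁻¹ * (((m:ℝ) - 1) * Dcoef j f
          + ∑ i ∈ Finset.univ.erase j, logInfluence p i j * Dcoef i f) := by
  apply Dcoef_le
  intro x a b
  set X := Function.update x j a with hX
  set Y := Function.update x j b with hY
  have main : ∀ i : Fin m,
      ((∑ z, mu p i X z * f (Function.update X i z))
        - ∑ z, mu p i Y z * f (Function.update Y i z))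
        ≤ (if i = j then 0 else Dcoef j f + logInfluence p i j * Dcoef i f) := by
    intro i
    by_cases hij : i = j
    · subst hij
      rw [if_pos rfl]
      have e1 : ∀ z, Function.update X i z = Function.update Y i z := by
        intro z
        rw [hX, hY, Function.update_idem, Function.update_idem]
      have e2 : ∀ z, mu p i X z = mu p i Y z := by
        intro z
        unfold mu
        rw [e1 z, hX, hY, q_update, q_update]
      rw [Finset.sum_congr rfl fun z _ => by rw [e1 z, e2 z]]
      simp
    · rw [if_neg hij]
      have hsplit : ((∑ z, mu p i X z * f (Function.update X i z))
            - ∑ z, mu p i Y z * f (Function.update Y i z))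
          = (∑ z, mu p i X z * (f (Function.update X i z) - f (Function.update Y i z)))
            + ∑ z, (mu p i X z - mu p i Y z) * f (Function.update Y i z) := by
        rw [← Finset.sum_sub_distrib, ← Finset.sum_add_distrib]
        exact Finset.sum_congr rfl fun z _ => by ring
      rw [hsplit]
      have hfirst : (∑ z, mu p i X z * (f (Function.update X i z) - f (Function.update Y i z)))
          ≤ Dcoef j f := by
        calc (∑ z, mu p i X z * (f (Function.update X i z) - f (Function.update Y i z)))
            ≤ ∑ z, mu p i X z * Dcoef j f := by
              apply Finset.sum_le_sum
              intro z _
              apply mul_le_mul_of_nonneg_left _ (mu_pos p hp i X z).le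
              have eX : Function.update X i z
                  = Function.update (Function.update x i z) j a := by
                rw [hX, Function.update_comm hij]
              have eY : Function.update Y i z
                  = Function.update (Function.update x i z) j b := by
                rw [hY, Function.update_comm hij]
              rw [eX, eY]
              exact le_Dcoef j f (Function.update x i z) a b
          _ = Dcoef j f := by rw [← Finset.sum_mul, sum_mu p hp, one_mul]
      have hsecond : (∑ z, (mu p i X z - mu p i Y z) * f (Function.update Y i z))
          ≤ logInfluence p i j * Dcoef i f := by
        apply tv_bound (mu p i X) (mu p i Y) (mu_pos p hp i X) (mu_pos p hp i Y)
          (sum_mu p hp i X) (sum_mu p hp i Y) _ (logInfluence_nonneg p hp i j) _ _ _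
        · intro z z'
          exact le_Dcoef i f Y z z'
        · intro z z'
          have heq : mu p i X z * mu p i Y z' / (mu p i X z' * mu p i Y z)
              = p (Function.update X i z) * p (Function.update Y i z')
                / (p (Function.update X i z') * p (Function.update Y i z)) := by
            unfold mu
            rw [div_mul_div_comm, div_mul_div_comm, div_div_div_cancel_right₀ (mul_pos (q_pos p hp i X) (q_pos p hp i Y)).ne']
          rw [heq]
          have eXz : ∀ z, Function.update X i z = updTwo x i z j a := by
            intro z
            rw [hX]
            unfold updTwo
            rw [Function.update_comm hij]
          have eYz : ∀ z, Function.update Y i z = updTwo x i z j b := by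
            intro z
            rw [hY]
            unfold updTwo
            rw [Function.update_comm hij]
          rw [eXz z, eXz z', eYz z, eYz z']
          exact le_logInfluence p hp i j x z a z' b
      linarith
  have hG : glauber p f X - glauber p f Y
      = (m:ℝ)⁻¹ * ∑ i, ((∑ z, mu p i X z * f (Function.update X i z))
          - ∑ z, mu p i Y z * f (Function.update Y i z)) := by
    unfold glauber
    rw [Finset.sum_sub_distrib, mul_sub]
  rw [hG]
  apply mul_le_mul_of_nonneg_left _ (by positivity : (0:ℝ) ≤ (m:ℝ)⁻¹)
  calc (∑ i, ((∑ z, mu p i X z * f (Function.update X i z))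
          - ∑ z, mu p i Y z * f (Function.update Y i z)))
      ≤ ∑ i, (if i = j then 0 else Dcoef j f + logInfluence p i j * Dcoef i f) :=
        Finset.sum_le_sum fun i _ => main i
    _ = ∑ i ∈ Finset.univ.erase j, (Dcoef j f + logInfluence p i j * Dcoef i f) := by
        conv_lhs => rw [← Finset.insert_erase (Finset.mem_univ j)]
        rw [Finset.sum_insert (Finset.notMem_erase j _), if_pos rfl, zero_add]
        exact Finset.sum_congr rfl fun i hi => by rw [if_neg (Finset.ne_of_mem_erase hi)]
    _ = ((m:ℝ) - 1) * Dcoef j f + ∑ i ∈ Finset.univ.erase j, logInfluence p i j * Dcoef i f := by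
        rw [Finset.sum_add_distrib, Finset.sum_const, Finset.card_erase_of_mem (Finset.mem_univ j),
          Finset.card_univ, Fintype.card_fin, nsmul_eq_mul, Nat.cast_sub hm, Nat.cast_one]

lemma Scoef_nonneg (f : (Fin m → Z) → ℝ) : 0 ≤ Scoef f :=
  Finset.sum_nonneg fun i _ => Dcoef_nonneg i f

lemma sum_logInfluence_le (hm : 1 ≤ m) (i : Fin m) :
    ∑ j ∈ Finset.univ.erase i, logInfluence p i j ≤ logCoefficient p :=
  haveI : Nonempty (Fin m) := ⟨⟨0, hm⟩⟩
  le_ciSup (f := fun i => ∑ j ∈ Finset.univ.erase i, logInfluence p i j)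
    (Set.Finite.bddAbove (Set.finite_range _)) i

lemma logCoefficient_nonneg (hp : ∀ x, 0 < p x) (hm : 1 ≤ m) : 0 ≤ logCoefficient p := by
  refine le_trans ?_ (sum_logInfluence_le p hm ⟨0, hm⟩)
  exact Finset.sum_nonneg fun j _ => logInfluence_nonneg p hp _ _

/-- contraction of the total oscillation under one Glauber step. -/
lemma Scoef_glauber (hp : ∀ x, 0 < p x) (hm : 1 ≤ m) (f : (Fin m → Z) → ℝ) :
    Scoef (glauber p f) ≤ (((m:ℝ) - 1 + logCoefficient p) / m) * Scoef f := by
  unfold Scoef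
  have swap : (∑ j, ∑ i ∈ Finset.univ.erase j, logInfluence p i j * Dcoef i f)
      = ∑ i, ∑ j ∈ Finset.univ.erase i, logInfluence p i j * Dcoef i f := by
    have h1 : ∀ j : Fin m, (∑ i ∈ Finset.univ.erase j, logInfluence p i j * Dcoef i f)
        = (∑ i, logInfluence p i j * Dcoef i f) - logInfluence p j j * Dcoef j f :=
      fun j => Finset.sum_erase_eq_sub (Finset.mem_univ j)
    have h2 : ∀ i : Fin m, (∑ j ∈ Finset.univ.erase i, logInfluence p i j * Dcoef i f)
        = (∑ j, logInfluence p i j * Dcoef i f) - logInfluence p i i * Dcoef i f :=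
      fun i => Finset.sum_erase_eq_sub (Finset.mem_univ i)
    rw [Finset.sum_congr rfl fun j _ => h1 j, Finset.sum_congr rfl fun i _ => h2 i,
      Finset.sum_sub_distrib, Finset.sum_sub_distrib, Finset.sum_comm]
  calc (∑ j, Dcoef j (glauber p f))
      ≤ ∑ j, (m:ℝ)⁻¹ * (((m:ℝ) - 1) * Dcoef j f
          + ∑ i ∈ Finset.univ.erase j, logInfluence p i j * Dcoef i f) :=
        Finset.sum_le_sum fun j _ => Dcoef_glauber p hp hm f j
    _ = (m:ℝ)⁻¹ * (((m:ℝ) - 1) * ∑ j, Dcoef j f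
          + ∑ i, ∑ j ∈ Finset.univ.erase i, logInfluence p i j * Dcoef i f) := by
        rw [← Finset.mul_sum, Finset.sum_add_distrib, ← Finset.mul_sum, swap]
    _ ≤ (m:ℝ)⁻¹ * (((m:ℝ) - 1) * ∑ j, Dcoef j f + logCoefficient p * ∑ i, Dcoef i f) := by
        apply mul_le_mul_of_nonneg_left _ (by positivity : (0:ℝ) ≤ (m:ℝ)⁻¹)
        apply add_le_add le_rfl
        rw [Finset.mul_sum]
        apply Finset.sum_le_sum
        intro i _
        rw [← Finset.sum_mul]
        exact mul_le_mul_of_nonneg_right (sum_logInfluence_le p hm i) (Dcoef_nonneg i f)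
    _ = (((m:ℝ) - 1 + logCoefficient p) / m) * ∑ j, Dcoef j f := by
        field_simp

/-- path lemma : any difference is at most the total oscillation. -/
lemma diff_le_Scoef (f : (Fin m → Z) → ℝ) (x y : Fin m → Z) : f x - f y ≤ Scoef f := by
  set seq : ℕ → (Fin m → Z) := fun k => fun i => if (i : ℕ) < k then x i else y i with hseq
  have h0 : seq 0 = y := by funext i; simp [hseq]
  have hm' : seq m = x := by funext i; simp [hseq, i.isLt]
  have tele : f (seq m) - f (seq 0) = ∑ k ∈ Finset.range m, (f (seq (k+1)) - f (seq k)) :=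
    (Finset.sum_range_sub (fun k => f (seq k)) m).symm
  have hbound : ∀ k ∈ Finset.range m, f (seq (k+1)) - f (seq k)
      ≤ (fun k => if hk : k < m then Dcoef (⟨k, hk⟩ : Fin m) f else 0) k := by
    intro k hk
    rw [Finset.mem_range] at hk
    simp only [dif_pos hk]
    set i0 : Fin m := ⟨k, hk⟩ with hi0
    have e1 : seq (k+1) = Function.update (seq k) i0 (x i0) := by
      funext i
      rcases eq_or_ne i i0 with h | h
      · subst h
        rw [Function.update_self]
        show (if (i0 : ℕ) < k + 1 then x i0 else y i0) = x i0
        rw [if_pos (by rw [hi0]; exact Nat.lt_succ_self k)]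
      · rw [Function.update_of_ne h]
        have hne : (i:ℕ) ≠ k := fun hc => h (Fin.ext (by rw [hc, hi0]))
        show (if (i : ℕ) < k + 1 then x i else y i) = (if (i : ℕ) < k then x i else y i)
        by_cases hik : (i:ℕ) < k
        · rw [if_pos hik, if_pos (by omega)]
        · rw [if_neg hik, if_neg (by omega)]
    have e2 : seq k = Function.update (seq k) i0 (y i0) := by
      funext i
      rcases eq_or_ne i i0 with h | h
      · subst h
        rw [Function.update_self]
        show (if (i0 : ℕ) < k then x i0 else y i0) = y i0
        rw [if_neg (by rw [hi0]; exact lt_irrefl k)]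
      · rw [Function.update_of_ne h]
    calc f (seq (k+1)) - f (seq k)
        = f (Function.update (seq k) i0 (x i0)) - f (Function.update (seq k) i0 (y i0)) := by
          rw [← e1, ← e2]
      _ ≤ Dcoef i0 f := le_Dcoef i0 f (seq k) (x i0) (y i0)
  calc f x - f y = f (seq m) - f (seq 0) := by rw [h0, hm']
    _ ≤ ∑ k ∈ Finset.range m, (fun k => if hk : k < m then Dcoef (⟨k, hk⟩ : Fin m) f else 0) k := by
        rw [tele]; exact Finset.sum_le_sum hbound
    _ = ∑ i : Fin m, Dcoef i f := by
        rw [← Fin.sum_univ_eq_sum_range (fun k => if hk : k < m then Dcoef (⟨k, hk⟩ : Fin m) f else 0) m]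
        exact Finset.sum_congr rfl fun i _ => by rw [dif_pos i.isLt]
    _ = Scoef f := rfl

/-- a mean-zero function is bounded by its total oscillation. -/
lemma abs_le_Scoef (hp : ∀ x, 0 < p x) (f : (Fin m → Z) → ℝ)
    (hmean : ∑ x, p x * f x = 0) (x : Fin m → Z) : |f x| ≤ Scoef f := by
  obtain ⟨ymin, _, hymin⟩ := Finset.exists_min_image Finset.univ f
    ⟨Classical.arbitrary _, Finset.mem_univ _⟩
  obtain ⟨ymax, _, hymax⟩ := Finset.exists_max_image Finset.univ f
    ⟨Classical.arbitrary _, Finset.mem_univ _⟩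
  have hneg : f ymin ≤ 0 := by
    by_contra hc
    push_neg at hc
    have : (0:ℝ) < ∑ x, p x * f x :=
      Finset.sum_pos (fun y _ => mul_pos (hp y)
        (lt_of_lt_of_le hc (hymin y (Finset.mem_univ y)))) ⟨Classical.arbitrary _, Finset.mem_univ _⟩
    rw [hmean] at this
    exact lt_irrefl _ this
  have hpos : 0 ≤ f ymax := by
    by_contra hc
    push_neg at hc
    have : (∑ x, p x * f x) < 0 := by
      apply Finset.sum_neg (fun y _ => mul_neg_of_pos_of_neg (hp y)
        (lt_of_le_of_lt (hymax y (Finset.mem_univ y)) hc)) ⟨Classical.arbitrary _, Finset.mem_univ _⟩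
    rw [hmean] at this
    exact lt_irrefl _ this
  rw [abs_le]
  constructor
  · have := diff_le_Scoef f ymax x
    linarith
  · have := diff_le_Scoef f x ymin
    linarith

section Key

variable (hp : ∀ x, 0 < p x) (hm : 1 ≤ m) (hα : logCoefficient p < 1)

/-- The key mgf-derivative inequality, via Chatterjee's exchangeable-pairs method with
the Glauber dynamics resolvent. -/
lemma key_mgf (hp : ∀ x, 0 < p x) (hm : 1 ≤ m) (hα : logCoefficient p < 1)
    (fb : (Fin m → Z) → ℝ) (hmean : ∑ x, p x * fb x = 0)
    (Df : ℝ) (hDf0 : 0 ≤ Df) (hDf : ∀ i, Dcoef i fb ≤ Df)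
    (θ : ℝ) (hθ : 0 ≤ θ) :
    (∑ x, p x * fb x * Real.exp (θ * fb x))
      ≤ θ * (Df * Scoef fb / (2 * (1 - logCoefficient p)))
          * ∑ x, p x * Real.exp (θ * fb x) := by
  classical
  set α := logCoefficient p with hαdef
  have hα0 : 0 ≤ α := logCoefficient_nonneg p hp hm
  have hm0 : (0:ℝ) < m := by exact_mod_cast Nat.lt_of_lt_of_le Nat.zero_lt_one hm
  set κ : ℝ := ((m:ℝ) - 1 + α) / m with hκdef
  have hκ0 : 0 ≤ κ := by
    apply div_nonneg _ hm0.le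
    have : (1:ℝ) ≤ (m:ℝ) := by exact_mod_cast hm
    linarith
  have hκ1 : κ < 1 := by
    rw [hκdef, div_lt_one hm0]
    linarith
  have h1κ : 1 - κ = (1 - α) / m := by
    rw [hκdef]
    field_simp
    ring
  set R := Scoef fb with hRdef
  have hR0 : 0 ≤ R := Scoef_nonneg fb
  set it : ℕ → (Fin m → Z) → ℝ := fun t => (glauber p)^[t] fb with hit
  have hit0 : it 0 = fb := rfl
  have hitsucc : ∀ t, it (t + 1) = glauber p (it t) := fun t =>
    Function.iterate_succ_apply' (glauber p) t fb
  have hmean_it : ∀ t, ∑ x, p x * it t x = 0 := by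
    intro t
    induction t with
    | zero => exact hmean
    | succ t ih => rw [hitsucc t, glauber_stationary p hp hm (it t)]; exact ih
  have hS_it : ∀ t, Scoef (it t) ≤ κ ^ t * R := by
    intro t
    induction t with
    | zero => rw [pow_zero, one_mul, hit0]
    | succ t ih =>
      rw [hitsucc t]
      calc Scoef (glauber p (it t)) ≤ κ * Scoef (it t) := Scoef_glauber p hp hm (it t)
        _ ≤ κ * (κ ^ t * R) := mul_le_mul_of_nonneg_left ih hκ0
        _ = κ ^ (t + 1) * R := by ring
  have habs_it : ∀ t x, |it t x| ≤ κ ^ t * R := fun t x =>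
    le_trans (abs_le_Scoef p hp (it t) (hmean_it t) x) (hS_it t)
  have hgeo : Summable (fun t : ℕ => κ ^ t * R) :=
    (summable_geometric_of_lt_one hκ0 hκ1).mul_right R
  have hsummable : ∀ x, Summable (fun t => it t x) := by
    intro x
    apply Summable.of_abs
    exact Summable.of_nonneg_of_le (fun t => abs_nonneg _) (fun t => habs_it t x) hgeo
  set g : (Fin m → Z) → ℝ := fun x => ∑' t, it t x with hg
  -- fixed point equation
  have hfix : ∀ x, fb x = g x - glauber p g x := by
    intro x
    have hPg : glauber p g x = ∑' t, it (t + 1) x := by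
      unfold glauber
      have e1 : ∀ i (z : Z), mu p i x z * g (Function.update x i z)
          = ∑' t, mu p i x z * it t (Function.update x i z) := fun i z =>
        (tsum_mul_left).symm
      have e2 : ∀ i : Fin m, (∑ z, mu p i x z * g (Function.update x i z))
          = ∑' t, ∑ z, mu p i x z * it t (Function.update x i z) := by
        intro i
        rw [Finset.sum_congr rfl fun z _ => e1 i z]
        exact (Summable.tsum_finsetSum (fun z _ => (hsummable _).mul_left _)).symm
      have e3 : (∑ i, ∑ z, mu p i x z * g (Function.update x i z))
          = ∑' t, ∑ i, ∑ z, mu p i x z * it t (Function.update x i z) := by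
        rw [Finset.sum_congr rfl fun i _ => e2 i]
        refine (Summable.tsum_finsetSum (fun i _ => ?_)).symm
        exact summable_sum (fun z _ => (hsummable _).mul_left _)
      rw [e3, ← tsum_mul_left]
      apply tsum_congr
      intro t
      rw [hitsucc t]
      rfl
    have h0 : (∑' t, it t x) = it 0 x + ∑' t, it (t + 1) x := Summable.tsum_eq_zero_add (hsummable x)
    have hPg' : Summable (fun t => it (t + 1) x) := (hsummable x).comp_injective (add_left_injective 1)
    rw [hPg, hg]
    simp only []
    rw [h0, hit0]
    ring
  -- oscillation bound for g
  have hsumD : ∀ i : Fin m, Summable (fun t => Dcoef i (it t)) := by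
    intro i
    apply Summable.of_nonneg_of_le (fun t => Dcoef_nonneg i (it t)) _ hgeo
    intro t
    calc Dcoef i (it t) ≤ Scoef (it t) := by
          unfold Scoef
          exact Finset.single_le_sum (fun j _ => Dcoef_nonneg j (it t)) (Finset.mem_univ i)
      _ ≤ κ ^ t * R := hS_it t
  have hDg : ∀ i : Fin m, Dcoef i g ≤ ∑' t, Dcoef i (it t) := by
    intro i
    apply Dcoef_le
    intro x a b
    have e1 : g (Function.update x i a) - g (Function.update x i b)
        = ∑' t, (it t (Function.update x i a) - it t (Function.update x i b)) :=
      (Summable.tsum_sub (hsummable _) (hsummable _)).symm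
    rw [e1]
    exact Summable.tsum_le_tsum (fun t => le_Dcoef i (it t) x a b)
      ((hsummable _).sub (hsummable _)) (hsumD i)
  have hScoefg : Scoef g ≤ R / (1 - κ) := by
    have e1 : (∑ i, ∑' t, Dcoef i (it t)) = ∑' t, Scoef (it t) :=
      (Summable.tsum_finsetSum (fun i _ => hsumD i)).symm
    calc Scoef g ≤ ∑ i, ∑' t, Dcoef i (it t) := Finset.sum_le_sum fun i _ => hDg i
      _ = ∑' t, Scoef (it t) := e1
      _ ≤ ∑' t, κ ^ t * R := Summable.tsum_le_tsum hS_it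
          (by
            apply Summable.of_nonneg_of_le (fun t => Scoef_nonneg (it t)) hS_it hgeo)
          hgeo
      _ = (1 - κ)⁻¹ * R := by rw [tsum_mul_right, tsum_geometric_of_lt_one hκ0 hκ1]
      _ = R / (1 - κ) := by ring
  -- the exchangeable pair computation
  set E : (Fin m → Z) → ℝ := fun x => Real.exp (θ * fb x) with hE
  have hEpos : ∀ x, 0 < E x := fun x => Real.exp_pos _
  set M : ℝ := ∑ x, p x * E x with hM
  have hM0 : 0 ≤ M := Finset.sum_nonneg fun x _ => mul_nonneg (hp x).le (hEpos x).le
  set W : Fin m → ℝ := fun i =>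
    ∑ x, ∑ z, p x * mu p i x z * ((g x - g (Function.update x i z)) * E x) with hW
  have hdecomp : (∑ x, p x * fb x * E x) = (m:ℝ)⁻¹ * ∑ i, W i := by
    have e0 : ∀ x, p x * fb x * E x
        = p x * g x * E x - p x * glauber p g x * E x := by
      intro x
      rw [hfix x]
      ring
    have e1 : (∑ x, p x * glauber p g x * E x)
        = (m:ℝ)⁻¹ * ∑ i, ∑ x, ∑ z, p x * mu p i x z * (g (Function.update x i z) * E x) := by
      have : ∀ x, p x * glauber p g x * E x
          = (m:ℝ)⁻¹ * ∑ i, ∑ z, p x * mu p i x z * (g (Function.update x i z) * E x) := by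
        intro x
        unfold glauber
        rw [show p x * ((m:ℝ)⁻¹ * ∑ i, ∑ z, mu p i x z * g (Function.update x i z)) * E x
            = (m:ℝ)⁻¹ * ((∑ i, ∑ z, mu p i x z * g (Function.update x i z)) * (p x * E x))
            from by ring, Finset.sum_mul]
        congr 1
        apply Finset.sum_congr rfl
        intro i _
        rw [Finset.sum_mul]
        apply Finset.sum_congr rfl
        intro z _
        ring
      rw [Finset.sum_congr rfl fun x _ => this x, ← Finset.mul_sum, Finset.sum_comm]
    have e2 : (∑ x, p x * g x * E x)
        = (m:ℝ)⁻¹ * ∑ i, ∑ x, ∑ z, p x * mu p i x z * (g x * E x) := by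
      have : ∀ i : Fin m, (∑ x, ∑ z, p x * mu p i x z * (g x * E x)) = ∑ x, p x * g x * E x := by
        intro i
        apply Finset.sum_congr rfl
        intro x _
        rw [← Finset.sum_mul, ← Finset.mul_sum, sum_mu p hp, mul_one]
        ring
      rw [Finset.sum_congr rfl fun i _ => this i, Finset.sum_const, Finset.card_univ,
        Fintype.card_fin, nsmul_eq_mul, ← mul_assoc, inv_mul_cancel₀ hm0.ne', one_mul]
    rw [Finset.sum_congr rfl fun x _ => e0 x, Finset.sum_sub_distrib, e1, e2, ← mul_sub,
      ← Finset.sum_sub_distrib]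
    congr 1
    apply Finset.sum_congr rfl
    intro i _
    rw [hW]
    simp only []
    rw [← Finset.sum_sub_distrib]
    apply Finset.sum_congr rfl
    intro x _
    rw [← Finset.sum_sub_distrib]
    apply Finset.sum_congr rfl
    intro z _
    ring
  -- symmetrize W i
  have hWsym : ∀ i, W i = (1/2) * ∑ x, ∑ z, p x * mu p i x z *
      ((g x - g (Function.update x i z)) * (E x - E (Function.update x i z))) := by
    intro i
    have hswap := sum_pmu_swap p hp i
      (fun x z => (g x - g (Function.update x i z)) * E x)
    have e1 : ∀ (x : Fin m → Z) (z : Z),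
        (g (Function.update x i z) - g (Function.update (Function.update x i z) i (x i)))
          * E (Function.update x i z)
        = -((g x - g (Function.update x i z)) * E (Function.update x i z)) := by
      intro x z
      rw [Function.update_idem, Function.update_eq_self]
      ring
    have e2 : W i = ∑ x, ∑ z, p x * mu p i x z *
        (-((g x - g (Function.update x i z)) * E (Function.update x i z))) := by
      rw [hW]
      simp only []
      rw [hswap]
      apply Finset.sum_congr rfl
      intro x _
      apply Finset.sum_congr rfl
      intro z _
      rw [e1 x z]
    have : W i + W i = ∑ x, ∑ z, p x * mu p i x z *
        ((g x - g (Function.update x i z)) * (E x - E (Function.update x i z))) := by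
      nth_rewrite 2 [e2]
      rw [hW]
      simp only []
      rw [← Finset.sum_add_distrib]
      apply Finset.sum_congr rfl
      intro x _
      rw [← Finset.sum_add_distrib]
      apply Finset.sum_congr rfl
      intro z _
      ring
    linarith
  -- bound W i
  have hWbound : ∀ i, W i ≤ θ * Df * Dcoef i g / 2 * M := by
    intro i
    rw [hWsym i]
    have hpt : ∀ (x : Fin m → Z) (z : Z),
        (g x - g (Function.update x i z)) * (E x - E (Function.update x i z))
          ≤ Dcoef i g * (θ * Df) * ((E x + E (Function.update x i z)) / 2) := by
      intro x z
      set u := Function.update x i z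
      calc (g x - g u) * (E x - E u) ≤ |g x - g u| * |E x - E u| := by
            rw [← abs_mul]
            exact le_abs_self _
        _ ≤ Dcoef i g * (|θ * fb x - θ * fb u| * (E x + E u) / 2) := by
            apply mul_le_mul (abs_diff_le_Dcoef i g x z) _ (abs_nonneg _) (Dcoef_nonneg i g)
            exact abs_exp_sub_exp_le (θ * fb x) (θ * fb u)
        _ ≤ Dcoef i g * (θ * Df) * ((E x + E u) / 2) := by
            have h1 : |θ * fb x - θ * fb u| ≤ θ * Df := by
              rw [← mul_sub, abs_mul, abs_of_nonneg hθ]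
              exact mul_le_mul_of_nonneg_left
                (le_trans (abs_diff_le_Dcoef i fb x z) (hDf i)) hθ
            have hS : 0 ≤ (E x + E u) / 2 := by
              have := (hEpos x).le
              have := (hEpos u).le
              linarith
            calc Dcoef i g * (|θ * fb x - θ * fb u| * (E x + E u) / 2)
                = Dcoef i g * (|θ * fb x - θ * fb u| * ((E x + E u) / 2)) := by ring
              _ ≤ Dcoef i g * ((θ * Df) * ((E x + E u) / 2)) :=
                  mul_le_mul_of_nonneg_left
                    (mul_le_mul_of_nonneg_right h1 hS) (Dcoef_nonneg i g)
              _ = Dcoef i g * (θ * Df) * ((E x + E u) / 2) := by ring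
    have hsumEx : (∑ x, ∑ z, p x * mu p i x z * E x) = M := by
      rw [hM]
      apply Finset.sum_congr rfl
      intro x _
      rw [← Finset.sum_mul, ← Finset.mul_sum, sum_mu p hp, mul_one]
    have hswapE := sum_pmu_swap p hp i (fun x z => E x)
    have hsumEu : (∑ x, ∑ z, p x * mu p i x z * E (Function.update x i z)) = M := by
      rw [← hswapE]
      exact hsumEx
    set c : ℝ := Dcoef i g * (θ * Df) with hc
    calc (1/2) * ∑ x, ∑ z, p x * mu p i x z *
          ((g x - g (Function.update x i z)) * (E x - E (Function.update x i z)))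
        ≤ (1/2) * ∑ x, ∑ z, p x * mu p i x z *
            (c * ((E x + E (Function.update x i z)) / 2)) := by
          apply mul_le_mul_of_nonneg_left _ (by norm_num)
          apply Finset.sum_le_sum
          intro x _
          apply Finset.sum_le_sum
          intro z _
          exact mul_le_mul_of_nonneg_left (hpt x z)
            (mul_nonneg (hp x).le (mu_pos p hp i x z).le)
      _ = (c/4) * (∑ x, ∑ z, p x * mu p i x z * E x)
            + (c/4) * (∑ x, ∑ z, p x * mu p i x z * E (Function.update x i z)) := by
          simp only [Finset.mul_sum]
          rw [← Finset.sum_add_distrib]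
          apply Finset.sum_congr rfl
          intro x _
          rw [← Finset.sum_add_distrib]
          apply Finset.sum_congr rfl
          intro z _
          ring
      _ = θ * Df * Dcoef i g / 2 * M := by
          rw [hsumEx, hsumEu, hc]
          ring
  -- combine
  have h1α : (0:ℝ) < 1 - α := by linarith
  calc (∑ x, p x * fb x * E x) = (m:ℝ)⁻¹ * ∑ i, W i := hdecomp
    _ ≤ (m:ℝ)⁻¹ * ∑ i, (θ * Df * Dcoef i g / 2 * M) := by
        apply mul_le_mul_of_nonneg_left (Finset.sum_le_sum fun i _ => hWbound i)
          (by positivity)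
    _ = (m:ℝ)⁻¹ * ((θ * Df / 2 * M) * Scoef g) := by
        unfold Scoef
        congr 1
        rw [Finset.mul_sum]
        apply Finset.sum_congr rfl
        intro i _
        ring
    _ ≤ (m:ℝ)⁻¹ * ((θ * Df / 2 * M) * (R / (1 - κ))) := by
        apply mul_le_mul_of_nonneg_left _ (by positivity)
        apply mul_le_mul_of_nonneg_left hScoefg
        exact mul_nonneg (by positivity) hM0
    _ = θ * (Df * R / (2 * (1 - α))) * M := by
        rw [h1κ]
        field_simp

/-- mgf bound via the differential inequality. -/
lemma mgf_le (hp : ∀ x, 0 < p x) (hsum : ∑ x, p x = 1) (hm : 1 ≤ m)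
    (hα : logCoefficient p < 1)
    (fb : (Fin m → Z) → ℝ) (hmean : ∑ x, p x * fb x = 0)
    (Df : ℝ) (hDf0 : 0 ≤ Df) (hDf : ∀ i, Dcoef i fb ≤ Df)
    (C₀ : ℝ) (hC₀ : 0 < C₀)
    (hC : Df * Scoef fb / (2 * (1 - logCoefficient p)) ≤ C₀)
    (θ : ℝ) (hθ : 0 ≤ θ) :
    (∑ x, p x * Real.exp (θ * fb x)) ≤ Real.exp (C₀ * θ ^ 2 / 2) := by
  classical
  set Mf : ℝ → ℝ := fun u => ∑ x, p x * Real.exp (u * fb x) with hMf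
  have hMpos : ∀ u, 0 < Mf u := fun u =>
    Finset.sum_pos (fun x _ => mul_pos (hp x) (Real.exp_pos _))
      ⟨Classical.arbitrary _, Finset.mem_univ _⟩
  have hderiv : ∀ u : ℝ, HasDerivAt Mf (∑ x, p x * fb x * Real.exp (u * fb x)) u := by
    intro u
    have h1 : ∀ x : Fin m → Z, HasDerivAt (fun v : ℝ => p x * Real.exp (v * fb x))
        (p x * fb x * Real.exp (u * fb x)) u := by
      intro x
      have h2 : HasDerivAt (fun v : ℝ => v * fb x) (fb x) u := by
        simpa using (hasDerivAt_id u).mul_const (fb x)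
      have h4 := h2.exp.const_mul (p x)
      refine h4.congr_deriv ?_
      ring
    exact HasDerivAt.fun_sum (fun x _ => h1 x)
  have hkey : ∀ u : ℝ, 0 ≤ u →
      (∑ x, p x * fb x * Real.exp (u * fb x)) ≤ u * C₀ * Mf u := by
    intro u hu
    calc (∑ x, p x * fb x * Real.exp (u * fb x))
        ≤ u * (Df * Scoef fb / (2 * (1 - logCoefficient p))) * Mf u :=
          key_mgf p hp hm hα fb hmean Df hDf0 hDf u hu
      _ ≤ u * C₀ * Mf u := by
          apply mul_le_mul_of_nonneg_right _ (hMpos u).le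
          exact mul_le_mul_of_nonneg_left hC hu
  set ψ : ℝ → ℝ := fun u => Real.log (Mf u) - C₀ / 2 * u ^ 2 with hψ
  have hψderiv : ∀ u : ℝ, HasDerivAt ψ
      ((∑ x, p x * fb x * Real.exp (u * fb x)) / Mf u - C₀ / 2 * (2 * u)) u := by
    intro u
    have h1 := (hderiv u).log (hMpos u).ne'
    have h2 : HasDerivAt (fun v : ℝ => C₀ / 2 * v ^ 2) (C₀ / 2 * (2 * u)) u := by
      have := (hasDerivAt_pow 2 u).const_mul (C₀ / 2)
      refine this.congr_deriv ?_
      ring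
    exact h1.sub h2
  have hanti : AntitoneOn ψ (Set.Ici 0) := by
    apply antitoneOn_of_deriv_nonpos (convex_Ici 0)
    · exact fun u _ => ((hψderiv u).continuousAt).continuousWithinAt
    · exact fun u _ => ((hψderiv u).differentiableAt).differentiableWithinAt
    · intro u hu
      rw [interior_Ici] at hu
      rw [(hψderiv u).deriv]
      have h1 : (∑ x, p x * fb x * Real.exp (u * fb x)) / Mf u ≤ u * C₀ := by
        rw [div_le_iff₀ (hMpos u)]
        exact hkey u (le_of_lt hu)
      have : C₀ / 2 * (2 * u) = u * C₀ := by ring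
      rw [this]
      linarith
  have hψ0 : ψ 0 = 0 := by
    rw [hψ]
    simp only []
    have : Mf 0 = 1 := by
      rw [hMf]
      simp only [zero_mul, Real.exp_zero, mul_one]
      exact hsum
    rw [this, Real.log_one]
    ring
  have := hanti (Set.self_mem_Ici) (Set.mem_Ici.2 hθ) hθ
  rw [hψ0] at this
  have hlog : Real.log (Mf θ) ≤ C₀ / 2 * θ ^ 2 := by
    rw [hψ] at this
    simp only [] at this
    linarith
  calc Mf θ = Real.exp (Real.log (Mf θ)) := (Real.exp_log (hMpos θ)).symm
    _ ≤ Real.exp (C₀ * θ ^ 2 / 2) := Real.exp_le_exp.2 (by linarith)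

/-- Chernoff bound. -/
lemma chernoff_final (hp : ∀ x, 0 < p x) (hsum : ∑ x, p x = 1) (hm : 1 ≤ m)
    (hα : logCoefficient p < 1) (f : (Fin m → Z) → ℝ)
    (Df : ℝ) (hDf0 : 0 ≤ Df) (hDf : ∀ i, Dcoef i f ≤ Df)
    (C₀ : ℝ) (hC₀ : 0 < C₀)
    (hC : Df * ((m:ℝ) * Df) / (2 * (1 - logCoefficient p)) ≤ C₀)
    (t : ℝ) (ht : 0 < t) :
    (∑ s, if t ≤ f s - ∑ x, p x * f x then p s else 0) ≤ Real.exp (-(t ^ 2) / (2 * C₀)) := by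
  classical
  have h1α : 0 < 1 - logCoefficient p := by linarith
  set Ef : ℝ := ∑ x, p x * f x with hEf
  set fb : (Fin m → Z) → ℝ := fun s => f s - Ef with hfb
  have hDfb : ∀ i, Dcoef i fb ≤ Df := by
    intro i
    apply Dcoef_le
    intro x a b
    have e : fb (Function.update x i a) - fb (Function.update x i b)
        = f (Function.update x i a) - f (Function.update x i b) := by
      simp only [hfb]
      ring
    rw [e]
    exact le_trans (le_Dcoef i f x a b) (hDf i)
  have hmean : ∑ x, p x * fb x = 0 := by
    have e : ∀ x, p x * fb x = p x * f x - p x * Ef := fun x => by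
      simp only [hfb]
      ring
    rw [Finset.sum_congr rfl fun x _ => e x, Finset.sum_sub_distrib, ← Finset.sum_mul, hsum,
      one_mul, ← hEf, sub_self]
  have hScoef : Scoef fb ≤ (m:ℝ) * Df := by
    unfold Scoef
    calc (∑ i, Dcoef i fb) ≤ ∑ _i : Fin m, Df := Finset.sum_le_sum fun i _ => hDfb i
      _ = (m:ℝ) * Df := by
          rw [Finset.sum_const, Finset.card_univ, Fintype.card_fin, nsmul_eq_mul]
  have hCkey : Df * Scoef fb / (2 * (1 - logCoefficient p)) ≤ C₀ := by
    refine le_trans ?_ hC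
    exact div_le_div_of_nonneg_right (mul_le_mul_of_nonneg_left hScoef hDf0)
      (by linarith : (0:ℝ) ≤ 2 * (1 - logCoefficient p))
  set θ : ℝ := t / C₀ with hθdef
  have hθ0 : 0 ≤ θ := le_of_lt (div_pos ht hC₀)
  have hmgf : (∑ x, p x * Real.exp (θ * fb x)) ≤ Real.exp (C₀ * θ ^ 2 / 2) :=
    mgf_le p hp hsum hm hα fb hmean Df hDf0 hDfb C₀ hC₀ hCkey θ hθ0
  calc (∑ s, if t ≤ f s - Ef then p s else 0)
      ≤ ∑ s, p s * Real.exp (θ * fb s) * Real.exp (-(θ * t)) := by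
        apply Finset.sum_le_sum
        intro s _
        by_cases hcond : t ≤ f s - Ef
        · rw [if_pos hcond]
          have h2 : 0 ≤ θ * fb s - θ * t := by
            simp only [hfb]
            have : θ * t ≤ θ * (f s - Ef) := mul_le_mul_of_nonneg_left hcond hθ0
            linarith
          calc p s = p s * 1 := by ring
            _ ≤ p s * Real.exp (θ * fb s - θ * t) := by
                apply mul_le_mul_of_nonneg_left _ (hp s).le
                exact Real.one_le_exp h2
            _ = p s * Real.exp (θ * fb s) * Real.exp (-(θ * t)) := by
                rw [mul_assoc, ← Real.exp_add]
                congr 2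
                try ring
        · rw [if_neg hcond]
          exact mul_nonneg (mul_nonneg (hp s).le (Real.exp_pos _).le) (Real.exp_pos _).le
    _ = Real.exp (-(θ * t)) * ∑ s, p s * Real.exp (θ * fb s) := by
        rw [← Finset.sum_mul]
        ring
    _ ≤ Real.exp (-(θ * t)) * Real.exp (C₀ * θ ^ 2 / 2) :=
        mul_le_mul_of_nonneg_left hmgf (Real.exp_pos _).le
    _ = Real.exp (-(t ^ 2) / (2 * C₀)) := by
        rw [← Real.exp_add]
        congr 1
        rw [hθdef]
        field_simp
        ring

lemma ciSup_diff_le {A B : ℕ → ℝ} (hB : BddAbove (Set.range B)) (c : ℝ)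
    (h : ∀ n, A n ≤ B n + c) : (⨆ n, A n) - (⨆ n, B n) ≤ c := by
  rw [sub_le_iff_le_add]
  apply ciSup_le
  intro n
  calc A n ≤ B n + c := h n
    _ ≤ c + ⨆ n, B n := by
        have := le_ciSup hB n
        linarith

lemma sum_comp_update (x : Fin m → Z) (i0 : Fin m) (a b : Z) (h : Z → ℝ) :
    ((∑ i, h (Function.update x i0 a i)) - ∑ i, h (Function.update x i0 b i)) = h a - h b := by
  have key : ∀ c : Z, (fun i => h (Function.update x i0 c i))
      = Function.update (fun i => h (x i)) i0 (h c) := by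
    intro c
    funext i
    rcases eq_or_ne i i0 with rfl | hne
    · rw [Function.update_self, Function.update_self]
    · rw [Function.update_of_ne hne, Function.update_of_ne hne]
  have e : ∀ c : Z, (∑ i, h (Function.update x i0 c i))
      = h c + ∑ i ∈ Finset.univ \ {i0}, h (x i) := by
    intro c
    calc (∑ i, h (Function.update x i0 c i))
        = ∑ i, Function.update (fun i => h (x i)) i0 (h c) i := by rw [key c]
      _ = h c + ∑ i ∈ Finset.univ \ {i0}, h (x i) :=
          Finset.sum_update_of_mem (Finset.mem_univ i0) (fun i => h (x i)) (h c)
  rw [e a, e b]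
  ring

end Key

end DobAux

/-- There is a universal constant `C' > 0` such that, for every random vector `Z` on `𝒵^m`
with strictly positive pmf `p` and log-coefficient `α_log(Z) < 1`, and every nonempty
countable class `𝒢 = {G n : n ∈ ℕ}` of functions `𝒵 → ℝ` bounded by `L > 0`, setting
`M(S) = sup_{g∈𝒢} ( (1/m) ∑ᵢ g(sᵢ) − E_{S'∼Z}[(1/m) ∑ᵢ g(s'ᵢ)] )`, for all `t > 0`,
`Pr_{S∼Z}[ M(S) − E_{S∼Z}[M(S)] ≥ t ] ≤ exp(−(1 − α_log(Z)) m t² / (C' L²))`. -/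
theorem sup_deviation_one_sided_tail_bound :
    ∃ C' : ℝ, 0 < C' ∧
      ∀ (Z : Type) [Fintype Z] [Nonempty Z] (m : ℕ), 2 ≤ m →
        ∀ (p : (Fin m → Z) → ℝ), (∀ z, 0 < p z) → (∑ z, p z = 1) →
          logCoefficient p < 1 →
          ∀ (G : ℕ → Z → ℝ) (L : ℝ), 0 < L → (∀ n z, |G n z| ≤ L) →
            ∀ t : ℝ, 0 < t →
              (∑ s, if t ≤
                  (⨆ n : ℕ, ((m : ℝ)⁻¹ * ∑ i, G n (s i) -
                      ∑ s', p s' * ((m : ℝ)⁻¹ * ∑ i, G n (s' i)))) -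
                    ∑ s'', p s'' *
                      ⨆ n : ℕ, ((m : ℝ)⁻¹ * ∑ i, G n (s'' i) -
                        ∑ s', p s' * ((m : ℝ)⁻¹ * ∑ i, G n (s' i)))
                then p s else 0) ≤
              Real.exp (-((1 - logCoefficient p) * m * t ^ 2) / (C' * L ^ 2)) := by
  classical
  refine ⟨4, by norm_num, ?_⟩
  intro Z _ _ m hm p hp hsum hα G L hL hG t ht
  have hm1 : 1 ≤ m := le_trans (by norm_num) hm
  have hm0 : (0:ℝ) < (m:ℝ) := by exact_mod_cast Nat.lt_of_lt_of_le Nat.zero_lt_one hm1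
  have h1α : (0:ℝ) < 1 - logCoefficient p := by linarith
  -- the supremum class function
  set f : (Fin m → Z) → ℝ := fun s =>
    ⨆ n : ℕ, ((m : ℝ)⁻¹ * ∑ i, G n (s i) -
      ∑ s', p s' * ((m : ℝ)⁻¹ * ∑ i, G n (s' i))) with hf
  have havg : ∀ (n : ℕ) (s : Fin m → Z), |(m:ℝ)⁻¹ * ∑ i, G n (s i)| ≤ L := by
    intro n s
    rw [abs_mul, abs_inv, Nat.abs_cast]
    calc (m:ℝ)⁻¹ * |∑ i, G n (s i)| ≤ (m:ℝ)⁻¹ * ∑ i, |G n (s i)| := by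
          apply mul_le_mul_of_nonneg_left (Finset.abs_sum_le_sum_abs _ _) (by positivity)
      _ ≤ (m:ℝ)⁻¹ * ∑ _i : Fin m, L := by
          apply mul_le_mul_of_nonneg_left (Finset.sum_le_sum fun i _ => hG n (s i))
            (by positivity)
      _ = L := by
          rw [Finset.sum_const, Finset.card_univ, Fintype.card_fin, nsmul_eq_mul, ← mul_assoc,
            inv_mul_cancel₀ hm0.ne', one_mul]
  have hexp : ∀ n : ℕ, |∑ s', p s' * ((m:ℝ)⁻¹ * ∑ i, G n (s' i))| ≤ L := by
    intro n
    calc |∑ s', p s' * ((m:ℝ)⁻¹ * ∑ i, G n (s' i))|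
        ≤ ∑ s', |p s' * ((m:ℝ)⁻¹ * ∑ i, G n (s' i))| := Finset.abs_sum_le_sum_abs _ _
      _ = ∑ s', p s' * |(m:ℝ)⁻¹ * ∑ i, G n (s' i)| := by
          apply Finset.sum_congr rfl
          intro s' _
          rw [abs_mul, abs_of_pos (hp s')]
      _ ≤ ∑ s', p s' * L :=
          Finset.sum_le_sum fun s' _ => mul_le_mul_of_nonneg_left (havg n s') (hp s').le
      _ = L := by rw [← Finset.sum_mul, hsum, one_mul]
  have hAbdd : ∀ s : Fin m → Z, BddAbove (Set.range fun n : ℕ =>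
      ((m : ℝ)⁻¹ * ∑ i, G n (s i) - ∑ s', p s' * ((m : ℝ)⁻¹ * ∑ i, G n (s' i)))) := by
    intro s
    refine ⟨2 * L, ?_⟩
    rintro _ ⟨n, rfl⟩
    have h1 := (abs_le.1 (havg n s)).2
    have h2 := (abs_le.1 (hexp n)).1
    simp only []
    linarith
  have hDf : ∀ i, DobAux.Dcoef i f ≤ 2 * L / (m:ℝ) := by
    intro i
    apply DobAux.Dcoef_le
    intro x a b
    simp only [hf]
    apply DobAux.ciSup_diff_le (hAbdd _)
    intro n
    have hd := DobAux.sum_comp_update x i a b (G n)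
    have hGd : G n a - G n b ≤ 2 * L := by
      have h1 := (abs_le.1 (hG n a)).2
      have h2 := (abs_le.1 (hG n b)).1
      linarith
    have e : ((m : ℝ)⁻¹ * ∑ i_1, G n (Function.update x i a i_1) -
          ∑ s', p s' * ((m : ℝ)⁻¹ * ∑ i_1, G n (s' i_1)))
        - ((m : ℝ)⁻¹ * ∑ i_1, G n (Function.update x i b i_1) -
          ∑ s', p s' * ((m : ℝ)⁻¹ * ∑ i_1, G n (s' i_1)))
        = (m:ℝ)⁻¹ * (G n a - G n b) := by
      rw [← hd]
      ring
    have : (m:ℝ)⁻¹ * (G n a - G n b) ≤ 2 * L / (m:ℝ) := by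
      rw [div_eq_inv_mul]
      exact mul_le_mul_of_nonneg_left hGd (by positivity)
    linarith [e ▸ this]
  have hC₀ : (0:ℝ) < 2 * L ^ 2 / ((1 - logCoefficient p) * (m:ℝ)) := by positivity
  have hC : (2 * L / (m:ℝ)) * ((m:ℝ) * (2 * L / (m:ℝ))) / (2 * (1 - logCoefficient p))
      ≤ 2 * L ^ 2 / ((1 - logCoefficient p) * (m:ℝ)) := by
    apply le_of_eq
    field_simp
  have main := DobAux.chernoff_final p hp hsum hm1 hα f (2 * L / (m:ℝ)) (by positivity) hDf
    _ hC₀ hC t ht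
  refine le_trans (le_of_eq rfl) (le_trans main (le_of_eq ?_))
  congr 1
  field_simp
  ring
end
end

section
/- Let X be a nonempty finite set, D a probability distribution on X, f* : X → {0,1} a target function, and H' a class of hypotheses h : X → {0,1}. For h ∈ H' let err(h) = Pr_{x∼D}[h(x) ≠ f*(x)], and for a sample (x_1,…,x_{m_l}) of i.i.d. draws from D let the empirical error be êrr(h) = (1/m_l) Σ_{i=1}^{m_l} 1[h(x_i) ≠ f*(x_i)]. Let ε, δ ∈ (0,1). If m_l ≥ (2/ε) · ( ln( 2 · H'[2 m_l, D] ) + ln(4/δ) ), where H'[n, D] = E_{x_1,…,x_n ∼ D i.i.d.} [ |{ (h(x_1),…,h(x_n)) : h ∈ H' }| ] is the expected number of splits of n i.i.d. points from D by H', then with probability at least 1 − δ/2 over the sample, every h ∈ H' with err(h) ≥ ε has êrr(h) > 0. -/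
set_option maxHeartbeats 1000000

open Classical
noncomputable section

/-- The expected number of splits `H'[n, D]` of `n` i.i.d. points drawn from the distribution
`D` on the finite set `X` by the hypothesis class `H'`: the expectation of the cardinality of
the set of label vectors `{(h(x₁),…,h(xₙ)) : h ∈ H'}`. -/
def expectedSplits {X : Type*} [Fintype X] (D : X → ℝ) (H' : Set (X → Bool)) (n : ℕ) : ℝ :=
  ∑ x : Fin n → X, (∏ i, D (x i)) *
    (Set.ncard {v : Fin n → Bool | ∃ h ∈ H', v = fun i => h (x i)} : ℝ)

namespace VCaux

variable {X : Type*} [Fintype X]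

/-- Weight of a sample. -/
def wt (D : X → ℝ) {m : ℕ} (s : Fin m → X) : ℝ := ∏ i, D (s i)

lemma wt_nonneg (D : X → ℝ) (hD : ∀ x, 0 ≤ D x) {m : ℕ} (s : Fin m → X) : 0 ≤ wt D s :=
  Finset.prod_nonneg fun i _ => hD _

lemma sum_pi_prod {Y : Type*} [Fintype Y] {m : ℕ} (F : Fin m → Y → ℝ) :
    ∑ t : Fin m → Y, ∏ i, F i (t i) = ∏ i, ∑ x, F i x := (Fintype.prod_sum F).symm

lemma sum_wt (D : X → ℝ) (hDsum : ∑ x, D x = 1) (m : ℕ) :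
    ∑ t : Fin m → X, wt D t = 1 := by
  have := sum_pi_prod (fun (_ : Fin m) (x : X) => D x)
  simpa [wt, hDsum] using this

lemma exp_prod (D : X → ℝ) {m : ℕ} (g : Fin m → X → ℝ) :
    ∑ t : Fin m → X, wt D t * ∏ i, g i (t i) = ∏ i, ∑ x, D x * g i x := by
  rw [← sum_pi_prod (fun i x => D x * g i x)]
  refine Finset.sum_congr rfl fun t _ => ?_
  rw [wt, ← Finset.prod_mul_distrib]

lemma exp_single (D : X → ℝ) (hDsum : ∑ x, D x = 1) {m : ℕ} (f : X → ℝ) (j : Fin m) :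
    ∑ t : Fin m → X, wt D t * f (t j) = ∑ x, D x * f x := by
  have h := exp_prod D (m := m) (fun i x => if i = j then f x else 1)
  have h1 : ∀ t : Fin m → X, (∏ i, (if i = j then f (t i) else 1)) = f (t j) := by
    intro t
    simpa using Finset.prod_ite_eq' Finset.univ j (fun i => f (t i))
  have h2 : (∏ i : Fin m, ∑ x, D x * (if i = j then f x else 1))
      = ∑ x, D x * f x := by
    have key : ∀ i : Fin m, (∑ x, D x * (if i = j then f x else 1))
        = if i = j then (∑ x, D x * f x) else 1 := by
      intro i
      by_cases hij : i = j <;> simp [hij, hDsum]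
    rw [Finset.prod_congr rfl (fun i _ => key i)]
    simpa using Finset.prod_ite_eq' Finset.univ j (fun _ => ∑ x, D x * f x)
  calc ∑ t : Fin m → X, wt D t * f (t j)
      = ∑ t : Fin m → X, wt D t * ∏ i, (if i = j then f (t i) else 1) := by
        refine Finset.sum_congr rfl fun t _ => ?_; rw [h1]
    _ = ∑ x, D x * f x := by rw [h, h2]

lemma exp_pair (D : X → ℝ) (hDsum : ∑ x, D x = 1) {m : ℕ} (f g : X → ℝ) (j l : Fin m)
    (hjl : j ≠ l) :
    ∑ t : Fin m → X, wt D t * (f (t j) * g (t l))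
      = (∑ x, D x * f x) * (∑ x, D x * g x) := by
  have h := exp_prod D (m := m)
    (fun i x => (if i = j then f x else 1) * (if i = l then g x else 1))
  have h1 : ∀ t : Fin m → X,
      (∏ i, ((if i = j then f (t i) else 1) * (if i = l then g (t i) else 1)))
        = f (t j) * g (t l) := by
    intro t
    rw [Finset.prod_mul_distrib]
    have e1 : (∏ i, (if i = j then f (t i) else 1)) = f (t j) := by
      simpa using Finset.prod_ite_eq' Finset.univ j (fun i => f (t i))
    have e2 : (∏ i, (if i = l then g (t i) else 1)) = g (t l) := by
      simpa using Finset.prod_ite_eq' Finset.univ l (fun i => g (t i))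
    rw [e1, e2]
  have h2 : (∏ i : Fin m, ∑ x, D x * ((if i = j then f x else 1) * (if i = l then g x else 1)))
      = (∑ x, D x * f x) * (∑ x, D x * g x) := by
    have key : ∀ i : Fin m,
        (∑ x, D x * ((if i = j then f x else 1) * (if i = l then g x else 1)))
        = (if i = j then (∑ x, D x * f x) else 1) * (if i = l then (∑ x, D x * g x) else 1) := by
      intro i
      by_cases hij : i = j
      · subst hij
        have hil : i ≠ l := hjl
        simp [hil]
      · by_cases hil : i = l
        · subst hil; simp [hij]
        · simp [hij, hil, hDsum]
    rw [Finset.prod_congr rfl (fun i _ => key i), Finset.prod_mul_distrib]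
    have e1 : (∏ i : Fin m, (if i = j then (∑ x, D x * f x) else 1)) = ∑ x, D x * f x := by
      simpa using Finset.prod_ite_eq' Finset.univ j (fun _ => ∑ x, D x * f x)
    have e2 : (∏ i : Fin m, (if i = l then (∑ x, D x * g x) else 1)) = ∑ x, D x * g x := by
      simpa using Finset.prod_ite_eq' Finset.univ l (fun _ => ∑ x, D x * g x)
    rw [e1, e2]
  calc ∑ t : Fin m → X, wt D t * (f (t j) * g (t l))
      = ∑ t : Fin m → X, wt D t *
          ∏ i, ((if i = j then f (t i) else 1) * (if i = l then g (t i) else 1)) := by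
        refine Finset.sum_congr rfl fun t _ => ?_; rw [h1]
    _ = (∑ x, D x * f x) * (∑ x, D x * g x) := by rw [h, h2]

/-- Cantelli's inequality for finite weighted sums. -/
lemma cantelli {α : Type*} [Fintype α] (w Z : α → ℝ) (hw : ∀ a, 0 ≤ w a)
    (hw1 : ∑ a, w a = 1) (μ t S : ℝ) (hμ : ∑ a, w a * Z a = μ)
    (hS : ∑ a, w a * (μ - Z a) ^ 2 = S) (ht : 0 < t) (htS : S ≤ t ^ 2) :
    ∑ a, (if Z a ≤ μ - t then w a else 0) ≤ 1 / 2 := by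
  have hS0 : 0 ≤ S := by
    rw [← hS]; exact Finset.sum_nonneg fun a _ => mul_nonneg (hw a) (sq_nonneg _)
  set u := S / t with hu
  have hu0 : 0 ≤ u := div_nonneg hS0 ht.le
  have htu : 0 < t + u := by linarith
  have hzero : ∑ a, w a * (μ - Z a) = 0 := by
    have e : ∀ a, w a * (μ - Z a) = μ * w a - w a * Z a := fun a => by ring
    rw [Finset.sum_congr rfl fun a _ => e a, Finset.sum_sub_distrib, ← Finset.mul_sum,
      hw1, hμ]
    ring
  have hexp : ∑ a, w a * (μ - Z a + u) ^ 2 = S + u ^ 2 := by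
    have e : ∀ a, w a * (μ - Z a + u) ^ 2
        = w a * (μ - Z a) ^ 2 + (2 * u) * (w a * (μ - Z a)) + u ^ 2 * w a := fun a => by ring
    rw [Finset.sum_congr rfl fun a _ => e a, Finset.sum_add_distrib, Finset.sum_add_distrib,
      hS, ← Finset.mul_sum, hzero, ← Finset.mul_sum, hw1]
    ring
  have key : ∀ a, (if Z a ≤ μ - t then w a else 0) ≤ w a * ((μ - Z a + u) / (t + u)) ^ 2 := by
    intro a
    by_cases hz : Z a ≤ μ - t
    · rw [if_pos hz]
      have h1 : t + u ≤ μ - Z a + u := by linarith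
      have h2 : 1 ≤ (μ - Z a + u) / (t + u) := (one_le_div htu).mpr h1
      nlinarith [hw a, sq_nonneg ((μ - Z a + u) / (t + u) - 1)]
    · rw [if_neg hz]
      have : (0:ℝ) ≤ ((μ - Z a + u) / (t + u)) ^ 2 := sq_nonneg _
      exact mul_nonneg (hw a) this
  calc ∑ a, (if Z a ≤ μ - t then w a else 0)
      ≤ ∑ a, w a * ((μ - Z a + u) / (t + u)) ^ 2 := Finset.sum_le_sum fun a _ => key a
    _ = (S + u ^ 2) / (t + u) ^ 2 := by
        rw [← hexp, Finset.sum_div]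
        refine Finset.sum_congr rfl fun a _ => ?_
        rw [div_pow, mul_div_assoc]
    _ ≤ 1 / 2 := by
        have ht0 : t ≠ 0 := ht.ne'
        have hts : 0 < t ^ 2 + S := by positivity
        have heq : (S + u ^ 2) / (t + u) ^ 2 = S / (t ^ 2 + S) := by
          rw [hu]
          field_simp
        rw [heq, div_le_div_iff₀ hts (by norm_num)]
        linarith

/-- Pointwise error indicator. -/
def phi (fstar h : X → Bool) (x : X) : ℝ := if h x ≠ fstar x then 1 else 0

lemma phi_nonneg (fstar h : X → Bool) (x : X) : 0 ≤ phi fstar h x := by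
  unfold phi; split <;> norm_num

lemma phi_le_one (fstar h : X → Bool) (x : X) : phi fstar h x ≤ 1 := by
  unfold phi; split <;> norm_num

lemma phi_sq (fstar h : X → Bool) (x : X) : phi fstar h x * phi fstar h x = phi fstar h x := by
  unfold phi; split <;> norm_num

/-- True error. -/
def errD (D : X → ℝ) (fstar h : X → Bool) : ℝ := ∑ x, D x * phi fstar h x

lemma errD_eq (D : X → ℝ) (fstar h : X → Bool) :
    errD D fstar h = ∑ x, if h x ≠ fstar x then D x else 0 := by
  unfold errD phi
  refine Finset.sum_congr rfl fun x _ => ?_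
  split <;> simp

lemma errD_nonneg (D : X → ℝ) (hD : ∀ x, 0 ≤ D x) (fstar h : X → Bool) :
    0 ≤ errD D fstar h :=
  Finset.sum_nonneg fun x _ => mul_nonneg (hD x) (phi_nonneg _ _ _)

lemma errD_le_one (D : X → ℝ) (hD : ∀ x, 0 ≤ D x) (hDsum : ∑ x, D x = 1)
    (fstar h : X → Bool) : errD D fstar h ≤ 1 := by
  have : errD D fstar h ≤ ∑ x, D x :=
    Finset.sum_le_sum fun x _ => by
      have := phi_le_one fstar h x
      nlinarith [hD x, phi_nonneg fstar h x]
  rw [hDsum] at this; exact this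

/-- Empirical error count. -/
def Zc (fstar h : X → Bool) {m : ℕ} (t : Fin m → X) : ℝ := ∑ i, phi fstar h (t i)

lemma Zc_nonneg (fstar h : X → Bool) {m : ℕ} (t : Fin m → X) : 0 ≤ Zc fstar h t :=
  Finset.sum_nonneg fun i _ => phi_nonneg _ _ _

lemma exp_Z (D : X → ℝ) (hDsum : ∑ x, D x = 1) (fstar h : X → Bool) (m : ℕ) :
    ∑ t : Fin m → X, wt D t * Zc fstar h t = m * errD D fstar h := by
  unfold Zc
  have e : ∀ t : Fin m → X, wt D t * ∑ i, phi fstar h (t i)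
      = ∑ i, wt D t * phi fstar h (t i) := fun t => Finset.mul_sum _ _ _
  rw [Finset.sum_congr rfl fun t _ => e t, Finset.sum_comm]
  rw [Finset.sum_congr rfl fun i (_ : i ∈ Finset.univ) =>
    exp_single D hDsum (phi fstar h) i]
  simp [errD, Finset.sum_const, mul_comm]

lemma exp_Z_sq (D : X → ℝ) (hDsum : ∑ x, D x = 1) (fstar h : X → Bool) (m : ℕ) :
    ∑ t : Fin m → X, wt D t * (Zc fstar h t) ^ 2
      = m * errD D fstar h * (1 - errD D fstar h) + (m * errD D fstar h) ^ 2 := by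
  set p := errD D fstar h with hp
  have e : ∀ t : Fin m → X, wt D t * (Zc fstar h t) ^ 2
      = ∑ j, ∑ l, wt D t * (phi fstar h (t j) * phi fstar h (t l)) := by
    intro t
    rw [sq]
    unfold Zc
    rw [Finset.sum_mul_sum]
    rw [Finset.mul_sum]
    refine Finset.sum_congr rfl fun j _ => ?_
    rw [Finset.mul_sum]
  rw [Finset.sum_congr rfl fun t _ => e t]
  rw [Finset.sum_comm]
  have inner : ∀ j : Fin m, ∑ t : Fin m → X, ∑ l : Fin m,
      wt D t * (phi fstar h (t j) * phi fstar h (t l))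
      = p + (m - 1) * p ^ 2 := by
    intro j
    rw [Finset.sum_comm]
    have e2 : ∀ l : Fin m, ∑ t : Fin m → X, wt D t * (phi fstar h (t j) * phi fstar h (t l))
        = if j = l then p else p ^ 2 := by
      intro l
      by_cases hjl : j = l
      · subst hjl
        rw [if_pos rfl]
        have : ∀ t : Fin m → X, wt D t * (phi fstar h (t j) * phi fstar h (t j))
            = wt D t * phi fstar h (t j) := fun t => by rw [phi_sq]
        rw [Finset.sum_congr rfl fun t _ => this t]
        exact exp_single D hDsum (phi fstar h) j
      · rw [if_neg hjl, sq]
        exact exp_pair D hDsum (phi fstar h) (phi fstar h) j l hjl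
    rw [Finset.sum_congr rfl fun l _ => e2 l]
    have e3 : ∀ l : Fin m, (if j = l then p else p ^ 2)
        = p ^ 2 + (if j = l then p - p ^ 2 else 0) := by
      intro l; by_cases hjl : j = l <;> simp [hjl]
    rw [Finset.sum_congr rfl fun l _ => e3 l, Finset.sum_add_distrib,
      Finset.sum_ite_eq Finset.univ j (fun _ => p - p ^ 2)]
    simp [Finset.sum_const]
    ring
  rw [Finset.sum_congr rfl fun j _ => inner j]
  simp [Finset.sum_const]
  ring

lemma var_Z (D : X → ℝ) (hDsum : ∑ x, D x = 1) (fstar h : X → Bool) (m : ℕ) :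
    ∑ t : Fin m → X, wt D t * (m * errD D fstar h - Zc fstar h t) ^ 2
      = m * errD D fstar h * (1 - errD D fstar h) := by
  set p := errD D fstar h with hp
  have e : ∀ t : Fin m → X, wt D t * ((m : ℝ) * p - Zc fstar h t) ^ 2
      = ((m : ℝ) * p) ^ 2 * wt D t - (2 * ((m : ℝ) * p)) * (wt D t * Zc fstar h t)
        + wt D t * (Zc fstar h t) ^ 2 := fun t => by ring
  rw [Finset.sum_congr rfl fun t _ => e t, Finset.sum_add_distrib, Finset.sum_sub_distrib,
    ← Finset.mul_sum, ← Finset.mul_sum, sum_wt D hDsum, exp_Z D hDsum fstar h m,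
    exp_Z_sq D hDsum fstar h m]
  ring

lemma tail_ge_half (D : X → ℝ) (hD : ∀ x, 0 ≤ D x) (hDsum : ∑ x, D x = 1)
    (fstar h : X → Bool) {m : ℕ} (k : ℝ)
    (hk1 : k < m * errD D fstar h)
    (hk2 : Real.sqrt ((m : ℝ) * errD D fstar h * (1 - errD D fstar h))
      ≤ m * errD D fstar h - k) :
    1 / 2 ≤ ∑ t : Fin m → X, (if k ≤ Zc fstar h t then wt D t else 0) := by
  set p := errD D fstar h with hp
  have hS0 : 0 ≤ (m : ℝ) * p * (1 - p) := by
    have h1 : 0 ≤ p := errD_nonneg D hD fstar h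
    have h2 : p ≤ 1 := errD_le_one D hD hDsum fstar h
    have h3 : (0:ℝ) ≤ (m : ℝ) := Nat.cast_nonneg m
    have h4 : (0:ℝ) ≤ 1 - p := by linarith
    exact mul_nonneg (mul_nonneg h3 h1) h4
  have htS : (m : ℝ) * p * (1 - p) ≤ ((m : ℝ) * p - k) ^ 2 := by
    have := Real.sq_sqrt hS0
    nlinarith [Real.sqrt_nonneg ((m : ℝ) * p * (1 - p))]
  have hC := cantelli (w := wt D) (Z := Zc fstar h) (wt_nonneg D hD) (sum_wt D hDsum m)
    ((m : ℝ) * p) ((m : ℝ) * p - k) ((m : ℝ) * p * (1 - p))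
    (exp_Z D hDsum fstar h m) (var_Z D hDsum fstar h m) (by linarith) htS
  have hmk : (m : ℝ) * p - ((m : ℝ) * p - k) = k := by ring
  rw [hmk] at hC
  have hsplit : ∑ t : Fin m → X, (if k ≤ Zc fstar h t then wt D t else 0)
      = 1 - ∑ t : Fin m → X, (if ¬ (k ≤ Zc fstar h t) then wt D t else 0) := by
    have e : ∀ t : Fin m → X, (if k ≤ Zc fstar h t then wt D t else 0)
        = wt D t - (if ¬ (k ≤ Zc fstar h t) then wt D t else 0) := by
      intro t
      by_cases hz : k ≤ Zc fstar h t
      · rw [if_pos hz, if_neg (not_not_intro hz)]; ring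
      · rw [if_neg hz, if_pos hz]; ring
    rw [Finset.sum_congr rfl fun t _ => e t, Finset.sum_sub_distrib, sum_wt D hDsum m]
  have hmono : ∑ t : Fin m → X, (if ¬ (k ≤ Zc fstar h t) then wt D t else 0)
      ≤ ∑ t : Fin m → X, (if Zc fstar h t ≤ k then wt D t else 0) := by
    refine Finset.sum_le_sum fun t _ => ?_
    by_cases hz : k ≤ Zc fstar h t
    · rw [if_neg (not_not_intro hz)]
      split
      · exact wt_nonneg D hD t
      · exact le_rfl
    · rw [if_pos hz, if_pos (le_of_not_ge hz)]
  rw [hsplit]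
  have := le_trans hmono hC
  linarith

/-- The swap map on double samples. -/
def swp {m : ℕ} (σ : Fin m → Bool) (p : (Fin m → X) × (Fin m → X)) :
    (Fin m → X) × (Fin m → X) :=
  (fun i => if σ i then p.2 i else p.1 i, fun i => if σ i then p.1 i else p.2 i)

lemma swp_invol {m : ℕ} (σ : Fin m → Bool) : Function.Involutive (swp (X := X) σ) := by
  intro p
  unfold swp
  refine Prod.ext ?_ ?_ <;> funext i <;> by_cases h : σ i <;> simp [h]

lemma wt_swp (D : X → ℝ) {m : ℕ} (σ : Fin m → Bool) (p : (Fin m → X) × (Fin m → X)) :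
    wt D (swp σ p).1 * wt D (swp σ p).2 = wt D p.1 * wt D p.2 := by
  unfold wt swp
  rw [← Finset.prod_mul_distrib, ← Finset.prod_mul_distrib]
  exact Finset.prod_congr rfl fun i _ => by by_cases h : σ i <;> simp [h, mul_comm]

lemma swap_sum {m : ℕ} (D : X → ℝ) (F : ((Fin m → X) × (Fin m → X)) → ℝ) (σ : Fin m → Bool) :
    ∑ p : (Fin m → X) × (Fin m → X), (wt D p.1 * wt D p.2) * F p
      = ∑ p : (Fin m → X) × (Fin m → X), (wt D p.1 * wt D p.2) * F (swp σ p) := by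
  refine (Fintype.sum_bijective (swp σ) (swp_invol σ).bijective _ _ fun p => ?_).symm
  rw [wt_swp D σ p]

/-- The per-labelling swap condition. -/
def Gpred (fstar : X → Bool) {m : ℕ} (s t : Fin m → X)
    (q : (Fin m → Bool) × (Fin m → Bool)) (k : ℝ) (σ : Fin m → Bool) : Prop :=
  (∀ i, if σ i then q.2 i = fstar (t i) else q.1 i = fstar (s i)) ∧
    k ≤ ∑ i, (if (if σ i then q.1 i ≠ fstar (s i) else q.2 i ≠ fstar (t i)) then (1:ℝ) else 0)

/-- Counting the swaps compatible with one labelling. -/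
lemma sigma_count (fstar : X → Bool) {m : ℕ} (s t : Fin m → X)
    (q : (Fin m → Bool) × (Fin m → Bool)) (k K : ℝ) (hK0 : 0 ≤ K)
    (hK : ∀ d : ℕ, k ≤ (d : ℝ) → ((2 : ℝ) ^ d)⁻¹ ≤ K) :
    ∑ σ : Fin m → Bool, (if Gpred fstar s t q k σ then (1:ℝ) else 0) ≤ 2 ^ m * K := by
  by_cases hex : ∃ σ, Gpred fstar s t q k σ
  · obtain ⟨σ₀, hσ₀⟩ := hex
    have noBoth : ∀ i, q.1 i = fstar (s i) ∨ q.2 i = fstar (t i) := by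
      intro i
      have h1 := hσ₀.1 i
      by_cases hs : σ₀ i = true
      · rw [if_pos hs] at h1; exact Or.inr h1
      · rw [if_neg hs] at h1; exact Or.inl h1
    set xr := fun i => q.1 i ≠ fstar (s i) ∨ q.2 i ≠ fstar (t i) with hxr
    set d := (Finset.univ.filter xr).card with hd
    have hkd : k ≤ (d : ℝ) := by
      have hsel : ∀ i, (if (if σ₀ i then q.1 i ≠ fstar (s i) else q.2 i ≠ fstar (t i))
          then (1:ℝ) else 0) ≤ (if xr i then (1:ℝ) else 0) := by
        intro i
        by_cases hc : (if σ₀ i then q.1 i ≠ fstar (s i) else q.2 i ≠ fstar (t i))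
        · rw [if_pos hc]
          have hx : xr i := by
            rw [hxr]
            by_cases hb : σ₀ i = true
            · rw [if_pos hb] at hc; exact Or.inl hc
            · rw [if_neg hb] at hc; exact Or.inr hc
          rw [if_pos hx]
        · rw [if_neg hc]
          split <;> norm_num
      have h2 : (∑ i, (if xr i then (1:ℝ) else 0)) = d := by
        rw [hd]; exact Finset.sum_boole xr Finset.univ
      calc k ≤ ∑ i, (if (if σ₀ i then q.1 i ≠ fstar (s i) else q.2 i ≠ fstar (t i))
            then (1:ℝ) else 0) := hσ₀.2
        _ ≤ ∑ i, (if xr i then (1:ℝ) else 0) := Finset.sum_le_sum fun i _ => hsel i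
        _ = d := h2
    have hdm : d ≤ m := by
      calc d ≤ Finset.univ.card := Finset.card_filter_le _ _
        _ = m := by simp
    have hpt : ∀ σ : Fin m → Bool, (if Gpred fstar s t q k σ then (1:ℝ) else 0)
        ≤ ∏ i, (if (if σ i then q.2 i = fstar (t i) else q.1 i = fstar (s i))
          then (1:ℝ) else 0) := by
      intro σ
      by_cases hGσ : Gpred fstar s t q k σ
      · rw [if_pos hGσ]
        have e : ∀ i, (if (if σ i then q.2 i = fstar (t i) else q.1 i = fstar (s i))
            then (1:ℝ) else 0) = 1 := fun i => if_pos (hGσ.1 i)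
        rw [Finset.prod_congr rfl fun i _ => e i]
        simp
      · rw [if_neg hGσ]
        exact Finset.prod_nonneg fun i _ => by
          by_cases hc : (if σ i then q.2 i = fstar (t i) else q.1 i = fstar (s i)) <;>
            simp [hc]
    have hprod3 : (∏ i : Fin m, (if xr i then (1:ℝ) else 2)) = 2 ^ (m - d) := by
      rw [Finset.prod_ite (fun _ => (1:ℝ)) (fun _ => (2:ℝ)), Finset.prod_const,
        Finset.prod_const]
      have hcards : (Finset.univ.filter xr).card
          + (Finset.univ.filter fun i => ¬ xr i).card = m := by
        rw [Finset.card_filter_add_card_filter_not]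
        simp
      have hc2 : (Finset.univ.filter fun i => ¬ xr i).card = m - d := by omega
      rw [hc2]
      simp
    have hfin : (2:ℝ) ^ (m - d) ≤ 2 ^ m * K := by
      have he : (2:ℝ) ^ (m - d) = 2 ^ m * ((2:ℝ) ^ d)⁻¹ := by
        rw [pow_sub₀ (2:ℝ) (by norm_num) hdm]
      rw [he]
      exact mul_le_mul_of_nonneg_left (hK d hkd) (by positivity)
    calc ∑ σ : Fin m → Bool, (if Gpred fstar s t q k σ then (1:ℝ) else 0)
        ≤ ∑ σ : Fin m → Bool, ∏ i, (if (if σ i then q.2 i = fstar (t i)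
            else q.1 i = fstar (s i)) then (1:ℝ) else 0) :=
          Finset.sum_le_sum fun σ _ => hpt σ
      _ = ∏ i : Fin m, ∑ b : Bool, (if (if b then q.2 i = fstar (t i)
            else q.1 i = fstar (s i)) then (1:ℝ) else 0) :=
          sum_pi_prod (fun i (b : Bool) => if (if b then q.2 i = fstar (t i)
            else q.1 i = fstar (s i)) then (1:ℝ) else 0)
      _ = ∏ i : Fin m, (if xr i then (1:ℝ) else 2) := by
          refine Finset.prod_congr rfl fun i _ => ?_
          rw [Fintype.sum_bool]
          by_cases h1 : q.1 i = fstar (s i) <;> by_cases h2 : q.2 i = fstar (t i)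
          · have hx : ¬ xr i := by
              rw [hxr]
              exact fun hcon => hcon.elim (fun hc => hc h1) (fun hc => hc h2)
            simp [h1, h2, hx] <;> norm_num
          · have hx : xr i := by rw [hxr]; exact Or.inr h2
            simp [h1, h2, hx]
          · have hx : xr i := by rw [hxr]; exact Or.inl h1
            simp [h1, h2, hx]
          · exact absurd (noBoth i) (by simp [h1, h2])
      _ = 2 ^ (m - d) := hprod3
      _ ≤ 2 ^ m * K := hfin
  · have hz : ∀ σ : Fin m → Bool, (if Gpred fstar s t q k σ then (1:ℝ) else 0) = 0 := by
      intro σ; exact if_neg fun h => hex ⟨σ, h⟩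
    rw [Finset.sum_congr rfl fun σ _ => hz σ]
    simp
    positivity

/-- The bad event on double samples. -/
def Bpred (fstar : X → Bool) (H' : Set (X → Bool)) (k : ℝ) {m : ℕ}
    (p : (Fin m → X) × (Fin m → X)) : Prop :=
  ∃ h ∈ H', (∀ i, h (p.1 i) = fstar (p.1 i)) ∧ k ≤ Zc fstar h p.2

/-- Number of splits of a double sample. -/
def Npair (H' : Set (X → Bool)) {m : ℕ} (p : (Fin m → X) × (Fin m → X)) : ℕ :=
  Set.ncard {q : (Fin m → Bool) × (Fin m → Bool) |
    ∃ h ∈ H', q = (fun i => h (p.1 i), fun i => h (p.2 i))}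

lemma swap_bound (D : X → ℝ) (hD : ∀ x, 0 ≤ D x) (fstar : X → Bool) (H' : Set (X → Bool))
    {m : ℕ} (k K : ℝ) (hK0 : 0 ≤ K) (hK : ∀ d : ℕ, k ≤ (d : ℝ) → ((2 : ℝ) ^ d)⁻¹ ≤ K)
    (p : (Fin m → X) × (Fin m → X)) :
    ((2 : ℝ) ^ m)⁻¹ * ∑ σ : Fin m → Bool, (if Bpred fstar H' k (swp σ p) then (1:ℝ) else 0)
      ≤ K * Npair H' p := by
  classical
  have hVfin : {q : (Fin m → Bool) × (Fin m → Bool) |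
      ∃ h ∈ H', q = (fun i => h (p.1 i), fun i => h (p.2 i))}.Finite := Set.toFinite _
  set Vfin := hVfin.toFinset with hVfin'
  have hcard : (Vfin.card : ℝ) = Npair H' p := by
    rw [Npair, Set.ncard_eq_toFinset_card _ hVfin]
  have hb1 : ∀ σ : Fin m → Bool, (if Bpred fstar H' k (swp σ p) then (1:ℝ) else 0)
      ≤ ∑ q ∈ Vfin, (if Gpred fstar p.1 p.2 q k σ then (1:ℝ) else 0) := by
    intro σ
    by_cases hB : Bpred fstar H' k (swp σ p)
    · rw [if_pos hB]
      obtain ⟨h, hh, h1, h2⟩ := hB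
      have hmem : ((fun i => h (p.1 i), fun i => h (p.2 i)) :
          (Fin m → Bool) × (Fin m → Bool)) ∈ Vfin := by
        rw [hVfin', Set.Finite.mem_toFinset]
        exact ⟨h, hh, rfl⟩
      have hGq : Gpred fstar p.1 p.2
          ((fun i => h (p.1 i), fun i => h (p.2 i)) : (Fin m → Bool) × (Fin m → Bool))
          k σ := by
        refine ⟨?_, ?_⟩
        · intro i
          by_cases hs : σ i = true
          · rw [if_pos hs]
            show h (p.2 i) = fstar (p.2 i)
            simpa [swp, hs] using h1 i
          · rw [if_neg hs]
            show h (p.1 i) = fstar (p.1 i)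
            simpa [swp, hs] using h1 i
        · have e : Zc fstar h (swp σ p).2 = ∑ i, (if (if σ i
              then ((fun i => h (p.1 i), fun i => h (p.2 i)) :
                (Fin m → Bool) × (Fin m → Bool)).1 i ≠ fstar (p.1 i)
              else ((fun i => h (p.1 i), fun i => h (p.2 i)) :
                (Fin m → Bool) × (Fin m → Bool)).2 i ≠ fstar (p.2 i))
              then (1:ℝ) else 0) := by
            unfold Zc phi
            refine Finset.sum_congr rfl fun i _ => ?_
            by_cases hs : σ i = true <;> simp [swp, hs]
          rw [← e]
          exact h2
      have hnn : ∀ q ∈ Vfin, (0:ℝ) ≤ (if Gpred fstar p.1 p.2 q k σ then (1:ℝ) else 0) := by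
        intro q _; split <;> norm_num
      calc (1:ℝ) = (if Gpred fstar p.1 p.2
            ((fun i => h (p.1 i), fun i => h (p.2 i)) : (Fin m → Bool) × (Fin m → Bool))
            k σ then (1:ℝ) else 0) := (if_pos hGq).symm
        _ ≤ _ := Finset.single_le_sum hnn hmem
    · rw [if_neg hB]
      exact Finset.sum_nonneg fun q _ => by split <;> norm_num
  have hstep : ∑ σ : Fin m → Bool, (if Bpred fstar H' k (swp σ p) then (1:ℝ) else 0)
      ≤ Vfin.card * (2 ^ m * K) := by
    calc ∑ σ : Fin m → Bool, (if Bpred fstar H' k (swp σ p) then (1:ℝ) else 0)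
        ≤ ∑ σ : Fin m → Bool, ∑ q ∈ Vfin, (if Gpred fstar p.1 p.2 q k σ then (1:ℝ) else 0) :=
          Finset.sum_le_sum fun σ _ => hb1 σ
      _ = ∑ q ∈ Vfin, ∑ σ : Fin m → Bool, (if Gpred fstar p.1 p.2 q k σ then (1:ℝ) else 0) :=
          Finset.sum_comm
      _ ≤ ∑ _q ∈ Vfin, (2:ℝ) ^ m * K :=
          Finset.sum_le_sum fun q _ => sigma_count fstar p.1 p.2 q k K hK0 hK
      _ = Vfin.card * (2 ^ m * K) := by rw [Finset.sum_const, nsmul_eq_mul]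
  calc ((2 : ℝ) ^ m)⁻¹ * ∑ σ : Fin m → Bool, (if Bpred fstar H' k (swp σ p) then (1:ℝ) else 0)
      ≤ ((2 : ℝ) ^ m)⁻¹ * (Vfin.card * (2 ^ m * K)) :=
        mul_le_mul_of_nonneg_left hstep (by positivity)
    _ = K * Npair H' p := by
        rw [← hcard]
        field_simp

lemma step2 (D : X → ℝ) (hD : ∀ x, 0 ≤ D x) (fstar : X → Bool) (H' : Set (X → Bool))
    {m : ℕ} (k K : ℝ) (hK0 : 0 ≤ K) (hK : ∀ d : ℕ, k ≤ (d : ℝ) → ((2 : ℝ) ^ d)⁻¹ ≤ K) :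
    ∑ p : (Fin m → X) × (Fin m → X), (wt D p.1 * wt D p.2) *
        (if Bpred fstar H' k p then (1:ℝ) else 0)
      ≤ K * ∑ p : (Fin m → X) × (Fin m → X), (wt D p.1 * wt D p.2) * (Npair H' p : ℝ) := by
  classical
  set F : ((Fin m → X) × (Fin m → X)) → ℝ := fun p => if Bpred fstar H' k p then (1:ℝ) else 0
    with hF
  set L : ℝ := ∑ p : (Fin m → X) × (Fin m → X), (wt D p.1 * wt D p.2) * F p with hL
  have hcardσ : ((Finset.univ : Finset (Fin m → Bool)).card : ℝ) = 2 ^ m := by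
    rw [Finset.card_univ, Fintype.card_fun]
    simp
  have havg : L = ((2:ℝ) ^ m)⁻¹ * ∑ σ : Fin m → Bool,
      ∑ p : (Fin m → X) × (Fin m → X), (wt D p.1 * wt D p.2) * F (swp σ p) := by
    have e : ∀ σ : Fin m → Bool,
        (∑ p : (Fin m → X) × (Fin m → X), (wt D p.1 * wt D p.2) * F (swp σ p)) = L := by
      intro σ; rw [hL]; exact (swap_sum D F σ).symm
    rw [Finset.sum_congr rfl fun σ _ => e σ, Finset.sum_const, nsmul_eq_mul, hcardσ]
    have h2m : ((2:ℝ) ^ m) ≠ 0 := by positivity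
    field_simp
  have hswap : ((2:ℝ) ^ m)⁻¹ * (∑ σ : Fin m → Bool,
      ∑ p : (Fin m → X) × (Fin m → X), (wt D p.1 * wt D p.2) * F (swp σ p))
      = ∑ p : (Fin m → X) × (Fin m → X), (wt D p.1 * wt D p.2) *
          (((2:ℝ) ^ m)⁻¹ * ∑ σ : Fin m → Bool, F (swp σ p)) := by
    rw [Finset.sum_comm, Finset.mul_sum]
    refine Finset.sum_congr rfl fun p _ => ?_
    rw [← Finset.mul_sum]
    ring
  rw [havg, hswap]
  have hparts : ∀ p : (Fin m → X) × (Fin m → X),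
      (wt D p.1 * wt D p.2) * (((2:ℝ) ^ m)⁻¹ * ∑ σ : Fin m → Bool, F (swp σ p))
        ≤ (wt D p.1 * wt D p.2) * (K * Npair H' p) := by
    intro p
    refine mul_le_mul_of_nonneg_left ?_
      (mul_nonneg (wt_nonneg D hD p.1) (wt_nonneg D hD p.2))
    exact swap_bound D hD fstar H' k K hK0 hK p
  calc ∑ p : (Fin m → X) × (Fin m → X), (wt D p.1 * wt D p.2) *
        (((2:ℝ) ^ m)⁻¹ * ∑ σ : Fin m → Bool, F (swp σ p))
      ≤ ∑ p : (Fin m → X) × (Fin m → X), (wt D p.1 * wt D p.2) * (K * Npair H' p) :=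
        Finset.sum_le_sum fun p _ => hparts p
    _ = K * ∑ p : (Fin m → X) × (Fin m → X), (wt D p.1 * wt D p.2) * (Npair H' p : ℝ) := by
        rw [Finset.mul_sum]
        exact Finset.sum_congr rfl fun p _ => by ring

lemma conv_splits (D : X → ℝ) (H' : Set (X → Bool)) (m : ℕ) :
    ∑ p : (Fin m → X) × (Fin m → X), (wt D p.1 * wt D p.2) * (Npair H' p : ℝ)
      = expectedSplits D H' (m + m) := by
  classical
  set Φ : ((Fin m → X) × (Fin m → X)) ≃ (Fin (m + m) → X) :=
    (Equiv.sumArrowEquivProdArrow (Fin m) (Fin m) X).symm.trans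
      (Equiv.arrowCongr finSumFinEquiv (Equiv.refl X)) with hΦ
  have hΦap : ∀ (p : (Fin m → X) × (Fin m → X)) (j : Fin (m + m)),
      Φ p j = Sum.elim p.1 p.2 (finSumFinEquiv.symm j) := fun p j => rfl
  rw [expectedSplits]
  rw [← Equiv.sum_comp Φ]
  refine Finset.sum_congr rfl fun p _ => ?_
  have hw : (∏ j : Fin (m + m), D (Φ p j)) = wt D p.1 * wt D p.2 := by
    calc (∏ j : Fin (m + m), D (Φ p j))
        = ∏ j : Fin (m + m), D (Sum.elim p.1 p.2 (finSumFinEquiv.symm j)) :=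
          Finset.prod_congr rfl fun j _ => by rw [hΦap]
      _ = ∏ u : Fin m ⊕ Fin m, D (Sum.elim p.1 p.2 u) :=
          Equiv.prod_comp finSumFinEquiv.symm (fun u => D (Sum.elim p.1 p.2 u))
      _ = wt D p.1 * wt D p.2 := by rw [Fintype.prod_sum_type]; simp [wt]
  have hn : Set.ncard {v : Fin (m + m) → Bool | ∃ h ∈ H', v = fun j => h (Φ p j)}
      = Npair H' p := by
    have hinj : Function.Injective (fun v : Fin (m + m) → Bool =>
        ((fun i => v (finSumFinEquiv (Sum.inl i)), fun i => v (finSumFinEquiv (Sum.inr i))) :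
          (Fin m → Bool) × (Fin m → Bool))) := by
      intro v w hvw
      have h1 := congrArg Prod.fst hvw
      have h2 := congrArg Prod.snd hvw
      funext j
      have hj : finSumFinEquiv (finSumFinEquiv.symm j) = j := Equiv.apply_symm_apply _ _
      rcases hu : finSumFinEquiv.symm j with i | i
      · rw [← hj, hu]
        exact congrFun h1 i
      · rw [← hj, hu]
        exact congrFun h2 i
    have himg : (fun v : Fin (m + m) → Bool =>
        ((fun i => v (finSumFinEquiv (Sum.inl i)), fun i => v (finSumFinEquiv (Sum.inr i))) :
          (Fin m → Bool) × (Fin m → Bool)))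
          '' {v : Fin (m + m) → Bool | ∃ h ∈ H', v = fun j => h (Φ p j)}
        = {q : (Fin m → Bool) × (Fin m → Bool) |
            ∃ h ∈ H', q = (fun i => h (p.1 i), fun i => h (p.2 i))} := by
      ext q
      constructor
      · rintro ⟨v, ⟨h, hh, rfl⟩, rfl⟩
        refine ⟨h, hh, ?_⟩
        refine Prod.ext ?_ ?_ <;> funext i <;>
          simp only [hΦap, Equiv.symm_apply_apply, Sum.elim_inl, Sum.elim_inr]
      · rintro ⟨h, hh, rfl⟩
        refine ⟨fun j => h (Φ p j), ⟨h, hh, rfl⟩, ?_⟩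
        refine Prod.ext ?_ ?_ <;> funext i <;>
          simp only [hΦap, Equiv.symm_apply_apply, Sum.elim_inl, Sum.elim_inr]
    rw [Npair, ← himg, Set.ncard_image_of_injective _ hinj]
  rw [hw, hn]

end VCaux

/-- Realizable-setting labeled sample complexity bound via expected splits.  If
`m_l ≥ (2/ε)(ln(2 H'[2m_l, D]) + ln(4/δ))`, then with probability at least `1 − δ/2` over an
i.i.d. sample `x₁,…,x_{m_l} ∼ D` labeled by the target `f*`, every `h ∈ H'` with true error
`err(h) = Pr_{x∼D}[h(x) ≠ f*(x)] ≥ ε` has empirical error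
`êrr(h) = (1/m_l) ∑ᵢ 1[h(xᵢ) ≠ f*(xᵢ)] > 0`. -/
theorem labeled_sample_bound_expected_splits
    {X : Type*} [Fintype X] [Nonempty X] (D : X → ℝ)
    (hD : ∀ x, 0 ≤ D x) (hDsum : ∑ x, D x = 1)
    (fstar : X → Bool) (H' : Set (X → Bool)) (ml : ℕ)
    (ε δ : ℝ) (hε : 0 < ε) (hε1 : ε < 1) (hδ : 0 < δ) (hδ1 : δ < 1)
    (hml : (ml : ℝ) ≥
      (2 / ε) * (Real.log (2 * expectedSplits D H' (2 * ml)) + Real.log (4 / δ))) :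
    (∑ s : Fin ml → X,
        if ∀ h ∈ H',
            ε ≤ (∑ x, if h x ≠ fstar x then D x else 0) →
            0 < (ml : ℝ)⁻¹ * ∑ i, (if h (s i) ≠ fstar (s i) then (1 : ℝ) else 0)
        then ∏ i, D (s i) else 0) ≥ 1 - δ / 2 := by
  classical
  open VCaux in
  by_cases hHe : H'.Nonempty
  case neg =>
    have hH : H' = ∅ := Set.not_nonempty_iff_eq_empty.mp hHe
    have hcond : ∀ s : Fin ml → X,
        (if ∀ h ∈ H',
            ε ≤ (∑ x, if h x ≠ fstar x then D x else 0) →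
            0 < (ml : ℝ)⁻¹ * ∑ i, (if h (s i) ≠ fstar (s i) then (1 : ℝ) else 0)
          then ∏ i, D (s i) else 0) = ∏ i, D (s i) := by
      intro s
      refine if_pos fun h hh => ?_
      rw [hH] at hh
      exact absurd hh (Set.notMem_empty h)
    have h1 : (∑ s : Fin ml → X,
        if ∀ h ∈ H',
            ε ≤ (∑ x, if h x ≠ fstar x then D x else 0) →
            0 < (ml : ℝ)⁻¹ * ∑ i, (if h (s i) ≠ fstar (s i) then (1 : ℝ) else 0)
          then ∏ i, D (s i) else 0) = 1 := by
      rw [Finset.sum_congr rfl fun s _ => hcond s]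
      exact VCaux.sum_wt D hDsum ml
    rw [ge_iff_le, h1]
    linarith
  case pos =>
    obtain ⟨h₀, hh₀⟩ := hHe
    set E := expectedSplits D H' (2 * ml) with hE
    -- E ≥ 1
    have hE1 : 1 ≤ E := by
      rw [hE, expectedSplits]
      have pt : ∀ x : Fin (2 * ml) → X, (∏ i, D (x i))
          ≤ (∏ i, D (x i)) *
            (Set.ncard {v : Fin (2 * ml) → Bool | ∃ h ∈ H', v = fun i => h (x i)} : ℝ) := by
        intro x
        have hne : {v : Fin (2 * ml) → Bool | ∃ h ∈ H', v = fun i => h (x i)}.Nonempty :=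
          ⟨fun i => h₀ (x i), ⟨h₀, hh₀, rfl⟩⟩
        have hpos : 0 < Set.ncard {v : Fin (2 * ml) → Bool | ∃ h ∈ H', v = fun i => h (x i)} :=
          (Set.ncard_pos (Set.toFinite _)).mpr hne
        have h1 : (1:ℝ) ≤ (Set.ncard {v : Fin (2 * ml) → Bool |
            ∃ h ∈ H', v = fun i => h (x i)} : ℝ) := by
          exact_mod_cast hpos
        nlinarith [Finset.prod_nonneg fun i (_ : i ∈ Finset.univ) => hD (x i)]
      calc (1:ℝ) = ∑ x : Fin (2 * ml) → X, ∏ i, D (x i) := (VCaux.sum_wt D hDsum (2 * ml)).symm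
        _ ≤ _ := Finset.sum_le_sum fun x _ => pt x
    have hEpos : (0:ℝ) < E := by linarith
    have l2 : (2:ℝ)/3 < Real.log 2 := by
      have := Real.log_two_gt_d9
      linarith
    have l2pos : (0:ℝ) < Real.log 2 := by linarith
    set L := Real.log (4 * E / δ) with hLdef
    set k := L / Real.log 2 with hk
    set K := δ / (4 * E) with hKdef
    have hK0 : 0 ≤ K := by positivity
    -- relating L to the hypothesis
    have hRL : Real.log (2 * E) + Real.log (4 / δ) = L + Real.log 2 := by
      have h1 : Real.log (2 * E) = Real.log 2 + Real.log E :=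
        Real.log_mul (by norm_num) hEpos.ne'
      have h2 : Real.log (4 / δ) = Real.log 4 - Real.log δ :=
        Real.log_div (by norm_num) hδ.ne'
      have h3 : L = Real.log 4 + Real.log E - Real.log δ := by
        rw [hLdef]
        rw [Real.log_div (by positivity) hδ.ne']
        rw [Real.log_mul (by norm_num) hEpos.ne']
      rw [h1, h2, h3]
      ring
    have hεm : 2 * (L + Real.log 2) ≤ ε * ml := by
      rw [← hRL]
      have h1 : (2 / ε) * (Real.log (2 * E) + Real.log (4 / δ)) ≤ ml := hml
      have h2 : (2 / ε) * (Real.log (2 * E) + Real.log (4 / δ)) * ε ≤ (ml : ℝ) * ε :=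
        mul_le_mul_of_nonneg_right h1 hε.le
      calc 2 * (Real.log (2 * E) + Real.log (4 / δ))
          = (2 / ε) * (Real.log (2 * E) + Real.log (4 / δ)) * ε := by
            field_simp
        _ ≤ (ml : ℝ) * ε := h2
        _ = ε * ml := by ring
    have hL2 : 2 * Real.log 2 ≤ L := by
      have h4 : (4:ℝ) ≤ 4 * E / δ := by
        have h5 : (4:ℝ) ≤ 4 * E := by linarith
        have h6 : 4 * E ≤ 4 * E / δ := by
          rw [le_div_iff₀ hδ]
          nlinarith
        linarith
      have h7 : Real.log 4 ≤ L := by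
        rw [hLdef]
        exact Real.log_le_log (by norm_num) h4
      have h8 : Real.log 4 = 2 * Real.log 2 := by
        rw [show (4:ℝ) = 2 ^ 2 by norm_num, Real.log_pow]
        push_cast; ring
      linarith
    have hLpos : 0 < L := by nlinarith
    -- key per-exponent bound
    have hK : ∀ d : ℕ, k ≤ (d : ℝ) → ((2 : ℝ) ^ d)⁻¹ ≤ K := by
      intro d hd
      have h1 : L ≤ d * Real.log 2 := by
        have := mul_le_mul_of_nonneg_right hd l2pos.le
        rw [hk] at this
        rw [div_mul_cancel₀] at this
        · exact this
        · exact l2pos.ne'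
      have h2 : Real.log (4 * E / δ) ≤ Real.log ((2:ℝ) ^ d) := by
        rw [Real.log_pow]; exact h1
      have h3 : 4 * E / δ ≤ (2:ℝ) ^ d := by
        rw [Real.log_le_log_iff (by positivity) (by positivity)] at h2
        exact h2
      have h4 : ((2:ℝ) ^ d)⁻¹ ≤ (4 * E / δ)⁻¹ :=
        inv_anti₀ (by positivity) h3
      rw [inv_div] at h4
      exact h4
    -- positivity of ml
    have hmlpos : (0:ℝ) < ml := by
      nlinarith [hεm, hL2, l2, hε1, (Nat.cast_nonneg ml : (0:ℝ) ≤ ml)]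
    -- the tail numeric condition
    have htailnum : ∀ p : ℝ, ε ≤ p → p ≤ 1 →
        k < ml * p ∧ Real.sqrt ((ml:ℝ) * p * (1 - p)) ≤ ml * p - k := by
      intro p hp hp1
      set R' := L + Real.log 2 with hR'
      have hR'3 : 3 * Real.log 2 ≤ R' := by rw [hR']; linarith
      have hR'2 : (2:ℝ) < R' := by nlinarith
      have hy : 2 * R' ≤ (ml:ℝ) * p := by
        have h1 : ε * ml ≤ p * ml := mul_le_mul_of_nonneg_right hp hmlpos.le
        calc 2 * R' ≤ ε * ml := hεm
          _ ≤ p * ml := h1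
          _ = ml * p := by ring
      set y := (ml:ℝ) * p with hydef
      have hy0 : (0:ℝ) < y := by nlinarith
      set a := Real.sqrt (2 * R') with ha
      set b := Real.sqrt y with hb
      have ha2 : a ^ 2 = 2 * R' := Real.sq_sqrt (by nlinarith)
      have hb2 : b ^ 2 = y := Real.sq_sqrt hy0.le
      have hab : a ≤ b := Real.sqrt_le_sqrt hy
      have ha1 : 1 ≤ a := by
        rw [ha, Real.one_le_sqrt]
        nlinarith
      have hmono : 2 * R' - a ≤ y - b := by
        nlinarith [mul_nonneg (sub_nonneg.mpr hab) (by linarith : (0:ℝ) ≤ b + a - 1)]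
      have hbnda : a ≤ R' / 2 + 1 := by
        have h2 : 2 * R' ≤ (R' / 2 + 1) ^ 2 := by nlinarith [sq_nonneg (R' / 2 - 1)]
        calc a ≤ Real.sqrt ((R' / 2 + 1) ^ 2) := Real.sqrt_le_sqrt h2
          _ = R' / 2 + 1 := Real.sqrt_sq (by linarith)
      have hkval : k = R' / Real.log 2 - 1 := by
        rw [hk, hR']
        field_simp
        ring
      have hklt : k < 3 * R' / 2 - 1 := by
        rw [hkval]
        have h1 : R' / Real.log 2 < R' / (2/3) :=
          div_lt_div_of_pos_left (by linarith) (by norm_num) l2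
        have h2 : R' / (2/3) = 3 * R' / 2 := by ring
        linarith
      have hkey : k + b < y := by
        have h3 : 3 * R' / 2 - 1 ≤ 2 * R' - a := by linarith
        linarith
      constructor
      · have hbnn : 0 ≤ b := Real.sqrt_nonneg y
        linarith
      · have hle : (ml:ℝ) * p * (1 - p) ≤ y := by
          rw [hydef]
          nlinarith [hmlpos.le, hp, hε.le]
        have : Real.sqrt ((ml:ℝ) * p * (1 - p)) ≤ b := Real.sqrt_le_sqrt hle
        linarith
    -- the bad event on single samples
    set A : (Fin ml → X) → Prop := fun s =>
      ∃ h ∈ H', ε ≤ errD D fstar h ∧ ∀ i, h (s i) = fstar (s i) with hA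
    -- step 1 : P[A] ≤ 2 P[B]
    have step1 : ∑ s : Fin ml → X, (if A s then wt D s else 0)
        ≤ 2 * ∑ p : (Fin ml → X) × (Fin ml → X), (wt D p.1 * wt D p.2) *
            (if Bpred fstar H' k p then (1:ℝ) else 0) := by
      have hps : ∑ p : (Fin ml → X) × (Fin ml → X), (wt D p.1 * wt D p.2) *
          (if Bpred fstar H' k p then (1:ℝ) else 0)
          = ∑ s : Fin ml → X, ∑ t : Fin ml → X, (wt D s * wt D t) *
            (if Bpred fstar H' k (s, t) then (1:ℝ) else 0) :=
        Fintype.sum_prod_type _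
      rw [hps, Finset.mul_sum]
      refine Finset.sum_le_sum fun s _ => ?_
      by_cases hAs : A s
      · rw [if_pos hAs]
        obtain ⟨h, hh, herr, hagr⟩ := hAs
        have hp1 : errD D fstar h ≤ 1 := errD_le_one D hD hDsum fstar h
        obtain ⟨hk1, hk2⟩ := htailnum (errD D fstar h) herr hp1
        have htail := tail_ge_half D hD hDsum fstar h k hk1 hk2
        have hptw : ∀ t : Fin ml → X,
            wt D s * (if k ≤ Zc fstar h t then wt D t else 0)
              ≤ (wt D s * wt D t) * (if Bpred fstar H' k (s, t) then (1:ℝ) else 0) := by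
          intro t
          by_cases hz : k ≤ Zc fstar h t
          · have hBst : Bpred fstar H' k (s, t) := ⟨h, hh, hagr, hz⟩
            rw [if_pos hz, if_pos hBst, mul_one]
          · rw [if_neg hz, mul_zero]
            have : (0:ℝ) ≤ (if Bpred fstar H' k (s, t) then (1:ℝ) else 0) := by
              split <;> norm_num
            exact mul_nonneg (mul_nonneg (wt_nonneg D hD s) (wt_nonneg D hD t)) this
        have hchain : wt D s * (1/2) ≤ ∑ t : Fin ml → X, (wt D s * wt D t) *
            (if Bpred fstar H' k (s, t) then (1:ℝ) else 0) := by
          calc wt D s * (1/2)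
              ≤ wt D s * ∑ t : Fin ml → X, (if k ≤ Zc fstar h t then wt D t else 0) :=
                mul_le_mul_of_nonneg_left htail (wt_nonneg D hD s)
            _ = ∑ t : Fin ml → X, wt D s * (if k ≤ Zc fstar h t then wt D t else 0) :=
                Finset.mul_sum _ _ _
            _ ≤ _ := Finset.sum_le_sum fun t _ => hptw t
        linarith
      · rw [if_neg hAs]
        have : (0:ℝ) ≤ ∑ t : Fin ml → X, (wt D s * wt D t) *
            (if Bpred fstar H' k (s, t) then (1:ℝ) else 0) := by
          refine Finset.sum_nonneg fun t _ => ?_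
          have h1 : (0:ℝ) ≤ (if Bpred fstar H' k (s, t) then (1:ℝ) else 0) := by
            split <;> norm_num
          exact mul_nonneg (mul_nonneg (wt_nonneg D hD s) (wt_nonneg D hD t)) h1
        linarith
    -- step 2 and conversion
    have hstep2 := step2 D hD fstar H' (m := ml) k K hK0 hK
    have hconv := conv_splits D H' ml
    have hEeq : expectedSplits D H' (ml + ml) = E := by
      rw [hE, two_mul]
    have hfinal : ∑ s : Fin ml → X, (if A s then wt D s else 0) ≤ δ / 2 := by
      have h1 : ∑ p : (Fin ml → X) × (Fin ml → X), (wt D p.1 * wt D p.2) *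
          (if Bpred fstar H' k p then (1:ℝ) else 0) ≤ K * E := by
        rw [← hEeq, ← hconv]
        exact hstep2
      have h2 : K * E = δ / 4 := by
        rw [hKdef]
        field_simp
      calc ∑ s : Fin ml → X, (if A s then wt D s else 0)
          ≤ 2 * ∑ p : (Fin ml → X) × (Fin ml → X), (wt D p.1 * wt D p.2) *
              (if Bpred fstar H' k p then (1:ℝ) else 0) := step1
        _ ≤ 2 * (K * E) := by linarith
        _ = δ / 2 := by rw [h2]; ring
    -- from the bad event to the goal
    have hGoodIff : ∀ s : Fin ml → X,
        (∀ h ∈ H', ε ≤ (∑ x, if h x ≠ fstar x then D x else 0) →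
          0 < (ml : ℝ)⁻¹ * ∑ i, (if h (s i) ≠ fstar (s i) then (1 : ℝ) else 0)) ↔ ¬ A s := by
      intro s
      constructor
      · intro hGood ⟨h, hh, herr, hagr⟩
        have h1 : ε ≤ ∑ x, if h x ≠ fstar x then D x else 0 := by
          rw [← errD_eq]; exact herr
        have h2 := hGood h hh h1
        have h3 : (∑ i, (if h (s i) ≠ fstar (s i) then (1:ℝ) else 0)) = 0 :=
          Finset.sum_eq_zero fun i _ => by simp [hagr i]
        rw [h3, mul_zero] at h2
        exact lt_irrefl 0 h2
      · intro hnA h hh herr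
        have herr' : ε ≤ errD D fstar h := by rw [errD_eq]; exact herr
        have hnagr : ¬ ∀ i, h (s i) = fstar (s i) := by
          intro hagr
          exact hnA ⟨h, hh, herr', hagr⟩
        push_neg at hnagr
        obtain ⟨i₀, hi₀⟩ := hnagr
        have h1 : (1:ℝ) ≤ ∑ i, (if h (s i) ≠ fstar (s i) then (1:ℝ) else 0) := by
          have h2 : (if h (s i₀) ≠ fstar (s i₀) then (1:ℝ) else 0) = 1 := if_pos hi₀
          calc (1:ℝ) = (if h (s i₀) ≠ fstar (s i₀) then (1:ℝ) else 0) := h2.symm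
            _ ≤ _ := Finset.single_le_sum
                (f := fun i => if h (s i) ≠ fstar (s i) then (1:ℝ) else 0)
                (fun i _ => by by_cases hc : h (s i) ≠ fstar (s i) <;> simp [hc])
                (Finset.mem_univ i₀)
        have hinv : (0:ℝ) < (ml:ℝ)⁻¹ := inv_pos.mpr hmlpos
        nlinarith
    have hsum : ∑ s : Fin ml → X,
        (if ∀ h ∈ H', ε ≤ (∑ x, if h x ≠ fstar x then D x else 0) →
            0 < (ml : ℝ)⁻¹ * ∑ i, (if h (s i) ≠ fstar (s i) then (1 : ℝ) else 0)
          then ∏ i, D (s i) else 0)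
        = 1 - ∑ s : Fin ml → X, (if A s then wt D s else 0) := by
      have e : ∀ s : Fin ml → X,
          (if ∀ h ∈ H', ε ≤ (∑ x, if h x ≠ fstar x then D x else 0) →
              0 < (ml : ℝ)⁻¹ * ∑ i, (if h (s i) ≠ fstar (s i) then (1 : ℝ) else 0)
            then ∏ i, D (s i) else 0)
          = wt D s - (if A s then wt D s else 0) := by
        intro s
        by_cases hAs : A s
        · rw [if_pos hAs, if_neg (fun hGood => (hGoodIff s).mp hGood hAs)]
          simp
        · rw [if_neg hAs, if_pos ((hGoodIff s).mpr hAs)]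
          simp [wt]
      rw [Finset.sum_congr rfl fun s _ => e s, Finset.sum_sub_distrib, sum_wt D hDsum ml]
    rw [hsum]
    linarith
end
end
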